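/- arXiv:2204.05570 — 7 statements merged into one kernel-verified Lean document; each statement's English description precedes it below -/
import Mathlib

section
/- Let s ≥ 1 be a real number and let a, b : ℤ → ℝ be sequences with ‖a‖_{h^s} < ∞ and ‖b‖_{h^s} < ∞. Then the convolution (a*b)_k = ∑_{l∈ℤ} a_{k-l} b_l is well defined and satisfies ‖a*b‖_{h^s} ≤ 2^{s-1} ( ‖a‖_{h^s} ‖b‖_{ℓ¹} + ‖a‖_{ℓ¹} ‖b‖_{h^s} ), where both ℓ¹-norms on the right-hand side are finite. -/
lemma myPow (x y : ℝ) (hx : 0 ≤ x) (hy : 0 ≤ y) {p : ℝ} (hp : 1 ≤ p) :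
    (x + y) ^ p ≤ 2 ^ (p - 1) * (x ^ p + y ^ p) := by
  have h := NNReal.rpow_add_le_mul_rpow_add_rpow ⟨x, hx⟩ ⟨y, hy⟩ hp
  exact_mod_cast h

lemma myCS (u v : ℤ → ℝ) (hu0 : ∀ k, 0 ≤ u k) (hv0 : ∀ k, 0 ≤ v k)
    (hu : Summable fun k => u k ^ 2) (hv : Summable fun k => v k ^ 2) :
    (Summable fun k => u k * v k) ∧
      (∑' k, u k * v k) ≤ Real.sqrt (∑' k, u k ^ 2) * Real.sqrt (∑' k, v k ^ 2) := by
  have hsum : Summable fun k => u k * v k := by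
    apply Summable.of_nonneg_of_le (fun k => mul_nonneg (hu0 k) (hv0 k))
      (fun k => ?_) (((hu.add hv).div_const 2))
    have h := two_mul_le_add_sq (u k) (v k)
    show u k * v k ≤ (u k ^ 2 + v k ^ 2) / 2
    linarith
  refine ⟨hsum, Summable.tsum_le_of_sum_le hsum fun T => ?_⟩
  have h1 : (∑ k ∈ T, u k * v k) ^ 2 ≤ (∑' k, u k ^ 2) * (∑' k, v k ^ 2) := by
    calc (∑ k ∈ T, u k * v k) ^ 2 ≤ (∑ k ∈ T, u k ^ 2) * (∑ k ∈ T, v k ^ 2) :=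
          Finset.sum_mul_sq_le_sq_mul_sq T u v
      _ ≤ (∑' k, u k ^ 2) * (∑' k, v k ^ 2) := by
          apply mul_le_mul (Summable.sum_le_tsum T (fun k _ => sq_nonneg _) hu)
            (Summable.sum_le_tsum T (fun k _ => sq_nonneg _) hv)
            (Finset.sum_nonneg fun k _ => sq_nonneg _) (tsum_nonneg fun k => sq_nonneg _)
  have h0 : 0 ≤ ∑ k ∈ T, u k * v k := Finset.sum_nonneg fun k _ => mul_nonneg (hu0 k) (hv0 k)
  calc (∑ k ∈ T, u k * v k) = Real.sqrt ((∑ k ∈ T, u k * v k) ^ 2) := (Real.sqrt_sq h0).symm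
    _ ≤ Real.sqrt ((∑' k, u k ^ 2) * (∑' k, v k ^ 2)) := Real.sqrt_le_sqrt h1
    _ = Real.sqrt (∑' k, u k ^ 2) * Real.sqrt (∑' k, v k ^ 2) :=
        Real.sqrt_mul (tsum_nonneg fun k => sq_nonneg _) _

lemma myShift (f : ℤ → ℝ) (hf : Summable f) (k : ℤ) : Summable fun l => f (k - l) :=
  (Equiv.subLeft k).summable_iff.mpr hf

lemma myShift' (f : ℤ → ℝ) (hf : Summable f) (l : ℤ) : Summable fun k => f (k - l) :=
  (Equiv.subRight l).summable_iff.mpr hf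

lemma myShiftSum (f : ℤ → ℝ) (l : ℤ) : ∑' k, f (k - l) = ∑' k, f k :=
  (Equiv.subRight l).tsum_eq f

lemma myShiftSum' (f : ℤ → ℝ) (k : ℤ) : ∑' l, f (k - l) = ∑' l, f l :=
  (Equiv.subLeft k).tsum_eq f

/-- Triangle inequality in `ℓ²`. -/
lemma myTri (F G : ℤ → ℝ) (hF0 : ∀ k, 0 ≤ F k) (hG0 : ∀ k, 0 ≤ G k)
    (hF : Summable fun k => F k ^ 2) (hG : Summable fun k => G k ^ 2) :
    (Summable fun k => (F k + G k) ^ 2) ∧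
    Real.sqrt (∑' k, (F k + G k) ^ 2) ≤
      Real.sqrt (∑' k, F k ^ 2) + Real.sqrt (∑' k, G k ^ 2) := by
  obtain ⟨hFG, hFGle⟩ := myCS F G hF0 hG0 hF hG
  have hexp : ∀ k, (F k + G k) ^ 2 = F k ^ 2 + 2 * (F k * G k) + G k ^ 2 := fun k => by ring
  have hsum : Summable fun k => (F k + G k) ^ 2 := by
    simp only [hexp]
    exact (hF.add ((hFG.mul_left 2))).add hG
  refine ⟨hsum, ?_⟩
  have h1 : (∑' k, (F k + G k) ^ 2) =
      (∑' k, F k ^ 2) + 2 * (∑' k, F k * G k) + (∑' k, G k ^ 2) := by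
    rw [tsum_congr hexp, Summable.tsum_add (hF.add (hFG.mul_left 2)) hG,
      Summable.tsum_add hF (hFG.mul_left 2), tsum_mul_left]
  have h2 : (∑' k, (F k + G k) ^ 2) ≤
      (Real.sqrt (∑' k, F k ^ 2) + Real.sqrt (∑' k, G k ^ 2)) ^ 2 := by
    rw [h1]
    have e1 : Real.sqrt (∑' k, F k ^ 2) ^ 2 = ∑' k, F k ^ 2 :=
      Real.sq_sqrt (tsum_nonneg fun k => sq_nonneg _)
    have e2 : Real.sqrt (∑' k, G k ^ 2) ^ 2 = ∑' k, G k ^ 2 :=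
      Real.sq_sqrt (tsum_nonneg fun k => sq_nonneg _)
    nlinarith [hFGle]
  calc Real.sqrt (∑' k, (F k + G k) ^ 2)
      ≤ Real.sqrt ((Real.sqrt (∑' k, F k ^ 2) + Real.sqrt (∑' k, G k ^ 2)) ^ 2) :=
        Real.sqrt_le_sqrt h2
    _ = Real.sqrt (∑' k, F k ^ 2) + Real.sqrt (∑' k, G k ^ 2) :=
        Real.sqrt_sq (by positivity)

/-- Summability of `(1+|k|)^(-t)` on `ℤ` for `2 ≤ t`. -/
lemma myWeightSummable {t : ℝ} (ht : 2 ≤ t) :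
    Summable fun k : ℤ => (1 + |(k : ℝ)|) ^ (-t) := by
  have hnat : Summable fun n : ℕ => (1 + (n : ℝ)) ^ (-t) := by
    have hbase : Summable fun n : ℕ => ((n : ℝ)) ^ (-t) :=
      Real.summable_nat_rpow.mpr (by linarith)
    have := (summable_nat_add_iff 1).mpr hbase
    refine this.congr fun n => ?_
    push_cast
    ring_nf
  have h0 : ∀ k : ℤ, 0 ≤ (1 + |(k : ℝ)|) ^ (-t) := fun k => Real.rpow_nonneg (by positivity) _
  apply Summable.of_nat_of_neg
  · refine hnat.congr fun n => ?_
    have h : |((n : ℤ) : ℝ)| = (n : ℝ) := by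
      rw [Int.cast_natCast, abs_of_nonneg (by positivity)]
    rw [h]
  · refine hnat.congr fun n => ?_
    have h : |((-(n : ℕ) : ℤ) : ℝ)| = (n : ℝ) := by
      push_cast
      rw [abs_neg, abs_of_nonneg (by positivity)]
    rw [h]

/-- `ℓ¹` control from the weighted `ℓ²` bound. -/
lemma myL1 (s : ℝ) (hs : 1 ≤ s) (a : ℤ → ℝ)
    (hA : Summable fun k : ℤ => ((1 + |(k : ℝ)|) ^ s * |a k|) ^ 2) :
    Summable fun k : ℤ => |a k| := by
  have hbase : ∀ k : ℤ, (0 : ℝ) < 1 + |(k : ℝ)| := fun k => by positivity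
  have hWsq : Summable fun k : ℤ => ((1 + |(k : ℝ)|) ^ (-s)) ^ 2 := by
    have h1 : ∀ k : ℤ, ((1 + |(k : ℝ)|) ^ (-s)) ^ 2 = (1 + |(k : ℝ)|) ^ (-(2 * s)) := by
      intro k
      rw [sq, ← Real.rpow_add (hbase k)]
      ring_nf
    have h2 : ∀ k : ℤ, (1 + |(k : ℝ)|) ^ (-(2 * s)) ≤ (1 + |(k : ℝ)|) ^ (-(2 : ℝ)) := by
      intro k
      exact Real.rpow_le_rpow_of_exponent_le (le_add_of_nonneg_right (abs_nonneg _))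
        (by linarith)
    apply Summable.of_nonneg_of_le (fun k => sq_nonneg _) (fun k => (h1 k).le.trans (h2 k))
    exact myWeightSummable le_rfl
  apply Summable.of_nonneg_of_le (fun k => abs_nonneg _) (fun k => ?_)
    ((hWsq.add hA).div_const 2)
  have hid : (1 + |(k : ℝ)|) ^ (-s) * ((1 + |(k : ℝ)|) ^ s * |a k|) = |a k| := by
    rw [← mul_assoc, ← Real.rpow_add (hbase k)]
    simp
  have h := two_mul_le_add_sq ((1 + |(k : ℝ)|) ^ (-s)) ((1 + |(k : ℝ)|) ^ s * |a k|)
  rw [mul_assoc, hid] at h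
  show |a k| ≤ (((1 + |(k : ℝ)|) ^ (-s)) ^ 2 + ((1 + |(k : ℝ)|) ^ s * |a k|) ^ 2) / 2
  linarith

/-- The key weight inequality. -/
lemma myKey (s : ℝ) (hs : 1 ≤ s) (k l : ℤ) :
    (1 + |(k : ℝ)|) ^ s ≤
      2 ^ (s - 1) * ((1 + |((k - l : ℤ) : ℝ)|) ^ s + (1 + |(l : ℝ)|) ^ s) := by
  have h1 : (1 + |(k : ℝ)|) ≤ (1 + |((k - l : ℤ) : ℝ)|) + (1 + |(l : ℝ)|) := by
    push_cast
    have h := abs_add_le ((k : ℝ) - (l : ℝ)) (l : ℝ)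
    rw [sub_add_cancel] at h
    linarith
  calc (1 + |(k : ℝ)|) ^ s ≤ ((1 + |((k - l : ℤ) : ℝ)|) + (1 + |(l : ℝ)|)) ^ s :=
        Real.rpow_le_rpow (by positivity) h1 (by linarith)
    _ ≤ 2 ^ (s - 1) * ((1 + |((k - l : ℤ) : ℝ)|) ^ s + (1 + |(l : ℝ)|) ^ s) :=
        myPow _ _ (by positivity) (by positivity) hs

/-- Young's inequality `ℓ² * ℓ¹ → ℓ²` for nonnegative sequences on `ℤ`. -/
lemma myYoung (c d : ℤ → ℝ) (hc0 : ∀ k, 0 ≤ c k) (hd0 : ∀ k, 0 ≤ d k)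
    (hc2 : Summable fun k => c k ^ 2) (hd : Summable d) :
    (∀ k, Summable fun l => c (k - l) * d l) ∧
    (Summable fun k => (∑' l, c (k - l) * d l) ^ 2) ∧
    Real.sqrt (∑' k, (∑' l, c (k - l) * d l) ^ 2) ≤
      Real.sqrt (∑' k, c k ^ 2) * ∑' k, d k := by
  set D : ℝ := ∑' k, d k with hD
  have hD0 : 0 ≤ D := tsum_nonneg hd0
  have hdle : ∀ l, d l ≤ D := fun l => Summable.le_tsum hd l fun m _ => hd0 m
  have hg : ∀ k, Summable fun l => c (k - l) ^ 2 * d l := by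
    intro k
    exact Summable.of_nonneg_of_le (fun l => mul_nonneg (sq_nonneg _) (hd0 l))
      (fun l => mul_le_mul_of_nonneg_left (hdle l) (sq_nonneg _))
      ((myShift _ hc2 k).mul_right D)
  set g : ℤ → ℝ := fun k => ∑' l, c (k - l) ^ 2 * d l with hgdef
  have hg0 : ∀ k, 0 ≤ g k := fun k => tsum_nonneg fun l => mul_nonneg (sq_nonneg _) (hd0 l)
  have hCS : ∀ k, (Summable fun l => c (k - l) * d l) ∧
      (∑' l, c (k - l) * d l) ≤ Real.sqrt (g k) * Real.sqrt D := by
    intro k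
    have h1 : ∀ l, (c (k - l) * Real.sqrt (d l)) ^ 2 = c (k - l) ^ 2 * d l := by
      intro l; rw [mul_pow, Real.sq_sqrt (hd0 l)]
    have h2 : ∀ l, (Real.sqrt (d l)) ^ 2 = d l := fun l => Real.sq_sqrt (hd0 l)
    have hu : Summable fun l => (c (k - l) * Real.sqrt (d l)) ^ 2 := by
      simpa only [h1] using hg k
    have hv : Summable fun l => (Real.sqrt (d l)) ^ 2 := by simpa only [h2] using hd
    have hmul : ∀ l, c (k - l) * Real.sqrt (d l) * Real.sqrt (d l) = c (k - l) * d l := by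
      intro l; rw [mul_assoc, Real.mul_self_sqrt (hd0 l)]
    obtain ⟨hs, hle⟩ := myCS (fun l => c (k - l) * Real.sqrt (d l)) (fun l => Real.sqrt (d l))
      (fun l => mul_nonneg (hc0 _) (Real.sqrt_nonneg _)) (fun l => Real.sqrt_nonneg _) hu hv
    refine ⟨by simpa only [hmul] using hs, ?_⟩
    calc ∑' l, c (k - l) * d l
        = ∑' l, c (k - l) * Real.sqrt (d l) * Real.sqrt (d l) := tsum_congr fun l => (hmul l).symm
      _ ≤ Real.sqrt (∑' l, (c (k - l) * Real.sqrt (d l)) ^ 2) *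
            Real.sqrt (∑' l, (Real.sqrt (d l)) ^ 2) := hle
      _ = Real.sqrt (g k) * Real.sqrt D := by rw [tsum_congr h1, tsum_congr h2]
  have hconv0 : ∀ k, 0 ≤ ∑' l, c (k - l) * d l :=
    fun k => tsum_nonneg fun l => mul_nonneg (hc0 _) (hd0 _)
  have hsq : ∀ k, (∑' l, c (k - l) * d l) ^ 2 ≤ g k * D := by
    intro k
    calc (∑' l, c (k - l) * d l) ^ 2 ≤ (Real.sqrt (g k) * Real.sqrt D) ^ 2 :=
          pow_le_pow_left₀ (hconv0 k) (hCS k).2 2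
      _ = g k * D := by rw [mul_pow, Real.sq_sqrt (hg0 k), Real.sq_sqrt hD0]
  -- Fubini
  set f : ℤ × ℤ → ℝ := fun p => c (p.2 - p.1) ^ 2 * d p.1 with hfdef
  have hf0 : ∀ p, 0 ≤ f p := fun p => mul_nonneg (sq_nonneg _) (hd0 _)
  have hrow : ∀ l, Summable fun k => f (l, k) := fun l => (myShift' _ hc2 l).mul_right (d l)
  have hrowsum : ∀ l, (∑' k, f (l, k)) = (∑' k, c k ^ 2) * d l := by
    intro l
    have : (∑' k, f (l, k)) = (∑' k, c (k - l) ^ 2) * d l := by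
      simp only [hfdef]; exact tsum_mul_right
    rw [this, myShiftSum (fun k => c k ^ 2) l]
  have hsumf : Summable f := by
    rw [summable_prod_of_nonneg hf0]
    refine ⟨hrow, ?_⟩
    simpa only [hrowsum] using hd.mul_left (∑' k, c k ^ 2)
  have hgsummable : Summable g := by
    have hswap : Summable (fun p : ℤ × ℤ => f (p.2, p.1)) := hsumf.prod_symm
    have := ((summable_prod_of_nonneg (fun p => hf0 _)).mp hswap).2
    exact this
  have hgsum : (∑' k, g k) = (∑' k, c k ^ 2) * D := by
    have hcomm : (∑' k, ∑' l, f (l, k)) = ∑' l, ∑' k, f (l, k) :=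
      Summable.tsum_comm' hsumf hrow (fun k => hg k)
    calc (∑' k, g k) = ∑' l, ∑' k, f (l, k) := hcomm
      _ = ∑' l, (∑' k, c k ^ 2) * d l := tsum_congr hrowsum
      _ = (∑' k, c k ^ 2) * D := tsum_mul_left
  have hconvsq : Summable fun k => (∑' l, c (k - l) * d l) ^ 2 :=
    Summable.of_nonneg_of_le (fun k => sq_nonneg _) hsq (hgsummable.mul_right D)
  refine ⟨fun k => (hCS k).1, hconvsq, ?_⟩
  have hle : (∑' k, (∑' l, c (k - l) * d l) ^ 2) ≤ (∑' k, c k ^ 2) * D ^ 2 := by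
    calc (∑' k, (∑' l, c (k - l) * d l) ^ 2) ≤ ∑' k, g k * D :=
          Summable.tsum_le_tsum hsq hconvsq (hgsummable.mul_right D)
      _ = (∑' k, g k) * D := tsum_mul_right
      _ = (∑' k, c k ^ 2) * D ^ 2 := by rw [hgsum]; ring
  calc Real.sqrt (∑' k, (∑' l, c (k - l) * d l) ^ 2)
      ≤ Real.sqrt ((∑' k, c k ^ 2) * D ^ 2) := Real.sqrt_le_sqrt hle
    _ = Real.sqrt (∑' k, c k ^ 2) * D := by
        rw [Real.sqrt_mul (tsum_nonneg fun k => sq_nonneg _), Real.sqrt_sq hD0]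

/-- The `h^s` norm of a sequence `a : ℤ → ℝ`:
`‖a‖_{h^s} = (∑_{k∈ℤ} (1+|k|)^{2s} |a_k|²)^{1/2}`. -/
noncomputable def hsNorm (s : ℝ) (a : ℤ → ℝ) : ℝ :=
  Real.sqrt (∑' k : ℤ, (1 + |(k : ℝ)|) ^ (2 * s) * (a k) ^ 2)

/-- Banach algebra property of `h^s` for `s ≥ 1`: the convolution `(a*b)_k = ∑_l a_{k-l} b_l`
is well defined and `‖a*b‖_{h^s} ≤ 2^{s-1} (‖a‖_{h^s} ‖b‖_{ℓ¹} + ‖a‖_{ℓ¹} ‖b‖_{h^s})`,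
with finite `ℓ¹` norms on the right-hand side. -/

theorem hs_banach_algebra (s : ℝ) (hs : 1 ≤ s) (a b : ℤ → ℝ)
    (ha : Summable fun k : ℤ => (1 + |(k : ℝ)|) ^ (2 * s) * (a k) ^ 2)
    (hb : Summable fun k : ℤ => (1 + |(k : ℝ)|) ^ (2 * s) * (b k) ^ 2) :
    (Summable fun k : ℤ => |a k|) ∧ (Summable fun k : ℤ => |b k|) ∧
    (∀ k : ℤ, Summable fun l : ℤ => a (k - l) * b l) ∧
    (Summable fun k : ℤ => (1 + |(k : ℝ)|) ^ (2 * s) * (∑' l : ℤ, a (k - l) * b l) ^ 2) ∧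
    hsNorm s (fun k => ∑' l : ℤ, a (k - l) * b l) ≤
      (2 : ℝ) ^ (s - 1) *
        (hsNorm s a * (∑' k : ℤ, |b k|) + (∑' k : ℤ, |a k|) * hsNorm s b) := by
  have hbase : ∀ k : ℤ, (0 : ℝ) < 1 + |(k : ℝ)| := fun k => by positivity
  set w : ℤ → ℝ := fun k => (1 + |(k : ℝ)|) ^ s with hwdef
  have hw0 : ∀ k, 0 < w k := fun k => Real.rpow_pos_of_pos (hbase k) s
  have hw1 : ∀ k, 1 ≤ w k := fun k =>
    Real.one_le_rpow (le_add_of_nonneg_right (abs_nonneg _)) (by linarith)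
  have hwsq : ∀ (f : ℤ → ℝ) (k : ℤ),
      (1 + |(k : ℝ)|) ^ (2 * s) * f k ^ 2 = (w k * |f k|) ^ 2 := by
    intro f k
    rw [mul_pow, sq_abs, hwdef]
    congr 1
    rw [sq, ← Real.rpow_add (hbase k)]
    ring_nf
  set c : ℤ → ℝ := fun k => |a k| with hcdef
  set d : ℤ → ℝ := fun k => |b k| with hddef
  have hc0 : ∀ k, 0 ≤ c k := fun k => abs_nonneg _
  have hd0 : ∀ k, 0 ≤ d k := fun k => abs_nonneg _
  set A : ℤ → ℝ := fun k => w k * c k with hAdef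
  set B : ℤ → ℝ := fun k => w k * d k with hBdef
  have hA0 : ∀ k, 0 ≤ A k := fun k => mul_nonneg (hw0 k).le (hc0 k)
  have hB0 : ∀ k, 0 ≤ B k := fun k => mul_nonneg (hw0 k).le (hd0 k)
  have hA2 : Summable fun k => A k ^ 2 := ha.congr fun k => hwsq a k
  have hB2 : Summable fun k => B k ^ 2 := hb.congr fun k => hwsq b k
  have hc : Summable c := myL1 s hs a (hA2.congr fun k => rfl)
  have hd : Summable d := myL1 s hs b (hB2.congr fun k => rfl)
  have hc2 : Summable fun k => c k ^ 2 := by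
    apply Summable.of_nonneg_of_le (fun k => sq_nonneg _) (fun k => ?_) hA2
    have : c k ≤ A k := le_mul_of_one_le_left (hc0 k) (hw1 k)
    exact pow_le_pow_left₀ (hc0 k) this 2
  -- Young's inequality applications
  obtain ⟨hconvcd, _, _⟩ := myYoung c d hc0 hd0 hc2 hd
  obtain ⟨hconvAd, hF2, hFle⟩ := myYoung A d hA0 hd0 hA2 hd
  obtain ⟨hconvBc, hG2, hGle⟩ := myYoung B c hB0 hc0 hB2 hc
  set F : ℤ → ℝ := fun k => ∑' l, A (k - l) * d l with hFdef
  set G : ℤ → ℝ := fun k => ∑' l, B (k - l) * c l with hGdef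
  have hF0 : ∀ k, 0 ≤ F k := fun k => tsum_nonneg fun l => mul_nonneg (hA0 _) (hd0 _)
  have hG0 : ∀ k, 0 ≤ G k := fun k => tsum_nonneg fun l => mul_nonneg (hB0 _) (hc0 _)
  -- convolution summability
  have hconv : ∀ k : ℤ, Summable fun l : ℤ => a (k - l) * b l := by
    intro k
    have h : Summable fun l => |a (k - l) * b l| :=
      (hconvcd k).congr fun l => (abs_mul _ _).symm
    exact h.of_abs
  -- |conv| ≤ H
  have habs : ∀ k : ℤ, |∑' l, a (k - l) * b l| ≤ ∑' l, c (k - l) * d l := by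
    intro k
    have h : Summable fun l => ‖a (k - l) * b l‖ :=
      (hconvcd k).congr fun l => (abs_mul _ _).symm
    calc |∑' l, a (k - l) * b l| ≤ ∑' l, ‖a (k - l) * b l‖ := norm_tsum_le_tsum_norm h
      _ = ∑' l, c (k - l) * d l := tsum_congr fun l => abs_mul _ _
  -- G as a convolution with c on the right
  have hcB : ∀ k, Summable fun l => c (k - l) * B l := by
    intro k
    have h := myShift (fun l => B (k - l) * c l) (hconvBc k) k
    exact h.congr fun l => by simp [sub_sub_cancel, mul_comm]
  have hGalt : ∀ k, (∑' l, c (k - l) * B l) = G k := by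
    intro k
    have h := myShiftSum' (fun l => B (k - l) * c l) k
    show (∑' l, c (k - l) * B l) = ∑' l, B (k - l) * c l
    rw [← h]
    exact tsum_congr fun l => by simp [sub_sub_cancel, mul_comm]
  -- the main pointwise estimate
  have hmain : ∀ k : ℤ, w k * |∑' l, a (k - l) * b l| ≤ 2 ^ (s - 1) * (F k + G k) := by
    intro k
    have hterm : ∀ l : ℤ, w k * (c (k - l) * d l) ≤
        2 ^ (s - 1) * (A (k - l) * d l + c (k - l) * B l) := by
      intro l
      have hkey := myKey s hs k l
      have h := mul_le_mul_of_nonneg_right hkey (mul_nonneg (hc0 (k - l)) (hd0 l))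
      calc w k * (c (k - l) * d l) ≤
          (2 ^ (s - 1) * (w (k - l) + w l)) * (c (k - l) * d l) := h
        _ = 2 ^ (s - 1) * (A (k - l) * d l + c (k - l) * B l) := by
            simp only [hAdef, hBdef]; ring
    have hsum2 : Summable fun l => 2 ^ (s - 1) * (A (k - l) * d l + c (k - l) * B l) :=
      (((hconvAd k).add (hcB k)).mul_left _)
    calc w k * |∑' l, a (k - l) * b l| ≤ w k * ∑' l, c (k - l) * d l :=
          mul_le_mul_of_nonneg_left (habs k) (hw0 k).le
      _ = ∑' l, w k * (c (k - l) * d l) := tsum_mul_left.symm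
      _ ≤ ∑' l, 2 ^ (s - 1) * (A (k - l) * d l + c (k - l) * B l) :=
          Summable.tsum_le_tsum hterm ((hconvcd k).mul_left _) hsum2
      _ = 2 ^ (s - 1) * ((∑' l, A (k - l) * d l) + ∑' l, c (k - l) * B l) := by
          rw [tsum_mul_left, Summable.tsum_add (hconvAd k) (hcB k)]
      _ = 2 ^ (s - 1) * (F k + G k) := by rw [hGalt k]
  have h2s0 : (0 : ℝ) ≤ 2 ^ (s - 1) := Real.rpow_nonneg (by norm_num) _
  obtain ⟨hFG2, hFGle⟩ := myTri F G hF0 hG0 hF2 hG2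
  -- summability of the weighted convolution squares
  have hwconv : ∀ k : ℤ, (1 + |(k : ℝ)|) ^ (2 * s) * (∑' l, a (k - l) * b l) ^ 2 ≤
      (2 ^ (s - 1)) ^ 2 * (F k + G k) ^ 2 := by
    intro k
    rw [hwsq (fun k => ∑' l, a (k - l) * b l) k, ← mul_pow]
    exact pow_le_pow_left₀ (mul_nonneg (hw0 k).le (abs_nonneg _)) (hmain k) 2
  have hsummconv : Summable fun k : ℤ =>
      (1 + |(k : ℝ)|) ^ (2 * s) * (∑' l, a (k - l) * b l) ^ 2 := by
    apply Summable.of_nonneg_of_le (fun k => ?_) hwconv (hFG2.mul_left _)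
    have := hwsq (fun k => ∑' l, a (k - l) * b l) k
    rw [this]
    positivity
  refine ⟨hc, hd, hconv, hsummconv, ?_⟩
  -- the norm inequality
  have hnorm_a : hsNorm s a = Real.sqrt (∑' k, A k ^ 2) := by
    rw [hsNorm]
    exact congrArg Real.sqrt (tsum_congr fun k => hwsq a k)
  have hnorm_b : hsNorm s b = Real.sqrt (∑' k, B k ^ 2) := by
    rw [hsNorm]
    exact congrArg Real.sqrt (tsum_congr fun k => hwsq b k)
  calc hsNorm s (fun k => ∑' l, a (k - l) * b l)
      = Real.sqrt (∑' k, (w k * |∑' l, a (k - l) * b l|) ^ 2) := by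
        rw [hsNorm]
        exact congrArg Real.sqrt
          (tsum_congr fun k => hwsq (fun k => ∑' l, a (k - l) * b l) k)
    _ ≤ Real.sqrt (∑' k, (2 ^ (s - 1)) ^ 2 * (F k + G k) ^ 2) := by
        apply Real.sqrt_le_sqrt
        apply Summable.tsum_le_tsum (fun k => ?_) (hsummconv.congr fun k =>
          hwsq (fun k => ∑' l, a (k - l) * b l) k) (hFG2.mul_left _)
        rw [← mul_pow]
        exact pow_le_pow_left₀ (mul_nonneg (hw0 k).le (abs_nonneg _)) (hmain k) 2
    _ = 2 ^ (s - 1) * Real.sqrt (∑' k, (F k + G k) ^ 2) := by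
        rw [tsum_mul_left, Real.sqrt_mul (sq_nonneg _), Real.sqrt_sq h2s0]
    _ ≤ 2 ^ (s - 1) * (Real.sqrt (∑' k, F k ^ 2) + Real.sqrt (∑' k, G k ^ 2)) :=
        mul_le_mul_of_nonneg_left hFGle h2s0
    _ ≤ 2 ^ (s - 1) * (Real.sqrt (∑' k, A k ^ 2) * (∑' k, d k) +
          Real.sqrt (∑' k, B k ^ 2) * (∑' k, c k)) := by
        apply mul_le_mul_of_nonneg_left (add_le_add hFle hGle) h2s0
    _ = 2 ^ (s - 1) * (hsNorm s a * (∑' k, |b k|) + (∑' k, |a k|) * hsNorm s b) := by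
        rw [hnorm_a, hnorm_b]
        ring
end

section
/- Let k ≥ 1 be an integer, b > 0, α ∈ ℝ, and let λ̃ < 1 and β̃ < 1 be real numbers. Consider functions φ : ℝ → ℝ that are square-integrable on ℝ, continuous on ℝ, continuously differentiable on ℝ∖{0} with one-sided derivative limits φ'(0+) and φ'(0−) at 0, twice differentiable on ℝ∖{0, b, −b}, and that satisfy −φ''(y) + k²(1−β̃)φ(y) = 0 for 0 < |y| < b, −φ''(y) + k²(1−λ̃)φ(y) = 0 for |y| > b, and the jump condition φ'(0+) − φ'(0−) + k²αφ(0) = 0. Then a nonzero such φ exists if and only if kα/(2√(1−β̃)) = [√(1−β̃) sinh(k√(1−β̃) b) + √(1−λ̃) cosh(k√(1−β̃) b)] / [√(1−β̃) cosh(k√(1−β̃) b) + √(1−λ̃) sinh(k√(1−β̃) b)], and in that case any two such solutions are scalar multiples of each other. -/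
open Real MeasureTheory Set Filter

/-- A (weak) zero-eigenfunction of the operator
`L = -d²/dy² + k²(1 - λ̃·1_{|y|≥b} - β̃·1_{|y|<b} - α δ₀)`:
`φ` is square-integrable and continuous on `ℝ`, continuously differentiable on `ℝ∖{0}`
with one-sided derivative limits `dp = φ'(0⁺)` and `dm = φ'(0⁻)`, twice differentiable on
`ℝ∖{0,b,-b}`, solves `-φ'' + k²(1-β̃)φ = 0` for `0 < |y| < b` and
`-φ'' + k²(1-λ̃)φ = 0` for `|y| > b`, and satisfies the jump condition
`φ'(0⁺) - φ'(0⁻) + k²αφ(0) = 0`. -/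
structure IsDeltaStepEigenfun (k : ℕ) (b α lamt bett : ℝ) (φ : ℝ → ℝ) (dp dm : ℝ) : Prop where
  sq_int : Integrable (fun y => (φ y) ^ 2)
  cont : Continuous φ
  diff : ∀ y : ℝ, y ≠ 0 → DifferentiableAt ℝ φ y
  cont_deriv : ContinuousOn (deriv φ) {(0 : ℝ)}ᶜ
  deriv_plus : Tendsto (deriv φ) (nhdsWithin 0 (Ioi 0)) (nhds dp)
  deriv_minus : Tendsto (deriv φ) (nhdsWithin 0 (Iio 0)) (nhds dm)
  diff2 : ∀ y : ℝ, y ≠ 0 → y ≠ b → y ≠ -b → DifferentiableAt ℝ (deriv φ) y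
  ode_inner : ∀ y : ℝ, 0 < |y| → |y| < b →
    -(deriv (deriv φ) y) + (k : ℝ) ^ 2 * (1 - bett) * φ y = 0
  ode_outer : ∀ y : ℝ, b < |y| →
    -(deriv (deriv φ) y) + (k : ℝ) ^ 2 * (1 - lamt) * φ y = 0
  jump : dp - dm + (k : ℝ) ^ 2 * α * φ 0 = 0

lemma hasDerivAt_aexp (a r t : ℝ) :
    HasDerivAt (fun t => a * Real.exp (r * t)) (a * r * Real.exp (r * t)) t := by
  have h0 : HasDerivAt (fun y : ℝ => r * y) r t := by
    simpa using (hasDerivAt_id t).const_mul r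
  have := ((Real.hasDerivAt_exp (r * t)).comp t h0).const_mul a
  exact this.congr_deriv (by ring)

noncomputable def prof (μ ν b P Q : ℝ) (t : ℝ) : ℝ :=
  if t ≤ b then P * exp (μ * t) + Q * exp (-μ * t)
  else ((P * exp (μ * b) + Q * exp (-μ * b)) * exp (ν * b)) * exp (-ν * t)

noncomputable def prof1 (μ ν b P Q : ℝ) (t : ℝ) : ℝ :=
  if t ≤ b then P * μ * exp (μ * t) + Q * (-μ) * exp (-μ * t)
  else ((P * exp (μ * b) + Q * exp (-μ * b)) * exp (ν * b)) * (-ν) * exp (-ν * t)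


lemma exp_cancel' (r x : ℝ) : exp (r * x) * exp (-r * x) = 1 := by
  rw [← Real.exp_add]
  have : r * x + -r * x = 0 := by ring
  rw [this, Real.exp_zero]

-- matching condition at b (C¹ junction)
def ProfMatch (μ ν b P Q : ℝ) : Prop :=
  P * μ * exp (μ * b) + Q * (-μ) * exp (-μ * b)
    = -ν * (P * exp (μ * b) + Q * exp (-μ * b))

section prof
variable {μ ν b P Q t : ℝ}

lemma prof_cont : Continuous (prof μ ν b P Q) := by
  apply Continuous.if_le (by fun_prop) (by fun_prop) continuous_id continuous_const
  intro x hx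
  subst hx
  simp only [id_eq]
  rw [mul_assoc, exp_cancel', mul_one]

lemma prof1_cont (hm : ProfMatch μ ν b P Q) : Continuous (prof1 μ ν b P Q) := by
  apply Continuous.if_le (by fun_prop) (by fun_prop) continuous_id continuous_const
  intro x hx
  subst hx
  unfold ProfMatch at hm
  simp only [id_eq] at hm ⊢
  have h := exp_cancel' ν x
  linear_combination hm + ν * (P * exp (μ * x) + Q * exp (-μ * x)) * h

lemma prof_hasDeriv (hm : ProfMatch μ ν b P Q) (t : ℝ) :
    HasDerivAt (prof μ ν b P Q) (prof1 μ ν b P Q t) t := by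
  have hL : ∀ x : ℝ, HasDerivAt (fun t => P * exp (μ * t) + Q * exp (-μ * t))
      (P * μ * exp (μ * x) + Q * (-μ) * exp (-μ * x)) x := fun x =>
    (hasDerivAt_aexp P μ x).add (hasDerivAt_aexp Q (-μ) x)
  have hR : ∀ x : ℝ, HasDerivAt
      (fun t => ((P * exp (μ * b) + Q * exp (-μ * b)) * exp (ν * b)) * exp (-ν * t))
      (((P * exp (μ * b) + Q * exp (-μ * b)) * exp (ν * b)) * (-ν) * exp (-ν * x)) x :=
    fun x => hasDerivAt_aexp ((P * exp (μ * b) + Q * exp (-μ * b)) * exp (ν * b)) (-ν) x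
  rcases lt_trichotomy t b with h | h | h
  · have hev : prof μ ν b P Q =ᶠ[nhds t] fun t => P * exp (μ * t) + Q * exp (-μ * t) := by
      filter_upwards [Iio_mem_nhds h] with x hx
      exact if_pos (le_of_lt hx)
    have key : prof1 μ ν b P Q t = P * μ * exp (μ * t) + Q * (-μ) * exp (-μ * t) :=
      if_pos h.le
    rw [key]
    exact (hL t).congr_of_eventuallyEq hev
  · subst h
    have key : prof1 μ ν t P Q t = P * μ * exp (μ * t) + Q * (-μ) * exp (-μ * t) :=
      if_pos le_rfl
    have e1 : HasDerivWithinAt (prof μ ν t P Q) (prof1 μ ν t P Q t) (Iic t) t := by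
      rw [key]
      exact (hL t).hasDerivWithinAt.congr (fun x hx => if_pos hx) (if_pos le_rfl)
    have e2 : HasDerivWithinAt (prof μ ν t P Q) (prof1 μ ν t P Q t) (Ici t) t := by
      have hxv : ∀ x ∈ Ici t, prof μ ν t P Q x
          = ((P * exp (μ * t) + Q * exp (-μ * t)) * exp (ν * t)) * exp (-ν * x) := by
        intro x hx
        rcases eq_or_lt_of_le (mem_Ici.mp hx) with h | h
        · subst h
          rw [prof, if_pos le_rfl, mul_assoc, exp_cancel', mul_one]
        · rw [prof, if_neg (not_le.mpr h)]
      have keyv : prof1 μ ν t P Q t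
          = ((P * exp (μ * t) + Q * exp (-μ * t)) * exp (ν * t)) * (-ν) * exp (-ν * t) := by
        rw [key]
        unfold ProfMatch at hm
        have h := exp_cancel' ν t
        linear_combination hm + ν * (P * exp (μ * t) + Q * exp (-μ * t)) * h
      rw [keyv]
      exact (hR t).hasDerivWithinAt.congr (fun x hx => hxv x hx) (hxv t self_mem_Ici)
    have := (e1.union e2).congr_set (EventuallyEq.of_eq Iic_union_Ici)
    rwa [hasDerivWithinAt_univ] at this
  · have hev : prof μ ν b P Q =ᶠ[nhds t]
        fun t => ((P * exp (μ * b) + Q * exp (-μ * b)) * exp (ν * b)) * exp (-ν * t) := by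
      filter_upwards [Ioi_mem_nhds h] with x hx
      exact if_neg (not_le.mpr hx)
    have key : prof1 μ ν b P Q t
        = ((P * exp (μ * b) + Q * exp (-μ * b)) * exp (ν * b)) * (-ν) * exp (-ν * t) :=
      if_neg (not_le.mpr h)
    rw [key]
    exact (hR t).congr_of_eventuallyEq hev

lemma prof_deriv (hm : ProfMatch μ ν b P Q) :
    deriv (prof μ ν b P Q) = prof1 μ ν b P Q :=
  funext fun t => (prof_hasDeriv hm t).deriv

lemma prof1_hasDeriv_lt (h : t < b) :
    HasDerivAt (prof1 μ ν b P Q) (μ ^ 2 * prof μ ν b P Q t) t := by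
  have hev : prof1 μ ν b P Q =ᶠ[nhds t]
      fun x => P * μ * exp (μ * x) + Q * (-μ) * exp (-μ * x) := by
    filter_upwards [Iio_mem_nhds h] with x hx
    exact if_pos (le_of_lt hx)
  have hd := (hasDerivAt_aexp (P * μ) μ t).add (hasDerivAt_aexp (Q * (-μ)) (-μ) t)
  have key : P * μ * μ * exp (μ * t) + Q * (-μ) * (-μ) * exp (-μ * t)
      = μ ^ 2 * prof μ ν b P Q t := by
    rw [prof, if_pos h.le]; ring
  rw [← key]
  exact hd.congr_of_eventuallyEq hev

lemma prof1_hasDeriv_gt (h : b < t) :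
    HasDerivAt (prof1 μ ν b P Q) (ν ^ 2 * prof μ ν b P Q t) t := by
  set E := (P * exp (μ * b) + Q * exp (-μ * b)) * exp (ν * b) with hE
  have hev : prof1 μ ν b P Q =ᶠ[nhds t] fun x => (E * (-ν)) * exp (-ν * x) := by
    filter_upwards [Ioi_mem_nhds h] with x hx
    rw [prof1, if_neg (not_le.mpr hx)]
  have hd := hasDerivAt_aexp (E * (-ν)) (-ν) t
  have key : E * (-ν) * (-ν) * exp (-ν * t) = ν ^ 2 * prof μ ν b P Q t := by
    rw [prof, if_neg (not_le.mpr h), ← hE]; ring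
  rw [← key]
  exact hd.congr_of_eventuallyEq hev

end prof

noncomputable def psi (μ ν b P Q : ℝ) : ℝ → ℝ := fun y => prof μ ν b P Q |y|

noncomputable def psi1 (μ ν b P Q : ℝ) : ℝ → ℝ := fun y =>
  if 0 < y then prof1 μ ν b P Q y else -(prof1 μ ν b P Q (-y))

section psi
variable {μ ν b P Q : ℝ}

lemma psi_cont : Continuous (psi μ ν b P Q) := prof_cont.comp continuous_abs

lemma psi_hasDeriv (hm : ProfMatch μ ν b P Q) {y : ℝ} (hy : y ≠ 0) :
    HasDerivAt (psi μ ν b P Q) (psi1 μ ν b P Q y) y := by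
  rcases lt_or_gt_of_ne hy with h | h
  · have hev : psi μ ν b P Q =ᶠ[nhds y] fun x => prof μ ν b P Q (-x) := by
      filter_upwards [Iio_mem_nhds h] with x hx
      rw [psi, abs_of_neg hx]
    have hcomp : HasDerivAt (fun x => prof μ ν b P Q (-x))
        (-(prof1 μ ν b P Q (-y))) y := by
      have := (prof_hasDeriv hm (-y)).comp y (hasDerivAt_neg y)
      exact this.congr_deriv (by ring)
    have : psi1 μ ν b P Q y = -(prof1 μ ν b P Q (-y)) := if_neg (by linarith)
    rw [this]
    exact hcomp.congr_of_eventuallyEq hev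
  · have hev : psi μ ν b P Q =ᶠ[nhds y] prof μ ν b P Q := by
      filter_upwards [Ioi_mem_nhds h] with x hx
      rw [psi, abs_of_pos hx]
    have : psi1 μ ν b P Q y = prof1 μ ν b P Q y := if_pos h
    rw [this]
    exact (prof_hasDeriv hm y).congr_of_eventuallyEq hev

lemma psi_deriv (hm : ProfMatch μ ν b P Q) {y : ℝ} (hy : y ≠ 0) :
    deriv (psi μ ν b P Q) y = psi1 μ ν b P Q y := (psi_hasDeriv hm hy).deriv

lemma psi1_contAt (hm : ProfMatch μ ν b P Q) {y : ℝ} (hy : y ≠ 0) :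
    ContinuousAt (psi1 μ ν b P Q) y := by
  rcases lt_or_gt_of_ne hy with h | h
  · apply ContinuousAt.congr (((prof1_cont hm).comp continuous_neg).continuousAt.neg)
    filter_upwards [Iio_mem_nhds h] with x hx
    have hx' : x < 0 := mem_Iio.mp hx
    rw [psi1, if_neg (by linarith)]
    rfl
  · apply ContinuousAt.congr (prof1_cont hm).continuousAt
    filter_upwards [Ioi_mem_nhds h] with x hx
    rw [psi1, if_pos (mem_Ioi.mp hx)]

lemma psi_deriv_eventually (hm : ProfMatch μ ν b P Q) {y : ℝ} (hy : y ≠ 0) :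
    deriv (psi μ ν b P Q) =ᶠ[nhds y] psi1 μ ν b P Q := by
  filter_upwards [isOpen_compl_singleton.mem_nhds (by simpa using hy :
    y ∈ ({(0:ℝ)}ᶜ : Set ℝ))] with x hx
  exact psi_deriv hm (by simpa using hx)

lemma psi_cont_deriv (hm : ProfMatch μ ν b P Q) :
    ContinuousOn (deriv (psi μ ν b P Q)) {(0:ℝ)}ᶜ := by
  intro y hy
  have hy' : y ≠ 0 := by simpa using hy
  exact ((psi1_contAt hm hy').congr (psi_deriv_eventually hm hy').symm).continuousWithinAt

lemma psi_deriv_plus (hm : ProfMatch μ ν b P Q) :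
    Tendsto (deriv (psi μ ν b P Q)) (nhdsWithin 0 (Ioi 0)) (nhds (prof1 μ ν b P Q 0)) := by
  apply Tendsto.congr' _ (((prof1_cont hm).tendsto 0).mono_left nhdsWithin_le_nhds)
  filter_upwards [self_mem_nhdsWithin] with x hx
  have hx' : 0 < x := mem_Ioi.mp hx
  rw [psi_deriv hm (ne_of_gt hx'), psi1, if_pos hx']

lemma psi_deriv_minus (hm : ProfMatch μ ν b P Q) :
    Tendsto (deriv (psi μ ν b P Q)) (nhdsWithin 0 (Iio 0))
      (nhds (-(prof1 μ ν b P Q 0))) := by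
  have hc : Tendsto (fun x => -(prof1 μ ν b P Q (-x))) (nhdsWithin 0 (Iio 0))
      (nhds (-(prof1 μ ν b P Q 0))) := by
    have : Continuous fun x => -(prof1 μ ν b P Q (-x)) :=
      ((prof1_cont hm).comp continuous_neg).neg
    simpa using (this.tendsto 0).mono_left nhdsWithin_le_nhds
  apply Tendsto.congr' _ hc
  filter_upwards [self_mem_nhdsWithin] with x hx
  have hx' : x < 0 := mem_Iio.mp hx
  rw [psi_deriv hm (ne_of_lt hx'), psi1, if_neg (by linarith)]

lemma psi_diff2 (hm : ProfMatch μ ν b P Q) (hb : 0 < b) {y : ℝ}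
    (hy : y ≠ 0) (hyb : y ≠ b) (hyb' : y ≠ -b) :
    DifferentiableAt ℝ (deriv (psi μ ν b P Q)) y ∧
      ((0 < |y| → |y| < b → deriv (deriv (psi μ ν b P Q)) y = μ ^ 2 * psi μ ν b P Q y) ∧
       (b < |y| → deriv (deriv (psi μ ν b P Q)) y = ν ^ 2 * psi μ ν b P Q y)) := by
  have habs : |y| ≠ b := fun h => by
    rcases abs_eq (le_of_lt hb) |>.mp h with h | h
    exacts [hyb h, hyb' h]
  have key : HasDerivAt (deriv (psi μ ν b P Q))
      ((if |y| < b then μ ^ 2 else ν ^ 2) * psi μ ν b P Q y) y := by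
    rcases lt_or_gt_of_ne hy with h | h
    · -- y < 0 : deriv psi =ᶠ fun x => -(prof1 (-x))
      have hev : deriv (psi μ ν b P Q) =ᶠ[nhds y] fun x => -(prof1 μ ν b P Q (-x)) := by
        filter_upwards [Iio_mem_nhds h] with x hx
        have hx' : x < 0 := mem_Iio.mp hx
        rw [psi_deriv hm (ne_of_lt hx'), psi1, if_neg (by linarith)]
      have hd : HasDerivAt (fun x => -(prof1 μ ν b P Q (-x)))
          ((if |y| < b then μ ^ 2 else ν ^ 2) * prof μ ν b P Q (-y)) y := by
        rcases lt_or_gt_of_ne habs with hlt | hgt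
        · have hlt' : -y < b := by rwa [abs_of_neg h] at hlt
          have hc := ((prof1_hasDeriv_lt (μ := μ) (ν := ν) (P := P) (Q := Q)
            hlt').comp y (hasDerivAt_neg y)).neg
          rw [if_pos hlt]
          exact hc.congr_deriv (by ring)
        · have hgt' : b < -y := by rwa [abs_of_neg h] at hgt
          have hc := ((prof1_hasDeriv_gt (μ := μ) (ν := ν) (P := P) (Q := Q)
            hgt').comp y (hasDerivAt_neg y)).neg
          rw [if_neg (not_lt.mpr (le_of_lt hgt))]
          exact hc.congr_deriv (by ring)
      have : psi μ ν b P Q y = prof μ ν b P Q (-y) := by rw [psi, abs_of_neg h]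
      rw [this]
      exact hd.congr_of_eventuallyEq hev
    · have hev : deriv (psi μ ν b P Q) =ᶠ[nhds y] prof1 μ ν b P Q := by
        filter_upwards [Ioi_mem_nhds h] with x hx
        have hx' : 0 < x := mem_Ioi.mp hx
        rw [psi_deriv hm (ne_of_gt hx'), psi1, if_pos hx']
      have hd : HasDerivAt (prof1 μ ν b P Q)
          ((if |y| < b then μ ^ 2 else ν ^ 2) * prof μ ν b P Q y) y := by
        rcases lt_or_gt_of_ne habs with hlt | hgt
        · rw [if_pos hlt]
          exact prof1_hasDeriv_lt (by rwa [abs_of_pos h] at hlt)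
        · rw [if_neg (not_lt.mpr (le_of_lt hgt))]
          exact prof1_hasDeriv_gt (by rwa [abs_of_pos h] at hgt)
      have : psi μ ν b P Q y = prof μ ν b P Q y := by rw [psi, abs_of_pos h]
      rw [this]
      exact hd.congr_of_eventuallyEq hev
  refine ⟨key.differentiableAt, ⟨fun _ hlt => ?_, fun hgt => ?_⟩⟩
  · rw [key.deriv, if_pos hlt]
  · rw [key.deriv, if_neg (not_lt.mpr (le_of_lt hgt))]

lemma prof_ge {t : ℝ} (h : b ≤ t) : prof μ ν b P Q t
    = ((P * exp (μ * b) + Q * exp (-μ * b)) * exp (ν * b)) * exp (-ν * t) := by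
  rcases eq_or_lt_of_le h with h | h
  · subst h
    rw [prof, if_pos le_rfl, mul_assoc, exp_cancel', mul_one]
  · rw [prof, if_neg (not_le.mpr h)]

lemma exp_integrableOn_Iic (a : ℝ) {c : ℝ} (hc : 0 < c) :
    IntegrableOn (fun x => exp (c * x)) (Iic a) := by
  rw [← (Measure.measurePreserving_neg (volume : Measure ℝ)).integrableOn_comp_preimage
    (Homeomorph.neg ℝ).measurableEmbedding]
  simp only [Function.comp_def, neg_preimage, neg_Iic]
  rw [integrableOn_Ici_iff_integrableOn_Ioi]
  exact (exp_neg_integrableOn_Ioi (-a) hc).congr_fun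
    (fun x _ => by ring_nf) measurableSet_Ioi

lemma psi_sq_int (hν : 0 < ν) (hb : 0 < b) :
    Integrable (fun y => (psi μ ν b P Q y) ^ 2) := by
  set R := (P * exp (μ * b) + Q * exp (-μ * b)) * exp (ν * b) with hR
  rw [← integrableOn_univ]
  have hcover : (univ : Set ℝ) ⊆ Iic (-b) ∪ (Icc (-b) b ∪ Ici b) := by
    intro x _
    rcases le_total x (-b) with h | h
    · exact Or.inl h
    · rcases le_total x b with h2 | h2
      · exact Or.inr (Or.inl ⟨h, h2⟩)
      · exact Or.inr (Or.inr h2)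
  apply IntegrableOn.mono_set _ hcover
  rw [integrableOn_union, integrableOn_union]
  refine ⟨?_, ?_, ?_⟩
  · have hfor : ∀ x ∈ Iic (-b), R ^ 2 * exp (2 * ν * x) = (psi μ ν b P Q x) ^ 2 := by
      intro x hx
      have hx' : x ≤ -b := mem_Iic.mp hx
      have hv : psi μ ν b P Q x = R * exp (-ν * (-x)) := by
        rw [psi, abs_of_neg (by linarith : x < 0), prof_ge (by linarith), hR]
      have he : -ν * -x + -ν * -x = 2 * ν * x := by ring
      rw [hv, show (R * exp (-ν * -x)) ^ 2 = R ^ 2 * (exp (-ν * -x) * exp (-ν * -x)) by ring,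
        ← Real.exp_add, he]
    have h1 : IntegrableOn (fun x => R ^ 2 * exp (2 * ν * x)) (Iic (-b)) :=
      (exp_integrableOn_Iic (-b) (by linarith : (0:ℝ) < 2 * ν)).const_mul (R ^ 2)
    exact h1.congr_fun hfor measurableSet_Iic
  · exact ((psi_cont (μ := μ) (ν := ν) (b := b) (P := P) (Q := Q)).pow 2).integrableOn_Icc
  · have hfor : ∀ x ∈ Ici b, R ^ 2 * exp (-(2 * ν) * x) = (psi μ ν b P Q x) ^ 2 := by
      intro x hx
      have hx' : b ≤ x := mem_Ici.mp hx
      have hv : psi μ ν b P Q x = R * exp (-ν * x) := by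
        rw [psi, abs_of_pos (by linarith : 0 < x), prof_ge hx', hR]
      have he : -ν * x + -ν * x = -(2 * ν) * x := by ring
      rw [hv, show (R * exp (-ν * x)) ^ 2 = R ^ 2 * (exp (-ν * x) * exp (-ν * x)) by ring,
        ← Real.exp_add, he]
    rw [integrableOn_Ici_iff_integrableOn_Ioi]
    have h1 : IntegrableOn (fun x => R ^ 2 * exp (-(2 * ν) * x)) (Ioi b) :=
      (exp_neg_integrableOn_Ioi b (by linarith : (0:ℝ) < 2 * ν)).const_mul (R ^ 2)
    exact h1.congr_fun (fun x hx => hfor x (le_of_lt (mem_Ioi.mp hx))) measurableSet_Ioi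

end psi

lemma prof1_zero {μ ν b P Q : ℝ} (hb : 0 < b) :
    prof1 μ ν b P Q 0 = P * μ - Q * μ := by
  rw [prof1, if_pos hb.le]
  simp only [mul_zero, Real.exp_zero, mul_one, neg_zero]
  ring

lemma psi_zero {μ ν b P Q : ℝ} (hb : 0 < b) : psi μ ν b P Q 0 = P + Q := by
  rw [psi, abs_zero, prof, if_pos hb.le]
  simp

lemma psi_eigenfun (k : ℕ) (b α lamt bett : ℝ) (hb : 0 < b) {μ ν P Q : ℝ}
    (hμ2 : μ ^ 2 = (k : ℝ) ^ 2 * (1 - bett)) (hν2 : ν ^ 2 = (k : ℝ) ^ 2 * (1 - lamt))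
    (hν : 0 < ν) (hm : ProfMatch μ ν b P Q)
    (hjump : (P * μ - Q * μ) - (-(P * μ - Q * μ)) + (k : ℝ) ^ 2 * α * (P + Q) = 0) :
    IsDeltaStepEigenfun k b α lamt bett (psi μ ν b P Q)
      (P * μ - Q * μ) (-(P * μ - Q * μ)) where
  sq_int := psi_sq_int hν hb
  cont := psi_cont
  diff := fun y hy => (psi_hasDeriv hm hy).differentiableAt
  cont_deriv := psi_cont_deriv hm
  deriv_plus := by rw [← prof1_zero (μ := μ) (ν := ν) (P := P) (Q := Q) hb]
                   exact psi_deriv_plus hm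
  deriv_minus := by rw [← prof1_zero (μ := μ) (ν := ν) (P := P) (Q := Q) hb]
                    exact psi_deriv_minus hm
  diff2 := fun y h1 h2 h3 => (psi_diff2 hm hb h1 h2 h3).1
  ode_inner := by
    intro y h1 h2
    have hy : y ≠ 0 := by simpa [abs_pos] using h1
    have hyb : y ≠ b := fun h => by rw [h, abs_of_pos hb] at h2; exact lt_irrefl b h2
    have hyb' : y ≠ -b := fun h => by
      rw [h, abs_neg, abs_of_pos hb] at h2; exact lt_irrefl b h2
    rw [((psi_diff2 hm hb hy hyb hyb').2).1 h1 h2, ← hμ2]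
    ring
  ode_outer := by
    intro y h1
    have hy : y ≠ 0 := by
      intro h; rw [h, abs_zero] at h1; linarith
    have hyb : y ≠ b := fun h => by
      rw [h, abs_of_pos hb] at h1; exact lt_irrefl b h1
    have hyb' : y ≠ -b := fun h => by
      rw [h, abs_neg, abs_of_pos hb] at h1; exact lt_irrefl b h1
    rw [((psi_diff2 hm hb hy hyb hyb').2).2 h1, ← hν2]
    ring
  jump := by rw [psi_zero hb]; exact hjump
lemma const_of_deriv_zero {s : Set ℝ} (hs : IsOpen s) (hconv : Convex ℝ s) {f : ℝ → ℝ}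
    (hd : ∀ t ∈ s, DifferentiableAt ℝ f t) (h0 : ∀ t ∈ s, deriv f t = 0)
    {x y : ℝ} (hx : x ∈ s) (hy : y ∈ s) : f x = f y := by
  apply hconv.is_const_of_fderivWithin_eq_zero
    (fun t ht => (hd t ht).differentiableWithinAt) _ hx hy
  intro t ht
  rw [fderivWithin_of_isOpen hs ht]
  have h1 : HasDerivAt f 0 t := by
    have := (hd t ht).hasDerivAt
    rwa [h0 t ht] at this
  have := h1.hasFDerivAt.fderiv
  rw [this]; ext; simp

/-- classification of solutions of f'' = μ² f on an open convex set -/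
lemma ode_exp_classify {s : Set ℝ} (hs : IsOpen s) (hconv : Convex ℝ s) {μ : ℝ} (hμ : 0 < μ)
    {f : ℝ → ℝ} (hd1 : ∀ t ∈ s, DifferentiableAt ℝ f t)
    (hd2 : ∀ t ∈ s, DifferentiableAt ℝ (deriv f) t)
    (hode : ∀ t ∈ s, deriv (deriv f) t = μ ^ 2 * f t)
    {t0 : ℝ} (ht0 : t0 ∈ s) :
    ∀ t ∈ s, f t = ((f t0 * μ + deriv f t0) / (2 * μ) * exp (-μ * t0)) * exp (μ * t)
      + ((f t0 * μ - deriv f t0) / (2 * μ) * exp (μ * t0)) * exp (-μ * t) := by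
  set P : ℝ := (f t0 * μ + deriv f t0) / (2 * μ) * exp (-μ * t0) with hP
  set Q : ℝ := (f t0 * μ - deriv f t0) / (2 * μ) * exp (μ * t0) with hQ
  set c : ℝ → ℝ := fun t => P * exp (μ * t) + Q * exp (-μ * t) with hc
  set c1 : ℝ → ℝ := fun t => P * μ * exp (μ * t) + Q * (-μ) * exp (-μ * t) with hc1
  have hcder : ∀ t : ℝ, HasDerivAt c (c1 t) t := fun t =>
    (hasDerivAt_aexp P μ t).add (hasDerivAt_aexp Q (-μ) t)
  have hc1der : ∀ t : ℝ, HasDerivAt c1 (μ ^ 2 * c t) t := by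
    intro t
    have := (hasDerivAt_aexp (P * μ) μ t).add (hasDerivAt_aexp (Q * (-μ)) (-μ) t)
    exact this.congr_deriv (by simp only [hc]; ring)
  set g : ℝ → ℝ := fun t => f t - c t with hg
  have hgd : ∀ t ∈ s, DifferentiableAt ℝ g t := fun t ht =>
    (hd1 t ht).sub (hcder t).differentiableAt
  have hgder : ∀ t ∈ s, deriv g t = deriv f t - c1 t := by
    intro t ht
    rw [hg, deriv_fun_sub (hd1 t ht) (hcder t).differentiableAt, (hcder t).deriv]
  have hexpinv : ∀ x : ℝ, exp (-x) = (exp x)⁻¹ := fun x => Real.exp_neg x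
  have hg0 : g t0 = 0 := by
    simp only [hg, hc, hP, hQ, neg_mul, hexpinv]
    field_simp
    ring
  have hg0' : deriv g t0 = 0 := by
    rw [hgder t0 ht0]
    simp only [hc1, hP, hQ, neg_mul, hexpinv]
    field_simp
    ring
  have hev : ∀ t ∈ s, (deriv g) =ᶠ[nhds t] (fun x => deriv f x - c1 x) := by
    intro t ht
    filter_upwards [hs.mem_nhds ht] with x hx using hgder x hx
  have hgd2 : ∀ t ∈ s, DifferentiableAt ℝ (deriv g) t := by
    intro t ht
    rw [Filter.EventuallyEq.differentiableAt_iff (hev t ht)]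
    exact (hd2 t ht).sub (hc1der t).differentiableAt
  have hg2 : ∀ t ∈ s, deriv (deriv g) t = μ ^ 2 * g t := by
    intro t ht
    rw [Filter.EventuallyEq.deriv_eq (hev t ht),
      deriv_fun_sub (hd2 t ht) (hc1der t).differentiableAt, (hc1der t).deriv, hode t ht]
    simp only [hg]; ring
  -- first reduction: u := (g' + μ g) e^{-μ t} is constant 0
  set u : ℝ → ℝ := fun t => (deriv g t + μ * g t) * exp (-μ * t) with hu
  have hud : ∀ t ∈ s, HasDerivAt u 0 t := by
    intro t ht
    have h1 : HasDerivAt (fun x => deriv g x + μ * g x)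
        (μ ^ 2 * g t + μ * deriv g t) t := by
      refine HasDerivAt.add ?_ ?_
      · have := (hgd2 t ht).hasDerivAt
        rwa [hg2 t ht] at this
      · exact ((hgd t ht).hasDerivAt).const_mul μ
    have h2 : HasDerivAt (fun x : ℝ => exp (-μ * x)) (1 * (-μ) * exp (-μ * t)) t := by
      simpa using hasDerivAt_aexp 1 (-μ) t
    have := h1.mul h2
    exact this.congr_deriv (by ring)
  have hu0 : ∀ t ∈ s, u t = 0 := by
    intro t ht
    have := const_of_deriv_zero hs hconv (fun x hx => (hud x hx).differentiableAt)
      (fun x hx => (hud x hx).deriv) ht ht0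
    rw [this, hu]
    simp only [hg0', hg0]; ring
  have hgder' : ∀ t ∈ s, deriv g t = -μ * g t := by
    intro t ht
    have := hu0 t ht
    rw [hu] at this
    have hne := Real.exp_ne_zero (-μ * t)
    have := mul_eq_zero.mp this
    rcases this with h | h
    · linarith [h]
    · exact absurd h hne
  -- second reduction: v := g e^{μ t} is constant 0
  set v : ℝ → ℝ := fun t => g t * exp (μ * t) with hv
  have hvd : ∀ t ∈ s, HasDerivAt v 0 t := by
    intro t ht
    have h1 := (hgd t ht).hasDerivAt
    rw [hgder' t ht] at h1
    have h2 : HasDerivAt (fun x : ℝ => exp (μ * x)) (1 * μ * exp (μ * t)) t := by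
      simpa using hasDerivAt_aexp 1 μ t
    have := h1.mul h2
    exact this.congr_deriv (by ring)
  have hv0 : ∀ t ∈ s, v t = 0 := by
    intro t ht
    have := const_of_deriv_zero hs hconv (fun x hx => (hvd x hx).differentiableAt)
      (fun x hx => (hvd x hx).deriv) ht ht0
    rw [this, hv]; simp [hg0]
  intro t ht
  have := hv0 t ht
  rw [hv] at this
  have hne := Real.exp_ne_zero (μ * t)
  have h := mul_eq_zero.mp this
  have hgt : g t = 0 := by tauto
  have hft : f t - c t = 0 := hgt
  have hfc : f t = c t := by linarith
  rw [hfc, hc]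
lemma not_integrable_of_ge_one {f : ℝ → ℝ} (hint : Integrable f)
    {s : Set ℝ} (hs : MeasurableSet s) (hvol : volume s = ⊤)
    (hge : ∀ t ∈ s, 1 ≤ f t) : False := by
  have h1 : IntegrableOn (fun _ : ℝ => (1 : ℝ)) s := by
    apply Integrable.mono' hint.integrableOn aestronglyMeasurable_const
    filter_upwards [ae_restrict_mem hs] with t ht
    simpa using (hge t ht)
  rw [integrableOn_const_iff] at h1
  rcases h1 with h | h
  · norm_num at h
  · rw [hvol] at h; exact absurd h (by simp)

/-- if φ² is integrable and φ = P e^{νt} + Q e^{-νt} on (c,∞), then P = 0 -/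
lemma decay_coeff_zero_top {φ : ℝ → ℝ} (hint : Integrable (fun y => (φ y) ^ 2))
    {ν c P Q : ℝ} (hν : 0 < ν)
    (h : ∀ t ∈ Ioi c, φ t = P * exp (ν * t) + Q * exp (-ν * t)) : P = 0 := by
  by_contra hP
  have hten : Tendsto (fun t => (φ t) ^ 2) atTop atTop := by
    have h1 : Tendsto (fun t : ℝ => exp (ν * t) ^ 2) atTop atTop := by
      apply Tendsto.comp (tendsto_pow_atTop (by norm_num))
      exact Real.tendsto_exp_atTop.comp (tendsto_id.const_mul_atTop hν)
    have h2 : Tendsto (fun t : ℝ => (P + Q * exp (-(2 * ν) * t)) ^ 2) atTop (nhds (P ^ 2)) := by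
      have : Tendsto (fun t : ℝ => P + Q * exp (-(2 * ν) * t)) atTop (nhds (P + Q * 0)) := by
        apply tendsto_const_nhds.add
        apply Tendsto.const_mul
        apply Real.tendsto_exp_atBot.comp
        exact Tendsto.const_mul_atTop_of_neg (by linarith : -(2*ν) < 0) tendsto_id
      simpa using (this.pow 2)
    have h3 : Tendsto (fun t : ℝ => exp (ν * t) ^ 2 * (P + Q * exp (-(2 * ν) * t)) ^ 2)
        atTop atTop := h1.atTop_mul_pos (by positivity) h2
    apply h3.congr'
    filter_upwards [eventually_gt_atTop c] with t ht
    rw [h t ht]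
    rw [show (-ν) * t = (ν * t) + (-(2*ν) * t) by ring, Real.exp_add]
    ring
  have hev : ∀ᶠ t in atTop, 1 ≤ (φ t) ^ 2 := hten.eventually_ge_atTop 1
  rcases hev.exists_forall_of_atTop with ⟨M, hM⟩
  exact not_integrable_of_ge_one hint measurableSet_Ici (by simp) (fun t ht => hM t ht)

lemma decay_coeff_zero_bot {φ : ℝ → ℝ} (hint : Integrable (fun y => (φ y) ^ 2))
    {ν c P Q : ℝ} (hν : 0 < ν)
    (h : ∀ t ∈ Iio c, φ t = P * exp (ν * t) + Q * exp (-ν * t)) : Q = 0 := by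
  have hint' : Integrable (fun y => (φ (-y)) ^ 2) := by
    rw [← (Measure.measurePreserving_neg (volume : Measure ℝ)).integrable_comp_emb
      (Homeomorph.neg ℝ).measurableEmbedding]
    simpa [Function.comp_def] using hint
  apply decay_coeff_zero_top (c := -c) hint' hν
  intro t ht
  rw [h (-t) (by simp only [mem_Iio]; simp only [mem_Ioi] at ht; linarith)]
  ring_nf

lemma eq_lim_of_eqOn {φ g : ℝ → ℝ} {s : Set ℝ} {x : ℝ}
    (hcont : ContinuousAt φ x) (heq : ∀ t ∈ s, φ t = g t) (hg : Continuous g)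
    (hne : (nhdsWithin x s).NeBot) : φ x = g x := by
  haveI := hne
  have h1 : Tendsto φ (nhdsWithin x s) (nhds (φ x)) :=
    hcont.tendsto.mono_left nhdsWithin_le_nhds
  have h2 : Tendsto φ (nhdsWithin x s) (nhds (g x)) := by
    apply Tendsto.congr' _ ((hg.tendsto x).mono_left nhdsWithin_le_nhds)
    exact eventually_nhdsWithin_of_forall fun t ht => (heq t ht).symm
  exact tendsto_nhds_unique h1 h2

lemma lim_unique_on {f g : ℝ → ℝ} {s : Set ℝ} {x L : ℝ}
    (hne : (nhdsWithin x s).NeBot)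
    (hf : Tendsto f (nhdsWithin x s) (nhds L)) (heq : ∀ t ∈ s, f t = g t)
    (hg : Continuous g) : L = g x := by
  haveI := hne
  exact tendsto_nhds_unique
    (hf.congr' (eventually_nhdsWithin_of_forall heq))
    ((hg.tendsto x).mono_left nhdsWithin_le_nhds)

lemma deriv_eq_of_eqOn {φ : ℝ → ℝ} {s : Set ℝ} (hs : IsOpen s) {P Q r : ℝ}
    (h : ∀ t ∈ s, φ t = P * exp (r * t) + Q * exp (-r * t)) :
    ∀ t ∈ s, deriv φ t = P * r * exp (r * t) + Q * (-r) * exp (-r * t) := by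
  intro t ht
  have hev : φ =ᶠ[nhds t] fun x => P * exp (r * x) + Q * exp (-r * x) := by
    filter_upwards [hs.mem_nhds ht] with x hx using h x hx
  rw [hev.deriv_eq]
  exact ((hasDerivAt_aexp P r t).add (hasDerivAt_aexp Q (-r) t)).deriv

set_option maxHeartbeats 1000000 in
lemma main_classify (k : ℕ) (hk : 1 ≤ k) {b α lamt bett : ℝ} (hb : 0 < b)
    (hlam : lamt < 1) (hbet : bett < 1) {φ : ℝ → ℝ} {dp dm : ℝ}
    (H : IsDeltaStepEigenfun k b α lamt bett φ dp dm) :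
    ∃ P Q : ℝ,
      (∀ y, φ y = psi ((k:ℝ) * Real.sqrt (1-bett)) ((k:ℝ) * Real.sqrt (1-lamt)) b P Q y)
      ∧ ProfMatch ((k:ℝ) * Real.sqrt (1-bett)) ((k:ℝ) * Real.sqrt (1-lamt)) b P Q
      ∧ φ 0 = P + Q
      ∧ dp = P * ((k:ℝ) * Real.sqrt (1-bett)) - Q * ((k:ℝ) * Real.sqrt (1-bett))
      ∧ dm = -dp := by
  obtain ⟨μ, hμdef⟩ : ∃ x : ℝ, x = (k:ℝ) * Real.sqrt (1-bett) := ⟨_, rfl⟩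
  obtain ⟨ν, hνdef⟩ : ∃ x : ℝ, x = (k:ℝ) * Real.sqrt (1-lamt) := ⟨_, rfl⟩
  rw [← hμdef, ← hνdef]
  have hkpos : (0:ℝ) < k := by exact_mod_cast hk
  have hsb : 0 < Real.sqrt (1-bett) := Real.sqrt_pos.mpr (by linarith)
  have hsl : 0 < Real.sqrt (1-lamt) := Real.sqrt_pos.mpr (by linarith)
  have hμ : 0 < μ := by rw [hμdef]; exact mul_pos hkpos hsb
  have hν : 0 < ν := by rw [hνdef]; exact mul_pos hkpos hsl
  have hμ2 : μ ^ 2 = (k:ℝ) ^ 2 * (1 - bett) := by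
    rw [hμdef, mul_pow, Real.sq_sqrt (by linarith : (0:ℝ) ≤ 1 - bett)]
  have hν2 : ν ^ 2 = (k:ℝ) ^ 2 * (1 - lamt) := by
    rw [hνdef, mul_pow, Real.sq_sqrt (by linarith : (0:ℝ) ≤ 1 - lamt)]
  -- region 1 : (0,b)
  obtain ⟨P₁, Q₁, hφ₁⟩ : ∃ P Q, ∀ t ∈ Ioo 0 b, φ t = P * exp (μ * t) + Q * exp (-μ * t) := by
    refine ⟨_, _, ode_exp_classify isOpen_Ioo (convex_Ioo 0 b) hμ
      (fun t ht => H.diff t (ne_of_gt ht.1))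
      (fun t ht => H.diff2 t (ne_of_gt ht.1) (ne_of_lt ht.2) (by intro h; rw [h] at ht; have := ht.1; linarith))
      (fun t ht => ?_) (t0 := b/2) ⟨half_pos hb, half_lt_self hb⟩⟩
    have h0 : 0 < |t| := abs_pos.mpr (ne_of_gt ht.1)
    have h1 : |t| < b := by rw [abs_of_pos ht.1]; exact ht.2
    have := H.ode_inner t h0 h1
    rw [hμ2]; linarith
  -- region 2 : (-b,0)
  obtain ⟨P₂, Q₂, hφ₂⟩ : ∃ P Q, ∀ t ∈ Ioo (-b) 0, φ t = P * exp (μ * t) + Q * exp (-μ * t) := by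
    refine ⟨_, _, ode_exp_classify isOpen_Ioo (convex_Ioo (-b) 0) hμ
      (fun t ht => H.diff t (ne_of_lt ht.2))
      (fun t ht => H.diff2 t (ne_of_lt ht.2) (by intro h; rw [h] at ht; have := ht.2; linarith) (ne_of_gt ht.1))
      (fun t ht => ?_) (t0 := -(b/2)) ⟨by linarith [half_lt_self hb], by linarith [half_pos hb]⟩⟩
    have h0 : 0 < |t| := abs_pos.mpr (ne_of_lt ht.2)
    have h1 : |t| < b := by rw [abs_of_neg ht.2]; linarith [ht.1]
    have := H.ode_inner t h0 h1
    rw [hμ2]; linarith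
  -- region 3 : (b,∞)
  obtain ⟨P₃, Q₃, hφ₃⟩ : ∃ P Q, ∀ t ∈ Ioi b, φ t = P * exp (ν * t) + Q * exp (-ν * t) := by
    refine ⟨_, _, ode_exp_classify isOpen_Ioi (convex_Ioi b) hν
      (fun t ht => H.diff t (by intro h; rw [h] at ht; exact absurd (mem_Ioi.mp ht) (by linarith)))
      (fun t ht => H.diff2 t (by intro h; rw [h] at ht; exact absurd (mem_Ioi.mp ht) (by linarith))
        (ne_of_gt (mem_Ioi.mp ht)) (by intro h; rw [h] at ht; have := mem_Ioi.mp ht; linarith))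
      (fun t ht => ?_) (t0 := b + 1) (by simp : b + 1 ∈ Ioi b)⟩
    have ht' : b < t := mem_Ioi.mp ht
    have h1 : b < |t| := by rw [abs_of_pos (by linarith : 0 < t)]; exact ht'
    have := H.ode_outer t h1
    rw [hν2]; linarith
  -- region 4 : (-∞,-b)
  obtain ⟨P₄, Q₄, hφ₄⟩ : ∃ P Q, ∀ t ∈ Iio (-b), φ t = P * exp (ν * t) + Q * exp (-ν * t) := by
    refine ⟨_, _, ode_exp_classify isOpen_Iio (convex_Iio (-b)) hν
      (fun t ht => H.diff t (by intro h; rw [h] at ht; have := mem_Iio.mp ht; linarith))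
      (fun t ht => H.diff2 t (by intro h; rw [h] at ht; have := mem_Iio.mp ht; linarith)
        (by intro h; rw [h] at ht; have := mem_Iio.mp ht; linarith)
        (ne_of_lt (mem_Iio.mp ht)))
      (fun t ht => ?_) (t0 := -b - 1) (by simp only [mem_Iio]; linarith)⟩
    have ht' : t < -b := mem_Iio.mp ht
    have h1 : b < |t| := by rw [abs_of_neg (by linarith : t < 0)]; linarith
    have := H.ode_outer t h1
    rw [hν2]; linarith
  -- decay
  have hP₃ : P₃ = 0 := decay_coeff_zero_top H.sq_int hν hφ₃
  have hQ₄ : Q₄ = 0 := decay_coeff_zero_bot H.sq_int hν hφ₄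
  -- neBot facts
  have ne1 : (nhdsWithin (0:ℝ) (Ioo 0 b)).NeBot := by
    rw [nhdsWithin_Ioo_eq_nhdsGT hb]; infer_instance
  have ne2 : (nhdsWithin (0:ℝ) (Ioo (-b) 0)).NeBot := by
    rw [nhdsWithin_Ioo_eq_nhdsLT (by linarith : -b < 0)]; infer_instance
  have ne3 : (nhdsWithin b (Ioo 0 b)).NeBot := by
    rw [nhdsWithin_Ioo_eq_nhdsLT hb]; infer_instance
  have ne4 : (nhdsWithin (-b) (Ioo (-b) 0)).NeBot := by
    rw [nhdsWithin_Ioo_eq_nhdsGT (by linarith : -b < 0)]; infer_instance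
  have ne5 : (nhdsWithin b (Ioi b)).NeBot := inferInstance
  have ne6 : (nhdsWithin (-b) (Iio (-b))).NeBot := inferInstance
  -- continuity of deriv φ at ±b
  have hcb : ContinuousAt (deriv φ) b :=
    H.cont_deriv.continuousAt (isOpen_compl_singleton.mem_nhds (by simp; linarith))
  have hcb' : ContinuousAt (deriv φ) (-b) :=
    H.cont_deriv.continuousAt (isOpen_compl_singleton.mem_nhds (by simp; intro h; linarith))
  -- boundary equations
  have e1 : φ 0 = P₁ * exp (μ * 0) + Q₁ * exp (-μ * 0) :=
    eq_lim_of_eqOn H.cont.continuousAt hφ₁ (by fun_prop) ne1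
  have e2 : φ 0 = P₂ * exp (μ * 0) + Q₂ * exp (-μ * 0) :=
    eq_lim_of_eqOn H.cont.continuousAt hφ₂ (by fun_prop) ne2
  have e3 : dp = P₁ * μ * exp (μ * 0) + Q₁ * (-μ) * exp (-μ * 0) := by
    apply lim_unique_on ne1 _ (deriv_eq_of_eqOn isOpen_Ioo hφ₁) (by fun_prop)
    rw [nhdsWithin_Ioo_eq_nhdsGT hb]
    exact H.deriv_plus
  have e4 : dm = P₂ * μ * exp (μ * 0) + Q₂ * (-μ) * exp (-μ * 0) := by
    apply lim_unique_on ne2 _ (deriv_eq_of_eqOn isOpen_Ioo hφ₂) (by fun_prop)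
    rw [nhdsWithin_Ioo_eq_nhdsLT (by linarith : -b < 0)]
    exact H.deriv_minus
  have e5 : φ b = P₁ * exp (μ * b) + Q₁ * exp (-μ * b) :=
    eq_lim_of_eqOn H.cont.continuousAt hφ₁ (by fun_prop) ne3
  have e6 : φ b = P₃ * exp (ν * b) + Q₃ * exp (-ν * b) :=
    eq_lim_of_eqOn H.cont.continuousAt hφ₃ (by fun_prop) ne5
  have e7 : deriv φ b = P₁ * μ * exp (μ * b) + Q₁ * (-μ) * exp (-μ * b) :=
    eq_lim_of_eqOn hcb (deriv_eq_of_eqOn isOpen_Ioo hφ₁) (by fun_prop) ne3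
  have e8 : deriv φ b = P₃ * ν * exp (ν * b) + Q₃ * (-ν) * exp (-ν * b) :=
    eq_lim_of_eqOn hcb (deriv_eq_of_eqOn isOpen_Ioi hφ₃) (by fun_prop) ne5
  have e9 : φ (-b) = P₂ * exp (μ * (-b)) + Q₂ * exp (-μ * (-b)) :=
    eq_lim_of_eqOn H.cont.continuousAt hφ₂ (by fun_prop) ne4
  have e10 : φ (-b) = P₄ * exp (ν * (-b)) + Q₄ * exp (-ν * (-b)) :=
    eq_lim_of_eqOn H.cont.continuousAt hφ₄ (by fun_prop) ne6
  have e11 : deriv φ (-b) = P₂ * μ * exp (μ * (-b)) + Q₂ * (-μ) * exp (-μ * (-b)) :=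
    eq_lim_of_eqOn hcb' (deriv_eq_of_eqOn isOpen_Ioo hφ₂) (by fun_prop) ne4
  have e12 : deriv φ (-b) = P₄ * ν * exp (ν * (-b)) + Q₄ * (-ν) * exp (-ν * (-b)) :=
    eq_lim_of_eqOn hcb' (deriv_eq_of_eqOn isOpen_Iio hφ₄) (by fun_prop) ne6
  simp only [mul_zero, Real.exp_zero, mul_one] at e1 e2 e3 e4
  obtain ⟨X, hX⟩ : ∃ x : ℝ, x = exp (μ * b) := ⟨_, rfl⟩
  obtain ⟨X', hX'⟩ : ∃ x : ℝ, x = exp (-μ * b) := ⟨_, rfl⟩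
  rw [← hX, ← hX'] at e5 e7
  have hXX' : X * X' = 1 := by rw [hX, hX']; exact exp_cancel' μ b
  have hXpos : 0 < X := by rw [hX]; exact exp_pos _
  have hX'pos : 0 < X' := by rw [hX']; exact exp_pos _
  have hXgt : X' < X := by
    rw [hX, hX']; apply Real.exp_lt_exp.mpr; nlinarith
  have hxm : exp (μ * (-b)) = X' := by rw [hX']; congr 1; ring
  have hxm' : exp (-μ * (-b)) = X := by rw [hX]; congr 1; ring
  have hnb : exp (ν * (-b)) = exp (-ν * b) := by congr 1; ring
  have hnb' : exp (-ν * (-b)) = exp (ν * b) := by congr 1; ring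
  have hνc : exp (ν * b) * exp (-ν * b) = 1 := exp_cancel' ν b
  rw [hxm, hxm'] at e9 e11
  rw [hnb, hnb', hQ₄] at e10 e12
  rw [hP₃] at e6 e8
  have hm1 : P₁ * μ * X + Q₁ * (-μ) * X' = -ν * (P₁ * X + Q₁ * X') := by
    have : deriv φ b = -ν * (φ b) := by rw [e8, e6]; ring
    rw [e7, e5] at this
    linarith [this]
  have hm2 : P₂ * μ * X' + Q₂ * (-μ) * X = ν * (P₂ * X' + Q₂ * X) := by
    have : deriv φ (-b) = ν * (φ (-b)) := by rw [e12, e10]; ring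
    rw [e11, e9] at this
    linarith [this]
  have hsum : P₁ + Q₁ = P₂ + Q₂ := by linarith [e1, e2]
  have h3' : (μ + ν) * (P₁ * X) - (μ - ν) * (Q₁ * X') = 0 := by linear_combination hm1
  have h4' : (μ - ν) * (P₂ * X') - (μ + ν) * (Q₂ * X) = 0 := by linear_combination hm2
  have hkey : ((μ + ν) * X + (μ - ν) * X') * (P₁ - Q₂) = 0 := by
    linear_combination h3' + h4' + (μ - ν) * X' * hsum
  have hbr : 0 < (μ + ν) * X + (μ - ν) * X' := by
    have hdist : (μ + ν) * X + (μ - ν) * X' = μ * (X + X') + ν * (X - X') := by ring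
    have h1 : 0 < μ * (X + X') := mul_pos hμ (by linarith)
    have h2 : 0 < ν * (X - X') := mul_pos hν (by linarith)
    rw [hdist]; linarith
  have hP₁Q₂ : P₁ = Q₂ := by
    rcases mul_eq_zero.mp hkey with h | h
    · linarith
    · linarith
  have hQ₁P₂ : Q₁ = P₂ := by linarith
  -- conclusion
  have hpm : ProfMatch μ ν b P₁ Q₁ := by
    unfold ProfMatch
    rw [← hX, ← hX']
    exact hm1
  refine ⟨P₁, Q₁, ?_, hpm, by linarith [e1], by linear_combination e3, by linear_combination e3 + e4 + μ * hP₁Q₂ - μ * hQ₁P₂⟩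
  intro y
  rcases lt_trichotomy y 0 with hy | hy | hy
  · rcases lt_trichotomy y (-b) with h2 | h2 | h2
    · -- y < -b
      have hval : φ y = P₄ * exp (ν * y) := by
        rw [hφ₄ y (mem_Iio.mpr h2), hQ₄]; ring
      have hφnb : φ (-b) = P₁ * X + Q₁ * X' := by rw [e9, hQ₁P₂, hP₁Q₂]; ring
      have hP₄ : P₄ = (P₁ * X + Q₁ * X') * exp (ν * b) := by
        have h0 : P₄ * exp (-ν * b) = ((P₁ * X + Q₁ * X') * exp (ν * b)) * exp (-ν * b) := by
          rw [mul_assoc, hνc, mul_one]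
          rw [← hφnb, e10]; ring
        exact mul_right_cancel₀ (Real.exp_ne_zero _) h0
      rw [psi, abs_of_neg hy, prof_ge (by linarith : b ≤ -y), hval, hP₄, ← hX, ← hX']
      congr 1
      congr 1
      ring
    · -- y = -b
      subst h2
      rw [psi, abs_neg, abs_of_pos hb, prof, if_pos le_rfl, ← hX, ← hX', e9,
        ← hQ₁P₂, ← hP₁Q₂]
      ring
    · -- -b < y < 0
      have hval := hφ₂ y ⟨h2, hy⟩
      rw [psi, abs_of_neg hy, prof, if_pos (by linarith : -y ≤ b), hval,
        hQ₁P₂, hP₁Q₂]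
      have ha : exp (μ * -y) = exp (-μ * y) := by congr 1; ring
      have hb' : exp (-μ * -y) = exp (μ * y) := by congr 1; ring
      rw [ha, hb']
      ring
  · subst hy
    rw [psi_zero hb]
    linarith [e1]
  · rcases lt_trichotomy y b with h2 | h2 | h2
    · rw [psi, abs_of_pos hy, prof, if_pos h2.le]
      exact hφ₁ y ⟨hy, h2⟩
    · subst h2
      rw [psi, abs_of_pos hy, prof, if_pos le_rfl, ← hX, ← hX']
      exact e5
    · -- y > b
      have hval : φ y = Q₃ * exp (-ν * y) := by
        rw [hφ₃ y (mem_Ioi.mpr h2), hP₃]; ring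
      have hQ₃ : Q₃ = (P₁ * X + Q₁ * X') * exp (ν * b) := by
        have h0 : Q₃ * exp (-ν * b) = ((P₁ * X + Q₁ * X') * exp (ν * b)) * exp (-ν * b) := by
          rw [mul_assoc, hνc, mul_one, ← e5, e6]; ring
        exact mul_right_cancel₀ (Real.exp_ne_zero _) h0
      rw [psi, abs_of_pos hy, prof_ge h2.le, hval, hQ₃, ← hX, ← hX']

lemma psi_linear (μ ν b P Q c : ℝ) (y : ℝ) :
    psi μ ν b (c * P) (c * Q) y = c * psi μ ν b P Q y := by
  rw [psi, psi, prof, prof]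
  split <;> ring

/-- A nonzero eigenfunction exists iff
`kα/(2√(1-β̃)) = (√(1-β̃) sinh(k√(1-β̃)b) + √(1-λ̃) cosh(k√(1-β̃)b)) /
(√(1-β̃) cosh(k√(1-β̃)b) + √(1-λ̃) sinh(k√(1-β̃)b))`, and in that case the eigenspace
is one-dimensional (any two solutions are scalar multiples of each other). -/
theorem delta_step_eigenvalue_condition (k : ℕ) (hk : 1 ≤ k) (b : ℝ) (hb : 0 < b)
    (α lamt bett : ℝ) (hlam : lamt < 1) (hbet : bett < 1) :
    ((∃ (φ : ℝ → ℝ) (dp dm : ℝ), IsDeltaStepEigenfun k b α lamt bett φ dp dm ∧ φ ≠ 0) ↔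
      (k : ℝ) * α / (2 * Real.sqrt (1 - bett)) =
        (Real.sqrt (1 - bett) * Real.sinh ((k : ℝ) * Real.sqrt (1 - bett) * b) +
          Real.sqrt (1 - lamt) * Real.cosh ((k : ℝ) * Real.sqrt (1 - bett) * b)) /
        (Real.sqrt (1 - bett) * Real.cosh ((k : ℝ) * Real.sqrt (1 - bett) * b) +
          Real.sqrt (1 - lamt) * Real.sinh ((k : ℝ) * Real.sqrt (1 - bett) * b))) ∧
    (∀ (φ₁ φ₂ : ℝ → ℝ) (dp₁ dm₁ dp₂ dm₂ : ℝ),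
      IsDeltaStepEigenfun k b α lamt bett φ₁ dp₁ dm₁ →
      IsDeltaStepEigenfun k b α lamt bett φ₂ dp₂ dm₂ →
      ∃ c : ℝ, (∀ y, φ₂ y = c * φ₁ y) ∨ (∀ y, φ₁ y = c * φ₂ y)) := by
  -- abbreviations
  obtain ⟨s, hs⟩ : ∃ x : ℝ, x = Real.sqrt (1 - bett) := ⟨_, rfl⟩
  obtain ⟨l, hl⟩ : ∃ x : ℝ, x = Real.sqrt (1 - lamt) := ⟨_, rfl⟩
  have hkpos : (0:ℝ) < k := by exact_mod_cast hk
  have hknz : (k:ℝ) ≠ 0 := ne_of_gt hkpos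
  have hsp : 0 < s := by rw [hs]; exact Real.sqrt_pos.mpr (by linarith)
  have hlp : 0 < l := by rw [hl]; exact Real.sqrt_pos.mpr (by linarith)
  have hμp : 0 < (k:ℝ) * s := mul_pos hkpos hsp
  have hνp : 0 < (k:ℝ) * l := mul_pos hkpos hlp
  have hμ2 : ((k:ℝ) * s) ^ 2 = (k:ℝ) ^ 2 * (1 - bett) := by
    rw [hs, mul_pow, Real.sq_sqrt (by linarith : (0:ℝ) ≤ 1 - bett)]
  have hν2 : ((k:ℝ) * l) ^ 2 = (k:ℝ) ^ 2 * (1 - lamt) := by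
    rw [hl, mul_pow, Real.sq_sqrt (by linarith : (0:ℝ) ≤ 1 - lamt)]
  obtain ⟨X, hX⟩ : ∃ x : ℝ, x = exp ((k:ℝ) * s * b) := ⟨_, rfl⟩
  obtain ⟨X', hX'⟩ : ∃ x : ℝ, x = exp (-((k:ℝ) * s) * b) := ⟨_, rfl⟩
  have hXX' : X * X' = 1 := by rw [hX, hX']; exact exp_cancel' ((k:ℝ) * s) b
  have hXpos : 0 < X := by rw [hX]; exact exp_pos _
  have hX'pos : 0 < X' := by rw [hX']; exact exp_pos _
  have hXgt : X' < X := by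
    rw [hX, hX']; apply Real.exp_lt_exp.mpr; nlinarith
  obtain ⟨C, hC⟩ : ∃ x : ℝ, x = Real.cosh ((k:ℝ) * s * b) := ⟨_, rfl⟩
  obtain ⟨S, hS⟩ : ∃ x : ℝ, x = Real.sinh ((k:ℝ) * s * b) := ⟨_, rfl⟩
  have hCX : C = (X + X') / 2 := by
    rw [hC, hX, hX', Real.cosh_eq]
    congr 2
    ring
  have hSX : S = (X - X') / 2 := by
    rw [hS, hX, hX', Real.sinh_eq]
    congr 2
    ring
  have hCpos : 0 < C := by rw [hC]; exact Real.cosh_pos _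
  have hSpos : 0 < S := by rw [hS]; exact Real.sinh_pos_iff.mpr (by positivity)
  have hDd : 0 < ((k:ℝ) * s + (k:ℝ) * l) * X + ((k:ℝ) * s - (k:ℝ) * l) * X' := by
    have hdist : ((k:ℝ) * s + (k:ℝ) * l) * X + ((k:ℝ) * s - (k:ℝ) * l) * X'
        = ((k:ℝ) * s) * (X + X') + ((k:ℝ) * l) * (X - X') := by ring
    have h1 : 0 < ((k:ℝ) * s) * (X + X') := mul_pos hμp (by linarith)
    have h2 : 0 < ((k:ℝ) * l) * (X - X') := mul_pos hνp (by linarith)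
    rw [hdist]; linarith
  have hden : 0 < s * C + l * S := by positivity
  -- the eigenvalue condition, rephrased
  have hcond_iff : ((k : ℝ) * α / (2 * Real.sqrt (1 - bett)) =
        (Real.sqrt (1 - bett) * Real.sinh ((k : ℝ) * Real.sqrt (1 - bett) * b) +
          Real.sqrt (1 - lamt) * Real.cosh ((k : ℝ) * Real.sqrt (1 - bett) * b)) /
        (Real.sqrt (1 - bett) * Real.cosh ((k : ℝ) * Real.sqrt (1 - bett) * b) +
          Real.sqrt (1 - lamt) * Real.sinh ((k : ℝ) * Real.sqrt (1 - bett) * b)))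
      ↔ (k:ℝ) ^ 2 * α * (((k:ℝ) * s + (k:ℝ) * l) * X + ((k:ℝ) * s - (k:ℝ) * l) * X')
          = 2 * ((k:ℝ) * s) *
            (((k:ℝ) * s + (k:ℝ) * l) * X - ((k:ℝ) * s - (k:ℝ) * l) * X') := by
    rw [← hs, ← hl, ← hC, ← hS]
    rw [div_eq_div_iff (by positivity) (ne_of_gt hden)]
    constructor
    · intro h
      linear_combination 2 * (k:ℝ)^2 * h
        - (2*(k:ℝ)^2*((k:ℝ)*α*s - 2*s*l)) * hCX - (2*(k:ℝ)^2*((k:ℝ)*α*l - 2*s^2)) * hSX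
    · intro h
      have h2 : (2*(k:ℝ)^2) * ((k:ℝ) * α * (s * C + l * S))
          = (2*(k:ℝ)^2) * ((s * S + l * C) * (2 * s)) := by
        linear_combination h + (2*(k:ℝ)^2*((k:ℝ)*α*s - 2*s*l)) * hCX
          + (2*(k:ℝ)^2*((k:ℝ)*α*l - 2*s^2)) * hSX
      exact mul_left_cancel₀ (by positivity) h2
  constructor
  · constructor
    · -- forward direction
      rintro ⟨φ, dp, dm, H, hφne⟩
      obtain ⟨P, Q, hrep, hpm, hA, hdp, hdm⟩ := main_classify k hk hb hlam hbet H
      rw [← hs, ← hl] at hrep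
      rw [← hs, ← hl] at hpm
      rw [← hs] at hdp
      unfold ProfMatch at hpm
      rw [← hX, ← hX'] at hpm
      have hjump := H.jump
      rw [hdp, hdm, hdp, hA] at hjump
      have hAne : P + Q ≠ 0 := by
        intro h0
        have hPQ : P = Q := by
          have : 2 * ((k:ℝ) * s) * (P - Q) = 0 := by
            rw [h0] at hjump
            linarith [hjump]
          have := mul_eq_zero.mp this
          rcases this with h | h
          · exfalso; have : (0:ℝ) < 2 * ((k:ℝ) * s) := by positivity
            linarith
          · linarith
        have hP0 : P = 0 := by linarith
        have hQ0 : Q = 0 := by linarith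
        apply hφne
        funext y
        rw [hrep y, hP0, hQ0]
        show psi ((k:ℝ)*s) ((k:ℝ)*l) b 0 0 y = 0
        rw [psi, prof]
        split <;> ring
      rw [hcond_iff]
      have h3d : (((k:ℝ)*s) + ((k:ℝ)*l)) * (P * X) - (((k:ℝ)*s) - ((k:ℝ)*l)) * (Q * X') = 0 := by
        linear_combination hpm
      have keymul : ((k:ℝ) ^ 2 * α * (((k:ℝ) * s + (k:ℝ) * l) * X + ((k:ℝ) * s - (k:ℝ) * l) * X')
          - 2 * ((k:ℝ) * s) *
            (((k:ℝ) * s + (k:ℝ) * l) * X - ((k:ℝ) * s - (k:ℝ) * l) * X')) * (P + Q) = 0 := by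
        linear_combination ((((k:ℝ) * s + (k:ℝ) * l) * X + ((k:ℝ) * s - (k:ℝ) * l) * X')) * hjump
          - (4 * ((k:ℝ) * s)) * h3d
      rcases mul_eq_zero.mp keymul with h | h
      · linarith [h]
      · exact absurd h hAne
    · -- backward direction : construction
      intro hcond
      rw [hcond_iff] at hcond
      obtain ⟨Dd, hDdeq⟩ : ∃ x : ℝ, x = ((k:ℝ) * s + (k:ℝ) * l) * X + ((k:ℝ) * s - (k:ℝ) * l) * X' :=
        ⟨_, rfl⟩
      have hDdpos : 0 < Dd := by rw [hDdeq]; exact hDd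
      have hDdne : Dd ≠ 0 := ne_of_gt hDdpos
      set P := ((k:ℝ) * s - (k:ℝ) * l) * X' / Dd with hP
      set Q := ((k:ℝ) * s + (k:ℝ) * l) * X / Dd with hQ
      have hpm : ProfMatch ((k:ℝ)*s) ((k:ℝ)*l) b P Q := by
        unfold ProfMatch
        rw [← hX, ← hX', hP, hQ]
        field_simp
        try ring
      have hjump : (P * ((k:ℝ)*s) - Q * ((k:ℝ)*s)) - (-(P * ((k:ℝ)*s) - Q * ((k:ℝ)*s)))
          + (k:ℝ) ^ 2 * α * (P + Q) = 0 := by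
        rw [hP, hQ]
        field_simp
        linear_combination hcond - ((k:ℝ)^2 * α - 2 * ((k:ℝ)*s)) * hDdeq * 0
      have Hψ := psi_eigenfun k b α lamt bett hb hμ2 hν2 hνp hpm hjump
      refine ⟨psi ((k:ℝ)*s) ((k:ℝ)*l) b P Q, P * ((k:ℝ)*s) - Q * ((k:ℝ)*s),
        -(P * ((k:ℝ)*s) - Q * ((k:ℝ)*s)), Hψ, ?_⟩
      intro h0
      have h1 : psi ((k:ℝ)*s) ((k:ℝ)*l) b P Q 0 = 0 := by rw [h0]; rfl
      rw [psi_zero hb, hP, hQ] at h1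
      rw [← add_div, div_eq_zero_iff] at h1
      rcases h1 with h | h
      · rw [hDdeq] at hDdne
        exact hDdne (by linarith)
      · exact hDdne h
  · -- uniqueness
    intro φ₁ φ₂ dp₁ dm₁ dp₂ dm₂ H₁ H₂
    obtain ⟨P₁, Q₁, hrep₁, hpm₁, hA₁, hdp₁, hdm₁⟩ := main_classify k hk hb hlam hbet H₁
    obtain ⟨P₂, Q₂, hrep₂, hpm₂, hA₂, hdp₂, hdm₂⟩ := main_classify k hk hb hlam hbet H₂
    rw [← hs, ← hl] at hrep₁
    rw [← hs, ← hl] at hpm₁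
    rw [← hs, ← hl] at hrep₂
    rw [← hs, ← hl] at hpm₂
    unfold ProfMatch at hpm₁ hpm₂
    rw [← hX, ← hX'] at hpm₁ hpm₂
    -- coefficient formulas
    have hcoeff : ∀ P Q : ℝ,
        (P * ((k:ℝ)*s) * X + Q * (-((k:ℝ)*s)) * X' = -((k:ℝ)*l) * (P * X + Q * X')) →
        P * (((k:ℝ) * s + (k:ℝ) * l) * X + ((k:ℝ) * s - (k:ℝ) * l) * X')
          = (P + Q) * (((k:ℝ) * s - (k:ℝ) * l) * X') ∧
        Q * (((k:ℝ) * s + (k:ℝ) * l) * X + ((k:ℝ) * s - (k:ℝ) * l) * X')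
          = (P + Q) * (((k:ℝ) * s + (k:ℝ) * l) * X) := by
      intro P Q hm
      constructor
      · linear_combination hm
      · linear_combination -hm
    obtain ⟨hP₁e, hQ₁e⟩ := hcoeff P₁ Q₁ hpm₁
    obtain ⟨hP₂e, hQ₂e⟩ := hcoeff P₂ Q₂ hpm₂
    by_cases hA0 : φ₁ 0 = 0
    · -- φ₁ ≡ 0
      have hsum0 : P₁ + Q₁ = 0 := by rw [← hA₁]; exact hA0
      have hP0 : P₁ = 0 := by
        have h := hP₁e
        rw [hsum0] at h
        simp only [zero_mul] at h
        rcases mul_eq_zero.mp h with h' | h'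
        · exact h'
        · exfalso; rw [h'] at hDd; linarith
      have hQ0 : Q₁ = 0 := by linarith
      refine ⟨0, Or.inr fun y => ?_⟩
      rw [hrep₁ y, hP0, hQ0]
      show psi ((k:ℝ)*s) ((k:ℝ)*l) b 0 0 y = 0 * φ₂ y
      rw [psi, prof]
      split <;> ring
    · obtain ⟨c, hcdef⟩ : ∃ x : ℝ, x = φ₂ 0 / φ₁ 0 := ⟨_, rfl⟩
      have hc : c * φ₁ 0 = φ₂ 0 := by rw [hcdef]; exact div_mul_cancel₀ _ hA0
      refine ⟨c, Or.inl fun y => ?_⟩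
      have hPc : P₂ = c * P₁ := by
        apply mul_right_cancel₀ (ne_of_gt hDd)
        calc P₂ * (((k:ℝ) * s + (k:ℝ) * l) * X + ((k:ℝ) * s - (k:ℝ) * l) * X')
            = (P₂ + Q₂) * (((k:ℝ) * s - (k:ℝ) * l) * X') := hP₂e
          _ = c * ((P₁ + Q₁) * (((k:ℝ) * s - (k:ℝ) * l) * X')) := by
              rw [← hA₁, ← hA₂, ← hc, hA₁]; ring
          _ = c * P₁ *
              (((k:ℝ) * s + (k:ℝ) * l) * X + ((k:ℝ) * s - (k:ℝ) * l) * X') := by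
              rw [← hP₁e]; ring
      have hQc : Q₂ = c * Q₁ := by
        apply mul_right_cancel₀ (ne_of_gt hDd)
        calc Q₂ * (((k:ℝ) * s + (k:ℝ) * l) * X + ((k:ℝ) * s - (k:ℝ) * l) * X')
            = (P₂ + Q₂) * (((k:ℝ) * s + (k:ℝ) * l) * X) := hQ₂e
          _ = c * ((P₁ + Q₁) * (((k:ℝ) * s + (k:ℝ) * l) * X)) := by
              rw [← hA₁, ← hA₂, ← hc, hA₁]; ring
          _ = c * Q₁ *
              (((k:ℝ) * s + (k:ℝ) * l) * X + ((k:ℝ) * s - (k:ℝ) * l) * X') := by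
              rw [← hQ₁e]; ring
      rw [hrep₂ y, hrep₁ y, hPc, hQc, psi_linear]
end

section
/- Let b > 0 and let β < 1 and λ < 1 be real numbers. Define g : (0,∞) → ℝ by g(k) = (1/k) · [√(1−β) sinh(k√(1−β) b) + √(1−λ) cosh(k√(1−β) b)] / [√(1−β) cosh(k√(1−β) b) + √(1−λ) sinh(k√(1−β) b)]. Then g is strictly decreasing on (0,∞). -/
/-!
Substituting `x = k s b` with `s = √(1-β) > 0`, `t = √(1-λ) ≥ 0` turns `g(k)` into
`s b · R(x) / x` with `R(x) = (s sinh x + t cosh x) / (s cosh x + t sinh x)` (`hypRatio s t x`).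
Since `cosh² - sinh² = 1`, `R' = (s² - t²) / (s cosh x + t sinh x)²`, so `(R(x)/x)' < 0` amounts to
`x (s² - t²) < (s sinh x + t cosh x)(s cosh x + t sinh x) = (s² + t²) sinh x cosh x + s t (sinh² x + cosh² x)`,
which holds because `x < sinh x ≤ sinh x cosh x`.
-/

open Real Set

noncomputable def hypRatio (s t x : ℝ) : ℝ :=
  (s * sinh x + t * cosh x) / (s * cosh x + t * sinh x)

section

variable {s t x : ℝ}

lemma hypRatio_denom_pos (hs : 0 < s) (ht : 0 ≤ t) (hx : 0 ≤ x) :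
    0 < s * cosh x + t * sinh x :=
  add_pos_of_pos_of_nonneg (mul_pos hs (cosh_pos x)) (mul_nonneg ht (sinh_nonneg_iff.2 hx))

lemma hasDerivAt_hypRatio (hD : s * cosh x + t * sinh x ≠ 0) :
    HasDerivAt (hypRatio s t) ((s ^ 2 - t ^ 2) / (s * cosh x + t * sinh x) ^ 2) x := by
  have hN : HasDerivAt (fun y => s * sinh y + t * cosh y) (s * cosh x + t * sinh x) x :=
    ((hasDerivAt_sinh x).const_mul s).add ((hasDerivAt_cosh x).const_mul t)
  have hD' : HasDerivAt (fun y => s * cosh y + t * sinh y) (s * sinh x + t * cosh x) x :=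
    ((hasDerivAt_cosh x).const_mul s).add ((hasDerivAt_sinh x).const_mul t)
  refine (hN.div hD' hD).congr_deriv ?_
  congr 1
  linear_combination (s ^ 2 - t ^ 2) * Real.cosh_sq x

lemma mul_sq_sub_sq_lt_hypRatio_num_mul_denom (hs : 0 < s) (ht : 0 ≤ t) (hx : 0 < x) :
    x * (s ^ 2 - t ^ 2) < (s * sinh x + t * cosh x) * (s * cosh x + t * sinh x) := by
  have hsinh : x < sinh x := self_lt_sinh_iff.2 hx
  have hsinh_le : sinh x ≤ sinh x * cosh x :=
    le_mul_of_one_le_right (sinh_pos_iff.2 hx).le (one_le_cosh x)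
  calc x * (s ^ 2 - t ^ 2) ≤ x * (s ^ 2 + t ^ 2) := by nlinarith
    _ < sinh x * cosh x * (s ^ 2 + t ^ 2) := by
        gcongr
        exact hsinh.trans_le hsinh_le
    _ ≤ sinh x * cosh x * (s ^ 2 + t ^ 2) + s * t * (sinh x ^ 2 + cosh x ^ 2) := by
        have : 0 ≤ s * t := mul_nonneg hs.le ht
        nlinarith [sq_nonneg (sinh x), sq_nonneg (cosh x)]
    _ = (s * sinh x + t * cosh x) * (s * cosh x + t * sinh x) := by ring

lemma strictAntiOn_hypRatio_div_self (hs : 0 < s) (ht : 0 ≤ t) :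
    StrictAntiOn (fun x => hypRatio s t x / x) (Ioi 0) := by
  have hderiv : ∀ x ∈ Ioi (0 : ℝ), HasDerivAt (fun x => hypRatio s t x / x)
      (((s ^ 2 - t ^ 2) / (s * cosh x + t * sinh x) ^ 2 * x - hypRatio s t x * 1) / x ^ 2) x :=
    fun x hx => (hasDerivAt_hypRatio (hypRatio_denom_pos hs ht (le_of_lt hx)).ne').div
      (hasDerivAt_id x) (ne_of_gt hx)
  refine strictAntiOn_of_deriv_neg (convex_Ioi 0)
    (fun x hx => (hderiv x hx).continuousAt.continuousWithinAt) fun x hx => ?_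
  rw [interior_Ioi] at hx
  have hD := hypRatio_denom_pos hs ht (le_of_lt hx)
  rw [(hderiv x hx).deriv]
  refine div_neg_of_neg_of_pos ?_ (pow_pos hx 2)
  rw [mul_one, sub_neg, hypRatio, div_mul_eq_mul_div, div_lt_div_iff₀ (pow_pos hD 2) hD]
  calc (s ^ 2 - t ^ 2) * x * (s * cosh x + t * sinh x)
      = x * (s ^ 2 - t ^ 2) * (s * cosh x + t * sinh x) := by ring
    _ < (s * sinh x + t * cosh x) * (s * cosh x + t * sinh x) * (s * cosh x + t * sinh x) :=
        mul_lt_mul_of_pos_right (mul_sq_sub_sq_lt_hypRatio_num_mul_denom hs ht hx) hD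
    _ = (s * sinh x + t * cosh x) * (s * cosh x + t * sinh x) ^ 2 := by ring

end

theorem step_rhs_strictAnti_general (b : ℝ) (hb : 0 < b) (bet lam : ℝ)
    (hbet : bet < 1) (g : ℝ → ℝ)
    (hg : ∀ k : ℝ, 0 < k → g k = (1 / k) *
      ((Real.sqrt (1 - bet) * Real.sinh (k * Real.sqrt (1 - bet) * b) +
        Real.sqrt (1 - lam) * Real.cosh (k * Real.sqrt (1 - bet) * b)) /
       (Real.sqrt (1 - bet) * Real.cosh (k * Real.sqrt (1 - bet) * b) +
        Real.sqrt (1 - lam) * Real.sinh (k * Real.sqrt (1 - bet) * b)))) :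
    StrictAntiOn g (Set.Ioi 0) := by
  set s := √(1 - bet)
  have hs : 0 < s := sqrt_pos.2 (by linarith)
  have hsb : 0 < s * b := mul_pos hs hb
  have hg_eq : ∀ k : ℝ, 0 < k →
      g k = s * b * (hypRatio s √(1 - lam) (k * (s * b)) / (k * (s * b))) := fun k hk => by
    rw [hg k hk, hypRatio]
    field_simp
  intro k (hk : 0 < k) l (hl : 0 < l) hkl
  rw [hg_eq k hk, hg_eq l hl]
  exact mul_lt_mul_of_pos_left (strictAntiOn_hypRatio_div_self hs (sqrt_nonneg _)
    (mul_pos hk hsb) (mul_pos hl hsb) (mul_lt_mul_of_pos_right hkl hsb)) hsb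

/-- The function `g(k) = (1/k)·(√(1-β) sinh(k√(1-β)b) + √(1-λ) cosh(k√(1-β)b)) /
(√(1-β) cosh(k√(1-β)b) + √(1-λ) sinh(k√(1-β)b))` is strictly decreasing on `(0,∞)`. -/
theorem step_rhs_strictAnti (b : ℝ) (hb : 0 < b) (bet lam : ℝ)
    (hbet : bet < 1) (hlam : lam < 1) (g : ℝ → ℝ)
    (hg : ∀ k : ℝ, 0 < k → g k = (1 / k) *
      ((Real.sqrt (1 - bet) * Real.sinh (k * Real.sqrt (1 - bet) * b) +
        Real.sqrt (1 - lam) * Real.cosh (k * Real.sqrt (1 - bet) * b)) /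
       (Real.sqrt (1 - bet) * Real.cosh (k * Real.sqrt (1 - bet) * b) +
        Real.sqrt (1 - lam) * Real.sinh (k * Real.sqrt (1 - bet) * b)))) :
    StrictAntiOn g (Set.Ioi 0) :=
  step_rhs_strictAnti_general b hb bet lam hbet g hg
end

section
/- Let k ≥ 1 be an integer, λ ∈ ℝ, α ≠ 0. Let φ : ℝ → ℝ be continuous and square-integrable, twice continuously differentiable on (−∞,0) and on (0,∞), with φ', φ'' square-integrable on each half-line, with φ(y) → 0 and φ'(y) → 0 as |y| → ∞, with one-sided derivative limits φ'(0+), φ'(0−) at 0, and satisfying the jump condition φ'(0+) − φ'(0−) = −k²αφ(0). Then, writing f(y) = −φ''(y) + k²(1−λ)φ(y) for y ≠ 0, the identity ∫_ℝ f² dy = ∫_{−∞}^0 (φ'')² dy + ∫_0^∞ (φ'')² dy + 2k²(1−λ) ∫_ℝ (φ')² dy + k⁴(1−λ)² ∫_ℝ φ² dy − (2/α)(1−λ)(φ'(0+) − φ'(0−))² holds. -/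
open Real MeasureTheory Set Filter

private lemma mul_integrableOn_of_sq {f g : ℝ → ℝ} {s : Set ℝ}
    (hf : Measurable f) (hg : Measurable g)
    (hf2 : IntegrableOn (fun y => (f y) ^ 2) s) (hg2 : IntegrableOn (fun y => (g y) ^ 2) s) :
    IntegrableOn (fun y => f y * g y) s := by
  have hint : IntegrableOn (fun y => ((f y) ^ 2 + (g y) ^ 2) / 2) s := (hf2.add hg2).div_const 2
  refine hint.mono' ((hf.mul hg).aestronglyMeasurable) ?_
  filter_upwards with y
  rw [Real.norm_eq_abs]
  exact abs_le.mpr ⟨by nlinarith [sq_nonneg (f y + g y)], by nlinarith [sq_nonneg (f y - g y)]⟩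

private lemma split_int {h : ℝ → ℝ} (h1 : IntegrableOn h (Iio 0)) (h2 : IntegrableOn h (Ioi 0)) :
    ∫ y, h y = (∫ y in Iio (0:ℝ), h y) + ∫ y in Ioi (0:ℝ), h y := by
  have hres : (volume : Measure ℝ).restrict (Ioi 0) = volume.restrict (Ici 0) :=
    Measure.restrict_congr_set Ioi_ae_eq_Ici
  have h2' : IntegrableOn h (Ici 0) := by rwa [IntegrableOn, ← hres]
  rw [← intervalIntegral.integral_Iio_add_Ici h1 h2']
  congr 1
  exact (setIntegral_congr_set Ioi_ae_eq_Ici).symm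

/-- Integration-by-parts identity for `‖L_λ^k φ‖²_{L²(ℝ)}` in case (P1):
for `φ` in the domain of `L_λ^k = -d²/dy² + k²(1-λ-αδ₀)` (encoded by the jump condition
`φ'(0⁺) - φ'(0⁻) = -k²αφ(0)`) and `f = -φ'' + k²(1-λ)φ` away from `0`,
`∫_ℝ f² = ∫_{-∞}^0 (φ'')² + ∫_0^∞ (φ'')² + 2k²(1-λ)∫(φ')² + k⁴(1-λ)²∫φ²
 - (2/α)(1-λ)(φ'(0⁺)-φ'(0⁻))²`. -/
theorem L2_norm_identity_p1 (k : ℕ) (hk : 1 ≤ k) (lam α : ℝ) (hα : α ≠ 0)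
    (φ : ℝ → ℝ) (dp dm : ℝ)
    (hcont : Continuous φ)
    (hsq : Integrable (fun y => (φ y) ^ 2))
    (hC2pos : ContDiffOn ℝ 2 φ (Ioi 0))
    (hC2neg : ContDiffOn ℝ 2 φ (Iio 0))
    (hd1p : IntegrableOn (fun y => (deriv φ y) ^ 2) (Ioi 0))
    (hd1m : IntegrableOn (fun y => (deriv φ y) ^ 2) (Iio 0))
    (hd2p : IntegrableOn (fun y => (deriv (deriv φ) y) ^ 2) (Ioi 0))
    (hd2m : IntegrableOn (fun y => (deriv (deriv φ) y) ^ 2) (Iio 0))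
    (hdec1 : Tendsto φ atTop (nhds 0)) (hdec2 : Tendsto φ atBot (nhds 0))
    (hdec3 : Tendsto (deriv φ) atTop (nhds 0)) (hdec4 : Tendsto (deriv φ) atBot (nhds 0))
    (hdp : Tendsto (deriv φ) (nhdsWithin 0 (Ioi 0)) (nhds dp))
    (hdm : Tendsto (deriv φ) (nhdsWithin 0 (Iio 0)) (nhds dm))
    (hjump : dp - dm = -(k : ℝ) ^ 2 * α * φ 0) :
    (∫ y : ℝ, (-(deriv (deriv φ) y) + (k : ℝ) ^ 2 * (1 - lam) * φ y) ^ 2) =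
      (∫ y in Iio (0 : ℝ), (deriv (deriv φ) y) ^ 2) +
      (∫ y in Ioi (0 : ℝ), (deriv (deriv φ) y) ^ 2) +
      2 * (k : ℝ) ^ 2 * (1 - lam) * (∫ y : ℝ, (deriv φ y) ^ 2) +
      (k : ℝ) ^ 4 * (1 - lam) ^ 2 * (∫ y : ℝ, (φ y) ^ 2) -
      (2 / α) * (1 - lam) * (dp - dm) ^ 2 := by
  set c : ℝ := (k : ℝ) ^ 2 * (1 - lam) with hc
  have mφ : Measurable φ := hcont.measurable
  have m2 : Measurable (deriv (deriv φ)) := measurable_deriv _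
  -- derivatives on the open half-lines
  have hC1pos : ContDiffOn ℝ 1 (deriv φ) (Ioi 0) :=
    hC2pos.deriv_of_isOpen isOpen_Ioi (by norm_num)
  have hC1neg : ContDiffOn ℝ 1 (deriv φ) (Iio 0) :=
    hC2neg.deriv_of_isOpen isOpen_Iio (by norm_num)
  have hDp : ∀ x ∈ Ioi (0:ℝ), HasDerivAt φ (deriv φ x) x := fun x hx =>
    ((hC2pos.differentiableOn two_ne_zero).differentiableAt (isOpen_Ioi.mem_nhds hx)).hasDerivAt
  have hDm : ∀ x ∈ Iio (0:ℝ), HasDerivAt φ (deriv φ x) x := fun x hx =>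
    ((hC2neg.differentiableOn two_ne_zero).differentiableAt (isOpen_Iio.mem_nhds hx)).hasDerivAt
  have hD2p : ∀ x ∈ Ioi (0:ℝ), HasDerivAt (deriv φ) (deriv (deriv φ) x) x := fun x hx =>
    ((hC1pos.differentiableOn one_ne_zero).differentiableAt (isOpen_Ioi.mem_nhds hx)).hasDerivAt
  have hD2m : ∀ x ∈ Iio (0:ℝ), HasDerivAt (deriv φ) (deriv (deriv φ) x) x := fun x hx =>
    ((hC1neg.differentiableOn one_ne_zero).differentiableAt (isOpen_Iio.mem_nhds hx)).hasDerivAt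
  -- product integrability
  have hpp : IntegrableOn (fun y => φ y * deriv (deriv φ) y) (Ioi 0) :=
    mul_integrableOn_of_sq mφ m2 hsq.integrableOn hd2p
  have hpm : IntegrableOn (fun y => φ y * deriv (deriv φ) y) (Iio 0) :=
    mul_integrableOn_of_sq mφ m2 hsq.integrableOn hd2m
  have hGp : IntegrableOn (fun y => (deriv φ y) ^ 2 + φ y * deriv (deriv φ) y) (Ioi 0) :=
    hd1p.add hpp
  have hGm : IntegrableOn (fun y => (deriv φ y) ^ 2 + φ y * deriv (deriv φ) y) (Iio 0) :=
    hd1m.add hpm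
  -- FTC on (0, ∞)
  have hibp_p : (∫ y in Ioi (0:ℝ), ((deriv φ y) ^ 2 + φ y * deriv (deriv φ) y)) = 0 - φ 0 * dp := by
    set Fp : ℝ → ℝ := fun y => if y = 0 then φ 0 * dp else φ y * deriv φ y with hFp
    have hFp0 : Fp 0 = φ 0 * dp := if_pos rfl
    have hFpeq : ∀ y : ℝ, y ≠ 0 → φ y * deriv φ y = Fp y := fun y hy => (if_neg hy).symm
    have hcontp : ContinuousWithinAt Fp (Ici 0) 0 := by
      rw [← continuousWithinAt_Ioi_iff_Ici]
      have ht : Tendsto (fun y => φ y * deriv φ y) (nhdsWithin 0 (Ioi 0)) (nhds (φ 0 * dp)) :=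
        ((hcont.tendsto 0).mono_left nhdsWithin_le_nhds).mul hdp
      have : Tendsto Fp (nhdsWithin 0 (Ioi 0)) (nhds (φ 0 * dp)) :=
        ht.congr' (eventually_nhdsWithin_of_forall fun y hy => hFpeq y (ne_of_gt hy))
      rwa [ContinuousWithinAt, hFp0]
    have hderivp : ∀ x ∈ Ioi (0:ℝ),
        HasDerivAt Fp ((deriv φ x) ^ 2 + φ x * deriv (deriv φ) x) x := by
      intro x hx
      have h1 : HasDerivAt (fun y => φ y * deriv φ y)
          (deriv φ x * deriv φ x + φ x * deriv (deriv φ) x) x := (hDp x hx).mul (hD2p x hx)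
      have h1' : HasDerivAt (fun y => φ y * deriv φ y)
          ((deriv φ x) ^ 2 + φ x * deriv (deriv φ) x) x := by
        convert h1 using 1; ring
      refine h1'.congr_of_eventuallyEq ?_
      filter_upwards [isOpen_Ioi.eventually_mem hx] with y hy
      exact (hFpeq y (ne_of_gt hy)).symm
    have htopp : Tendsto Fp atTop (nhds 0) := by
      have ht : Tendsto (fun y => φ y * deriv φ y) atTop (nhds 0) := by
        simpa using hdec1.mul hdec3
      refine ht.congr' ?_
      filter_upwards [Ioi_mem_atTop (0:ℝ)] with y hy
      exact hFpeq y (ne_of_gt hy)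
    have := integral_Ioi_of_hasDerivAt_of_tendsto hcontp hderivp hGp htopp
    rwa [hFp0] at this
  -- FTC on (-∞, 0)
  have hibp_m : (∫ y in Iio (0:ℝ), ((deriv φ y) ^ 2 + φ y * deriv (deriv φ) y)) = φ 0 * dm - 0 := by
    set Fm : ℝ → ℝ := fun y => if y = 0 then φ 0 * dm else φ y * deriv φ y with hFm
    have hFm0 : Fm 0 = φ 0 * dm := if_pos rfl
    have hFmeq : ∀ y : ℝ, y ≠ 0 → φ y * deriv φ y = Fm y := fun y hy => (if_neg hy).symm
    have hcontm : ContinuousWithinAt Fm (Iic 0) 0 := by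
      rw [← continuousWithinAt_Iio_iff_Iic]
      have ht : Tendsto (fun y => φ y * deriv φ y) (nhdsWithin 0 (Iio 0)) (nhds (φ 0 * dm)) :=
        ((hcont.tendsto 0).mono_left nhdsWithin_le_nhds).mul hdm
      have : Tendsto Fm (nhdsWithin 0 (Iio 0)) (nhds (φ 0 * dm)) :=
        ht.congr' (eventually_nhdsWithin_of_forall fun y hy => hFmeq y (ne_of_lt hy))
      rwa [ContinuousWithinAt, hFm0]
    have hderivm : ∀ x ∈ Iio (0:ℝ),
        HasDerivAt Fm ((deriv φ x) ^ 2 + φ x * deriv (deriv φ) x) x := by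
      intro x hx
      have h1 : HasDerivAt (fun y => φ y * deriv φ y)
          (deriv φ x * deriv φ x + φ x * deriv (deriv φ) x) x := (hDm x hx).mul (hD2m x hx)
      have h1' : HasDerivAt (fun y => φ y * deriv φ y)
          ((deriv φ x) ^ 2 + φ x * deriv (deriv φ) x) x := by
        convert h1 using 1; ring
      refine h1'.congr_of_eventuallyEq ?_
      filter_upwards [isOpen_Iio.eventually_mem hx] with y hy
      exact (hFmeq y (ne_of_lt hy)).symm
    have hbotm : Tendsto Fm atBot (nhds 0) := by
      have ht : Tendsto (fun y => φ y * deriv φ y) atBot (nhds 0) := by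
        simpa using hdec2.mul hdec4
      refine ht.congr' ?_
      filter_upwards [Iio_mem_atBot (0:ℝ)] with y hy
      exact hFmeq y (ne_of_lt hy)
    have hGm' : IntegrableOn (fun y => (deriv φ y) ^ 2 + φ y * deriv (deriv φ) y) (Iic 0) := by
      rwa [IntegrableOn, ← Measure.restrict_congr_set Iio_ae_eq_Iic]
    have := integral_Iic_of_hasDerivAt_of_tendsto hcontm hderivm hGm' hbotm
    rw [hFm0] at this
    rwa [setIntegral_congr_set Iio_ae_eq_Iic]
  -- split the improper integrals of the two FTC identities
  have hEp : (∫ y in Ioi (0:ℝ), φ y * deriv (deriv φ) y)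
      = (0 - φ 0 * dp) - ∫ y in Ioi (0:ℝ), (deriv φ y) ^ 2 := by
    rw [← hibp_p, integral_add hd1p hpp]; ring
  have hEm : (∫ y in Iio (0:ℝ), φ y * deriv (deriv φ) y)
      = (φ 0 * dm - 0) - ∫ y in Iio (0:ℝ), (deriv φ y) ^ 2 := by
    rw [← hibp_m, integral_add hd1m hpm]; ring
  -- expansion of f² on each half-line
  have hexp : (fun y => (-(deriv (deriv φ) y) + c * φ y) ^ 2)
      = fun y => (deriv (deriv φ) y) ^ 2 +
          ((-2*c) * (φ y * deriv (deriv φ) y) + c^2 * (φ y) ^ 2) := by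
    funext y; ring
  have hIfp : IntegrableOn (fun y => (-(deriv (deriv φ) y) + c * φ y) ^ 2) (Ioi 0) := by
    rw [hexp]
    exact hd2p.add ((hpp.const_mul (-2*c)).add (hsq.integrableOn.const_mul (c^2)))
  have hIfm : IntegrableOn (fun y => (-(deriv (deriv φ) y) + c * φ y) ^ 2) (Iio 0) := by
    rw [hexp]
    exact hd2m.add ((hpm.const_mul (-2*c)).add (hsq.integrableOn.const_mul (c^2)))
  have hsplitp : (∫ y in Ioi (0:ℝ), (-(deriv (deriv φ) y) + c * φ y) ^ 2)
      = (∫ y in Ioi (0:ℝ), (deriv (deriv φ) y) ^ 2)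
        + ((-2*c) * (∫ y in Ioi (0:ℝ), φ y * deriv (deriv φ) y)
          + c^2 * ∫ y in Ioi (0:ℝ), (φ y) ^ 2) := by
    have hin1 : Integrable (fun y => (-2*c) * (φ y * deriv (deriv φ) y)) (volume.restrict (Ioi 0)) :=
      hpp.const_mul (-2*c)
    have hin2 : Integrable (fun y => c^2 * (φ y) ^ 2) (volume.restrict (Ioi 0)) :=
      hsq.integrableOn.const_mul (c^2)
    have hin12 : Integrable (fun y => (-2*c) * (φ y * deriv (deriv φ) y) + c^2 * (φ y) ^ 2)
        (volume.restrict (Ioi 0)) := hin1.add hin2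
    rw [show (∫ y in Ioi (0:ℝ), (-(deriv (deriv φ) y) + c * φ y) ^ 2)
        = ∫ y in Ioi (0:ℝ), ((deriv (deriv φ) y) ^ 2 +
            ((-2*c) * (φ y * deriv (deriv φ) y) + c^2 * (φ y) ^ 2)) from by rw [← hexp]]
    rw [integral_add hd2p hin12, integral_add hin1 hin2,
      MeasureTheory.integral_const_mul, MeasureTheory.integral_const_mul]
  have hsplitm : (∫ y in Iio (0:ℝ), (-(deriv (deriv φ) y) + c * φ y) ^ 2)
      = (∫ y in Iio (0:ℝ), (deriv (deriv φ) y) ^ 2)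
        + ((-2*c) * (∫ y in Iio (0:ℝ), φ y * deriv (deriv φ) y)
          + c^2 * ∫ y in Iio (0:ℝ), (φ y) ^ 2) := by
    have hin1 : Integrable (fun y => (-2*c) * (φ y * deriv (deriv φ) y)) (volume.restrict (Iio 0)) :=
      hpm.const_mul (-2*c)
    have hin2 : Integrable (fun y => c^2 * (φ y) ^ 2) (volume.restrict (Iio 0)) :=
      hsq.integrableOn.const_mul (c^2)
    have hin12 : Integrable (fun y => (-2*c) * (φ y * deriv (deriv φ) y) + c^2 * (φ y) ^ 2)
        (volume.restrict (Iio 0)) := hin1.add hin2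
    rw [show (∫ y in Iio (0:ℝ), (-(deriv (deriv φ) y) + c * φ y) ^ 2)
        = ∫ y in Iio (0:ℝ), ((deriv (deriv φ) y) ^ 2 +
            ((-2*c) * (φ y * deriv (deriv φ) y) + c^2 * (φ y) ^ 2)) from by rw [← hexp]]
    rw [integral_add hd2m hin12, integral_add hin1 hin2,
      MeasureTheory.integral_const_mul, MeasureTheory.integral_const_mul]
  -- split the full-line integrals
  have hT : (∫ y : ℝ, (-(deriv (deriv φ) y) + c * φ y) ^ 2)
      = (∫ y in Iio (0:ℝ), (-(deriv (deriv φ) y) + c * φ y) ^ 2)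
        + ∫ y in Ioi (0:ℝ), (-(deriv (deriv φ) y) + c * φ y) ^ 2 :=
    split_int hIfm hIfp
  have hT1 : (∫ y : ℝ, (deriv φ y) ^ 2)
      = (∫ y in Iio (0:ℝ), (deriv φ y) ^ 2) + ∫ y in Ioi (0:ℝ), (deriv φ y) ^ 2 :=
    split_int hd1m hd1p
  have hT2 : (∫ y : ℝ, (φ y) ^ 2)
      = (∫ y in Iio (0:ℝ), (φ y) ^ 2) + ∫ y in Ioi (0:ℝ), (φ y) ^ 2 :=
    split_int hsq.integrableOn hsq.integrableOn
  -- algebraic jump identity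
  have hk0 : (k:ℝ) ≠ 0 := Nat.cast_ne_zero.mpr (by omega)
  have key : 2 * c * (φ 0) * (dp - dm) = -((2 / α) * (1 - lam) * (dp - dm) ^ 2) := by
    rw [hc]; field_simp
    linear_combination ((1 - lam) * (dp - dm)) * hjump
  -- combine
  rw [hT, hsplitp, hsplitm, hEp, hEm, hT1, hT2]
  linear_combination key
end

section
/- Let k* ≥ 1 be an integer, λ* < 1, and set α = 2√(1−λ*)/k*. Let k ≥ 1 be an integer and λ < 1. Let φ : ℝ → ℝ be continuous and square-integrable, twice continuously differentiable on (−∞,0) and on (0,∞), with φ', φ'' square-integrable on each half-line, with φ(y) → 0 and φ'(y) → 0 as |y| → ∞, with one-sided derivative limits φ'(0±) at 0, and satisfying the jump condition φ'(0+) − φ'(0−) = −k²αφ(0). Then, writing f(y) = −φ''(y) + k²(1−λ)φ(y) for y ≠ 0, one has ∫_ℝ f² dy ≥ (1/2)( ∫_{−∞}^0 (φ'')² dy + ∫_0^∞ (φ'')² dy ) + 2(1−λ)( k² − 4k*² − 16(λ*−λ)/α² ) ∫_ℝ (φ')² dy + ( k*²α²/4 + λ* − λ )² k⁴ ∫_ℝ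 φ² dy. -/
open Real MeasureTheory Set Filter

private lemma ibp_Ioi {u u' : ℝ → ℝ} {L0 Linf : ℝ}
    (hderiv : ∀ x ∈ Ioi (0:ℝ), HasDerivAt u (u' x) x)
    (hint : IntegrableOn u' (Ioi (0:ℝ)))
    (h0 : Tendsto u (nhdsWithin 0 (Ioi 0)) (nhds L0))
    (htop : Tendsto u atTop (nhds Linf)) :
    ∫ x in Ioi (0:ℝ), u' x = Linf - L0 := by
  set v : ℝ → ℝ := Function.update u 0 L0 with hv
  have hvu : ∀ x : ℝ, x ≠ 0 → v x = u x := fun x hx => Function.update_of_ne hx _ _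
  have hderiv' : ∀ x ∈ Ioi (0:ℝ), HasDerivAt v (u' x) x := by
    intro x hx
    refine (hderiv x hx).congr_of_eventuallyEq ?_
    filter_upwards [eventually_ne_nhds (ne_of_gt hx)] with y hy
    exact hvu y hy
  have h0' : Tendsto v (nhdsWithin 0 (Ioi 0)) (nhds L0) := by
    refine h0.congr' ?_
    filter_upwards [self_mem_nhdsWithin] with y hy
    exact (hvu y (ne_of_gt hy)).symm
  have hcw : ContinuousWithinAt v (Ici (0:ℝ)) 0 := by
    rw [← Set.Ioi_insert, continuousWithinAt_insert_self, ContinuousWithinAt]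
    simpa [hv, Function.update_self] using h0'
  have htop' : Tendsto v atTop (nhds Linf) := by
    refine htop.congr' ?_
    filter_upwards [eventually_ne_atTop (0:ℝ)] with y hy
    exact (hvu y hy).symm
  have := integral_Ioi_of_hasDerivAt_of_tendsto hcw hderiv' hint htop'
  simpa [hv, Function.update_self] using this

private lemma ibp_Iio {u u' : ℝ → ℝ} {L0 Linf : ℝ}
    (hderiv : ∀ x ∈ Iio (0:ℝ), HasDerivAt u (u' x) x)
    (hint : IntegrableOn u' (Iio (0:ℝ)))
    (h0 : Tendsto u (nhdsWithin 0 (Iio 0)) (nhds L0))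
    (hbot : Tendsto u atBot (nhds Linf)) :
    ∫ x in Iio (0:ℝ), u' x = L0 - Linf := by
  set v : ℝ → ℝ := Function.update u 0 L0 with hv
  have hvu : ∀ x : ℝ, x ≠ 0 → v x = u x := fun x hx => Function.update_of_ne hx _ _
  have hderiv' : ∀ x ∈ Iio (0:ℝ), HasDerivAt v (u' x) x := by
    intro x hx
    refine (hderiv x hx).congr_of_eventuallyEq ?_
    filter_upwards [eventually_ne_nhds (ne_of_lt hx)] with y hy
    exact hvu y hy
  have h0' : Tendsto v (nhdsWithin 0 (Iio 0)) (nhds L0) := by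
    refine h0.congr' ?_
    filter_upwards [self_mem_nhdsWithin] with y hy
    exact (hvu y (ne_of_lt hy)).symm
  have hcw : ContinuousWithinAt v (Iic (0:ℝ)) 0 := by
    rw [← Set.Iio_insert, continuousWithinAt_insert_self, ContinuousWithinAt]
    simpa [hv, Function.update_self] using h0'
  have hbot' : Tendsto v atBot (nhds Linf) := by
    refine hbot.congr' ?_
    filter_upwards [eventually_ne_atBot (0:ℝ)] with y hy
    exact (hvu y hy).symm
  have hint' : IntegrableOn u' (Iic (0:ℝ)) := by
    rw [IntegrableOn, ← Measure.restrict_congr_set (Iio_ae_eq_Iic (a := (0:ℝ)))]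
    exact hint
  have h := integral_Iic_of_hasDerivAt_of_tendsto hcw hderiv' hint' hbot'
  rw [← setIntegral_congr_set (Iio_ae_eq_Iic (a := (0:ℝ)))] at h
  simpa [hv, Function.update_self] using h

set_option maxHeartbeats 1000000 in
/-- Lower bound for `‖L_λ^k φ‖²_{L²(ℝ)}` in case (P1) with `α = 2√(1-λ*)/k*`:
for `φ` in the domain of `L_λ^k = -d²/dy² + k²(1-λ-αδ₀)` and `f = -φ'' + k²(1-λ)φ`,
`∫_ℝ f² ≥ (1/2)(∫_{-∞}^0 (φ'')² + ∫_0^∞ (φ'')²)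
 + 2(1-λ)(k² - 4k*² - 16(λ*-λ)/α²)∫(φ')² + (k*²α²/4 + λ* - λ)² k⁴ ∫φ²`. -/
theorem L2_norm_lower_bound_p1 (kstar : ℕ) (hkstar : 1 ≤ kstar) (lamstar : ℝ)
    (hlamstar : lamstar < 1) (α : ℝ) (hα : α = 2 * Real.sqrt (1 - lamstar) / (kstar : ℝ))
    (k : ℕ) (hk : 1 ≤ k) (lam : ℝ) (hlam : lam < 1)
    (φ : ℝ → ℝ) (dp dm : ℝ)
    (hcont : Continuous φ)
    (hsq : Integrable (fun y => (φ y) ^ 2))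
    (hC2pos : ContDiffOn ℝ 2 φ (Ioi 0))
    (hC2neg : ContDiffOn ℝ 2 φ (Iio 0))
    (hd1p : IntegrableOn (fun y => (deriv φ y) ^ 2) (Ioi 0))
    (hd1m : IntegrableOn (fun y => (deriv φ y) ^ 2) (Iio 0))
    (hd2p : IntegrableOn (fun y => (deriv (deriv φ) y) ^ 2) (Ioi 0))
    (hd2m : IntegrableOn (fun y => (deriv (deriv φ) y) ^ 2) (Iio 0))
    (hdec1 : Tendsto φ atTop (nhds 0)) (hdec2 : Tendsto φ atBot (nhds 0))
    (hdec3 : Tendsto (deriv φ) atTop (nhds 0)) (hdec4 : Tendsto (deriv φ) atBot (nhds 0))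
    (hdp : Tendsto (deriv φ) (nhdsWithin 0 (Ioi 0)) (nhds dp))
    (hdm : Tendsto (deriv φ) (nhdsWithin 0 (Iio 0)) (nhds dm))
    (hjump : dp - dm = -(k : ℝ) ^ 2 * α * φ 0) :
    (∫ y : ℝ, (-(deriv (deriv φ) y) + (k : ℝ) ^ 2 * (1 - lam) * φ y) ^ 2) ≥
      (1 / 2) * ((∫ y in Iio (0 : ℝ), (deriv (deriv φ) y) ^ 2) +
        (∫ y in Ioi (0 : ℝ), (deriv (deriv φ) y) ^ 2)) +
      2 * (1 - lam) * ((k : ℝ) ^ 2 - 4 * (kstar : ℝ) ^ 2 - 16 * (lamstar - lam) / α ^ 2) *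
        (∫ y : ℝ, (deriv φ y) ^ 2) +
      ((kstar : ℝ) ^ 2 * α ^ 2 / 4 + lamstar - lam) ^ 2 * (k : ℝ) ^ 4 *
        (∫ y : ℝ, (φ y) ^ 2) := by
  -- basic positivity facts
  have h1ms : (0:ℝ) < 1 - lamstar := by linarith only [hlamstar]
  have hβ : (0:ℝ) < 1 - lam := by linarith only [hlam]
  have hkstarpos : (0:ℝ) < (kstar:ℝ) := by exact_mod_cast hkstar
  have hkpos : (0:ℝ) < (k:ℝ) := by exact_mod_cast hk
  have hαpos : 0 < α := by
    rw [hα]; positivity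
  have hα2 : α ^ 2 = 4 * (1 - lamstar) / (kstar:ℝ) ^ 2 := by
    rw [hα, div_pow, mul_pow, Real.sq_sqrt h1ms.le]; ring
  set c : ℝ := (k:ℝ) ^ 2 * (1 - lam) with hc
  set ε : ℝ := 8 * (1 - lam) / α with hε
  have hεpos : 0 < ε := by rw [hε]; positivity
  -- measurability
  have mφ : Measurable φ := hcont.measurable
  have mφ' : Measurable (deriv φ) := measurable_deriv φ
  have mφ'' : Measurable (deriv (deriv φ)) := measurable_deriv (deriv φ)
  -- integrability of products
  have prodInt : ∀ (g h : ℝ → ℝ) (s : Set ℝ), Measurable g → Measurable h →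
      IntegrableOn (fun y => g y ^ 2) s → IntegrableOn (fun y => h y ^ 2) s →
      IntegrableOn (fun y => g y * h y) s := by
    intro g h s mg mh hg hh
    refine Integrable.mono' ((hg.add hh).const_mul (1/2)) ((mg.mul mh).aestronglyMeasurable) ?_
    refine Filter.Eventually.of_forall (fun y => ?_)
    rw [Real.norm_eq_abs, abs_mul]
    simp only [Pi.add_apply]
    nlinarith [sq_nonneg (|g y| - |h y|), sq_abs (g y), sq_abs (h y)]
  have hφφ''p : IntegrableOn (fun y => φ y * deriv (deriv φ) y) (Ioi 0) :=
    prodInt _ _ _ mφ mφ'' hsq.integrableOn hd2p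
  have hφφ''m : IntegrableOn (fun y => φ y * deriv (deriv φ) y) (Iio 0) :=
    prodInt _ _ _ mφ mφ'' hsq.integrableOn hd2m
  have hφ'φ''p : IntegrableOn (fun y => deriv φ y * deriv (deriv φ) y) (Ioi 0) :=
    prodInt _ _ _ mφ' mφ'' hd1p hd2p
  have hφ'φ''m : IntegrableOn (fun y => deriv φ y * deriv (deriv φ) y) (Iio 0) :=
    prodInt _ _ _ mφ' mφ'' hd1m hd2m
  -- pointwise derivatives on the half-lines
  have hdφp : ∀ x ∈ Ioi (0:ℝ), HasDerivAt φ (deriv φ x) x := by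
    intro x hx
    exact ((hC2pos.differentiableOn (by norm_num)).differentiableAt
      (isOpen_Ioi.mem_nhds hx)).hasDerivAt
  have hdφm : ∀ x ∈ Iio (0:ℝ), HasDerivAt φ (deriv φ x) x := by
    intro x hx
    exact ((hC2neg.differentiableOn (by norm_num)).differentiableAt
      (isOpen_Iio.mem_nhds hx)).hasDerivAt
  have hdφ'p : ∀ x ∈ Ioi (0:ℝ), HasDerivAt (deriv φ) (deriv (deriv φ) x) x := by
    intro x hx
    exact (((hC2pos.deriv_of_isOpen (m := 1) isOpen_Ioi (by norm_num)).differentiableOn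
      one_ne_zero).differentiableAt (isOpen_Ioi.mem_nhds hx)).hasDerivAt
  have hdφ'm : ∀ x ∈ Iio (0:ℝ), HasDerivAt (deriv φ) (deriv (deriv φ) x) x := by
    intro x hx
    exact (((hC2neg.deriv_of_isOpen (m := 1) isOpen_Iio (by norm_num)).differentiableOn
      one_ne_zero).differentiableAt (isOpen_Iio.mem_nhds hx)).hasDerivAt
  -- limits of φ at 0 from both sides
  have hφ0p : Tendsto φ (nhdsWithin 0 (Ioi 0)) (nhds (φ 0)) :=
    (hcont.tendsto 0).mono_left nhdsWithin_le_nhds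
  have hφ0m : Tendsto φ (nhdsWithin 0 (Iio 0)) (nhds (φ 0)) :=
    (hcont.tendsto 0).mono_left nhdsWithin_le_nhds
  -- integration by parts identities
  have E1 : (∫ x in Ioi (0:ℝ), ((deriv φ x) ^ 2 + φ x * deriv (deriv φ) x)) = 0 - φ 0 * dp := by
    refine ibp_Ioi (u := fun y => φ y * deriv φ y) ?_ (hd1p.add hφφ''p) (hφ0p.mul hdp)
      (by simpa using hdec1.mul hdec3)
    intro x hx
    have := (hdφp x hx).mul (hdφ'p x hx)
    exact this.congr_deriv (by ring)
  have E2 : (∫ x in Iio (0:ℝ), ((deriv φ x) ^ 2 + φ x * deriv (deriv φ) x)) = φ 0 * dm - 0 := by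
    refine ibp_Iio (u := fun y => φ y * deriv φ y) ?_ (hd1m.add hφφ''m) (hφ0m.mul hdm)
      (by simpa using hdec2.mul hdec4)
    intro x hx
    have := (hdφm x hx).mul (hdφ'm x hx)
    exact this.congr_deriv (by ring)
  have E3 : (∫ x in Ioi (0:ℝ), (2 * (deriv φ x * deriv (deriv φ) x))) = 0 - dp ^ 2 := by
    refine ibp_Ioi (u := fun y => (deriv φ y) ^ 2) ?_ (hφ'φ''p.const_mul 2)
      (by simpa using hdp.pow 2) (by simpa using hdec3.pow 2)
    intro x hx
    have := (hdφ'p x hx).pow 2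
    exact this.congr_deriv (by ring)
  have E4 : (∫ x in Iio (0:ℝ), (2 * (deriv φ x * deriv (deriv φ) x))) = dm ^ 2 - 0 := by
    refine ibp_Iio (u := fun y => (deriv φ y) ^ 2) ?_ (hφ'φ''m.const_mul 2)
      (by simpa using hdm.pow 2) (by simpa using hdec4.pow 2)
    intro x hx
    have := (hdφ'm x hx).pow 2
    exact this.congr_deriv (by ring)
  -- abbreviations
  set Ap : ℝ := ∫ y in Ioi (0:ℝ), (deriv φ y) ^ 2 with hAp
  set Am : ℝ := ∫ y in Iio (0:ℝ), (deriv φ y) ^ 2 with hAm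
  set Bp : ℝ := ∫ y in Ioi (0:ℝ), (deriv (deriv φ) y) ^ 2 with hBp
  set Bm : ℝ := ∫ y in Iio (0:ℝ), (deriv (deriv φ) y) ^ 2 with hBm
  set Pp : ℝ := ∫ y in Ioi (0:ℝ), (φ y) ^ 2 with hPp
  set Pm : ℝ := ∫ y in Iio (0:ℝ), (φ y) ^ 2 with hPm
  set Qp : ℝ := ∫ y in Ioi (0:ℝ), φ y * deriv (deriv φ) y with hQp
  set Qm : ℝ := ∫ y in Iio (0:ℝ), φ y * deriv (deriv φ) y with hQm
  have EQp : Ap + Qp = 0 - φ 0 * dp := by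
    rw [hAp, hQp, ← integral_add hd1p hφφ''p]; exact E1
  have EQm : Am + Qm = φ 0 * dm - 0 := by
    rw [hAm, hQm, ← integral_add hd1m hφφ''m]; exact E2
  -- bounds on dp², dm²
  have hbp : dp ^ 2 ≤ ε * Ap + (1/ε) * Bp := by
    have h1 : (∫ x in Ioi (0:ℝ), (-(2 * (deriv φ x * deriv (deriv φ) x)))) ≤
        ∫ x in Ioi (0:ℝ), (ε * (deriv φ x) ^ 2 + (1/ε) * (deriv (deriv φ) x) ^ 2) := by
      refine integral_mono ((hφ'φ''p.const_mul 2).neg) ((hd1p.const_mul ε).add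
        (hd2p.const_mul (1/ε))) ?_
      intro x
      simp only [Pi.add_apply]
      rw [← sub_nonneg]
      have h2 : ε * (deriv φ x) ^ 2 + 1 / ε * (deriv (deriv φ) x) ^ 2 -
          -(2 * (deriv φ x * deriv (deriv φ) x)) =
          (1 / ε) * (ε * deriv φ x + deriv (deriv φ) x) ^ 2 := by
        field_simp
        ring
      rw [h2]
      positivity
    rw [integral_neg, E3, integral_add (hd1p.const_mul ε) (hd2p.const_mul (1/ε)),
      integral_const_mul, integral_const_mul] at h1
    rw [hAp, hBp]
    linarith only [h1]
  have hbm : dm ^ 2 ≤ ε * Am + (1/ε) * Bm := by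
    have h1 : (∫ x in Iio (0:ℝ), (2 * (deriv φ x * deriv (deriv φ) x))) ≤
        ∫ x in Iio (0:ℝ), (ε * (deriv φ x) ^ 2 + (1/ε) * (deriv (deriv φ) x) ^ 2) := by
      refine integral_mono (hφ'φ''m.const_mul 2) ((hd1m.const_mul ε).add
        (hd2m.const_mul (1/ε))) ?_
      intro x
      simp only [Pi.add_apply]
      rw [← sub_nonneg]
      have h2 : ε * (deriv φ x) ^ 2 + 1 / ε * (deriv (deriv φ) x) ^ 2 -
          2 * (deriv φ x * deriv (deriv φ) x) =
          (1 / ε) * (ε * deriv φ x - deriv (deriv φ) x) ^ 2 := by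
        field_simp
        ring
      rw [h2]
      positivity
    rw [E4, integral_add (hd1m.const_mul ε) (hd2m.const_mul (1/ε)),
      integral_const_mul, integral_const_mul] at h1
    rw [hAm, hBm]
    linarith only [h1]
  -- splitting integrals over ℝ
  have hcompl : (({0} : Set ℝ)ᶜ : Set ℝ) =ᵐ[volume] (univ : Set ℝ) := by
    rw [ae_eq_univ, compl_compl]
    exact measure_singleton 0
  have splitInt : ∀ g : ℝ → ℝ, IntegrableOn g (Iio 0) → IntegrableOn g (Ioi 0) →
      (∫ y, g y) = (∫ y in Iio (0:ℝ), g y) + ∫ y in Ioi (0:ℝ), g y := by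
    intro g h1 h2
    rw [← setIntegral_union ((Iio_disjoint_Ici le_rfl).mono_right Ioi_subset_Ici_self)
      measurableSet_Ioi h1 h2, Set.Iio_union_Ioi, setIntegral_congr_set hcompl,
      setIntegral_univ]
  have EA : (∫ y, (deriv φ y) ^ 2) = Am + Ap := splitInt _ hd1m hd1p
  have EP : (∫ y, (φ y) ^ 2) = Pm + Pp := splitInt _ hsq.integrableOn hsq.integrableOn
  -- expansion of the main integral
  have hexp : (fun y => (-(deriv (deriv φ) y) + c * φ y) ^ 2) =
      fun y => ((deriv (deriv φ) y) ^ 2 + c ^ 2 * (φ y) ^ 2) - 2 * c * (φ y * deriv (deriv φ) y) :=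
    funext fun y => by ring
  have hf2p : IntegrableOn (fun y => (-(deriv (deriv φ) y) + c * φ y) ^ 2) (Ioi 0) := by
    rw [hexp]
    exact (hd2p.add (hsq.integrableOn.const_mul (c ^ 2))).sub (hφφ''p.const_mul (2 * c))
  have hf2m : IntegrableOn (fun y => (-(deriv (deriv φ) y) + c * φ y) ^ 2) (Iio 0) := by
    rw [hexp]
    exact (hd2m.add (hsq.integrableOn.const_mul (c ^ 2))).sub (hφφ''m.const_mul (2 * c))
  have i1p : IntegrableOn (fun y => (deriv (deriv φ) y) ^ 2 + c ^ 2 * (φ y) ^ 2) (Ioi 0) := by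
    exact hd2p.add (hsq.integrableOn.const_mul (c ^ 2))
  have i1m : IntegrableOn (fun y => (deriv (deriv φ) y) ^ 2 + c ^ 2 * (φ y) ^ 2) (Iio 0) := by
    exact hd2m.add (hsq.integrableOn.const_mul (c ^ 2))
  have Evp : (∫ y in Ioi (0:ℝ), (-(deriv (deriv φ) y) + c * φ y) ^ 2) =
      Bp + c ^ 2 * Pp - 2 * c * Qp := by
    rw [hexp, integral_sub i1p (hφφ''p.const_mul (2 * c)),
      integral_add hd2p (hsq.integrableOn.const_mul (c ^ 2)),
      integral_const_mul, integral_const_mul]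
  have Evm : (∫ y in Iio (0:ℝ), (-(deriv (deriv φ) y) + c * φ y) ^ 2) =
      Bm + c ^ 2 * Pm - 2 * c * Qm := by
    rw [hexp, integral_sub i1m (hφφ''m.const_mul (2 * c)),
      integral_add hd2m (hsq.integrableOn.const_mul (c ^ 2)),
      integral_const_mul, integral_const_mul]
  have Etot : (∫ y, (-(deriv (deriv φ) y) + c * φ y) ^ 2) =
      (Bm + c ^ 2 * Pm - 2 * c * Qm) + (Bp + c ^ 2 * Pp - 2 * c * Qp) := by
    rw [splitInt _ hf2m hf2p, Evp, Evm]
  -- coefficient identities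
  have Hc2 : (kstar:ℝ) ^ 2 * α ^ 2 / 4 + lamstar - lam = 1 - lam := by
    rw [hα2]
    field_simp
    ring
  have HK : 4 * (kstar:ℝ) ^ 2 + 16 * (lamstar - lam) / α ^ 2 = 16 * (1 - lam) / α ^ 2 := by
    rw [hα2]
    field_simp
    ring
  have hcoef : 2 * (1 - lam) * ((k:ℝ) ^ 2 - 4 * (kstar:ℝ) ^ 2 - 16 * (lamstar - lam) / α ^ 2) =
      2 * c - 32 * (1 - lam) ^ 2 / α ^ 2 := by
    rw [hc]
    linear_combination (-(2 * (1 - lam))) * HK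
  have hcoef2 : ((kstar:ℝ) ^ 2 * α ^ 2 / 4 + lamstar - lam) ^ 2 * (k:ℝ) ^ 4 = c ^ 2 := by
    rw [Hc2, hc]; ring
  -- the boundary-term estimate
  have hφ0 : 2 * c * φ 0 * (dp - dm) = -(2 * (1 - lam) / α) * (dm - dp) ^ 2 := by
    have h1 : dp - dm = -((k:ℝ) ^ 2 * α * φ 0) := by linear_combination hjump
    have h2 : dm - dp = (k:ℝ) ^ 2 * α * φ 0 := by linear_combination (-1 : ℝ) * hjump
    rw [h1, h2, hc]
    field_simp
  have key : 0 ≤ (1/2) * (Bm + Bp) + 32 * (1 - lam) ^ 2 / α ^ 2 * (Am + Ap) +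
      2 * c * φ 0 * (dp - dm) := by
    rw [hφ0]
    have h3 : (dm - dp) ^ 2 ≤ 2 * dp ^ 2 + 2 * dm ^ 2 := by linarith only [sq_nonneg (dp + dm)]
    have h4 : (dm - dp) ^ 2 ≤ 2 * (ε * Ap + (1/ε) * Bp) + 2 * (ε * Am + (1/ε) * Bm) := by
      linarith only [h3, hbp, hbm]
    have h5 : 2 * (1 - lam) / α * (dm - dp) ^ 2 ≤
        2 * (1 - lam) / α * (2 * (ε * Ap + (1/ε) * Bp) + 2 * (ε * Am + (1/ε) * Bm)) := by
      apply mul_le_mul_of_nonneg_left h4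
      positivity
    have h6 : 2 * (1 - lam) / α * (2 * (ε * Ap + (1/ε) * Bp) + 2 * (ε * Am + (1/ε) * Bm)) =
        32 * (1 - lam) ^ 2 / α ^ 2 * (Am + Ap) + (1/2) * (Bm + Bp) := by
      rw [hε]
      field_simp
      ring
    linarith only [h5, h6]
  -- put everything together
  rw [ge_iff_le, Etot, EA, EP, hcoef, hcoef2]
  have EQp' : Qp = -(φ 0 * dp) - Ap := by linear_combination EQp
  have EQm' : Qm = φ 0 * dm - Am := by linear_combination EQm
  rw [EQp', EQm']
  rw [← sub_nonneg]
  convert key using 1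
  ring
end

section
/- Let M, C₀, C₁ > 0. There exists a constant C > 0, depending only on M, C₀ and C₁, such that the following holds for every real k ≥ 1: if q : (0,∞) → ℝ is measurable with |q(y)| ≤ M for all y > 0, and φ : [0,∞) → ℝ is continuously differentiable on [0,∞), twice continuously differentiable on (0,∞), satisfies −φ''(y) + k² q(y) φ(y) = 0 for all y > 0, φ(y) → 0 and φ'(y) → 0 as y → ∞, ∫_0^∞ φ² dy ≤ C₀², and sup_{y≥0} |φ(y)| ≤ C₁ k^{1/2}, then ( ∫_0^∞ (φ')² dy )^{1/2} ≤ C k and sup_{y≥0} |φ'(y)| ≤ C k^{3/2}. -/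
open Real MeasureTheory Set Filter

set_option maxHeartbeats 1600000 in
/-- Uniform derivative estimates for decaying solutions of `-φ'' + k²qφ = 0` on `(0,∞)`:
there is `C = C(M, C₀, C₁) > 0` such that for all real `k ≥ 1`, if `|q| ≤ M` on `(0,∞)`,
`∫_0^∞ φ² ≤ C₀²` and `sup_{y≥0} |φ(y)| ≤ C₁ k^{1/2}`, then
`(∫_0^∞ (φ')²)^{1/2} ≤ Ck` and `sup_{y≥0} |φ'(y)| ≤ C k^{3/2}`. -/
theorem uniform_deriv_estimates (M C0 C1 : ℝ) (hM : 0 < M) (hC0 : 0 < C0) (hC1 : 0 < C1) :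
    ∃ C : ℝ, 0 < C ∧ ∀ k : ℝ, 1 ≤ k → ∀ q φ : ℝ → ℝ,
      Measurable q → (∀ y : ℝ, 0 < y → |q y| ≤ M) →
      ContDiffOn ℝ 1 φ (Ici 0) → ContDiffOn ℝ 2 φ (Ioi 0) →
      (∀ y : ℝ, 0 < y → -(deriv (deriv φ) y) + k ^ 2 * q y * φ y = 0) →
      Tendsto φ atTop (nhds 0) → Tendsto (deriv φ) atTop (nhds 0) →
      IntegrableOn (fun y => (φ y) ^ 2) (Ioi 0) →
      (∫ y in Ioi (0 : ℝ), (φ y) ^ 2) ≤ C0 ^ 2 →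
      (∀ y : ℝ, 0 ≤ y → |φ y| ≤ C1 * Real.sqrt k) →
      Real.sqrt (∫ y in Ioi (0 : ℝ), (deriv φ y) ^ 2) ≤ C * k ∧
      ∀ y : ℝ, 0 ≤ y → |deriv φ y| ≤ C * k ^ ((3 : ℝ) / 2) := by
  set D : ℝ := 2 * (2 + M) * C1 ^ 2 + M * C0 ^ 2 with hDdef
  have hD0 : 0 < D := by
    have : 0 < 2 * (2 + M) * C1 ^ 2 := by positivity
    nlinarith
  refine ⟨(2 + M) * C1 + Real.sqrt D, by nlinarith [Real.sqrt_nonneg D], ?_⟩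
  intro k hk q φ hq hqM hφ1 hφ2 hode hφtop hdφtop hintφ hL2 hsup
  have hk0 : (0 : ℝ) < k := lt_of_lt_of_le one_pos hk
  set s := Real.sqrt k with hs
  have hs0 : 0 < s := Real.sqrt_pos.mpr hk0
  have hss : s * s = k := Real.mul_self_sqrt hk0.le
  have hks : k ^ ((3 : ℝ) / 2) = k * s := by
    rw [show ((3 : ℝ) / 2) = 1 + 1 / 2 by norm_num, Real.rpow_add hk0, Real.rpow_one, hs,
      Real.sqrt_eq_rpow]
  -- second derivative formula and bound
  have hode' : ∀ y : ℝ, 0 < y → deriv (deriv φ) y = k ^ 2 * q y * φ y := by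
    intro y hy
    have := hode y hy
    linarith
  have hD2 : ∀ y : ℝ, 0 < y → |deriv (deriv φ) y| ≤ M * k ^ 2 * (C1 * s) := by
    intro y hy
    rw [hode' y hy, abs_mul, abs_mul, abs_of_nonneg (sq_nonneg k)]
    have h1 : |q y| ≤ M := hqM y hy
    have h2 : |φ y| ≤ C1 * s := hsup y hy.le
    have h3 : |q y| * |φ y| ≤ M * (C1 * s) := mul_le_mul h1 h2 (abs_nonneg _) hM.le
    calc k ^ 2 * |q y| * |φ y| = k ^ 2 * (|q y| * |φ y|) := by ring
      _ ≤ k ^ 2 * (M * (C1 * s)) := mul_le_mul_of_nonneg_left h3 (sq_nonneg k)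
      _ = M * k ^ 2 * (C1 * s) := by ring
  have hφcont : ContinuousOn φ (Ici 0) := hφ1.continuousOn
  have hφdiff : ∀ y : ℝ, 0 < y → HasDerivAt φ (deriv φ y) y := by
    intro y hy
    exact ((hφ2.contDiffAt (Ioi_mem_nhds hy)).differentiableAt (by norm_num)).hasDerivAt
  have hdφ : ContDiffOn ℝ 1 (deriv φ) (Ioi 0) :=
    hφ2.deriv_of_isOpen isOpen_Ioi (by norm_num)
  have hdφdiff : ∀ y : ℝ, 0 < y → HasDerivAt (deriv φ) (deriv (deriv φ) y) y := by
    intro y hy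
    exact ((hdφ.contDiffAt (Ioi_mem_nhds hy)).differentiableAt (by norm_num)).hasDerivAt
  have hdφcont : ContinuousOn (deriv φ) (Ioi 0) := hdφ.continuousOn
  have hd2cont : ContinuousOn (deriv (deriv φ)) (Ioi 0) :=
    hdφ.continuousOn_deriv_of_isOpen isOpen_Ioi le_rfl
  set B : ℝ := (2 + M) * C1 * (k * s) with hBdef
  have hB0 : 0 < B :=
    mul_pos (mul_pos (by linarith : (0:ℝ) < 2 + M) hC1) (mul_pos hk0 hs0)
  -- key pointwise bound on (0, ∞)
  have key : ∀ y : ℝ, 0 < y → |deriv φ y| ≤ B := by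
    intro y hy
    have hyb : y < y + 1 / k := lt_add_of_pos_right _ (by positivity)
    obtain ⟨ξ, hξ, hslope⟩ := exists_hasDerivAt_eq_slope φ (deriv φ) hyb
      (hφcont.mono (fun x hx => le_trans hy.le hx.1))
      (fun x hx => hφdiff x (hy.trans hx.1))
    have hξ0 : 0 < ξ := hy.trans hξ.1
    have hslopebd : |deriv φ ξ| ≤ 2 * (C1 * s) * k := by
      rw [hslope, show y + 1 / k - y = 1 / k by ring, abs_div,
        abs_of_pos (by positivity : (0 : ℝ) < 1 / k)]
      have h2 : |φ (y + 1 / k) - φ y| ≤ 2 * (C1 * s) := by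
        have ha := hsup (y + 1 / k) (by positivity)
        have hb := hsup y hy.le
        calc |φ (y + 1 / k) - φ y| ≤ |φ (y + 1 / k)| + |φ y| := abs_sub _ _
          _ ≤ 2 * (C1 * s) := by linarith
      calc |φ (y + 1 / k) - φ y| / (1 / k) ≤ 2 * (C1 * s) / (1 / k) := by
            gcongr
        _ = 2 * (C1 * s) * k := by field_simp
    have hsubI : Icc y ξ ⊆ Ioi 0 := fun x hx => lt_of_lt_of_le hy hx.1
    have hFTC : ∫ x in y..ξ, deriv (deriv φ) x = deriv φ ξ - deriv φ y := by
      apply intervalIntegral.integral_eq_sub_of_hasDerivAt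
      · intro x hx
        rw [uIcc_of_le hξ.1.le] at hx
        exact hdφdiff x (hsubI hx)
      · apply ContinuousOn.intervalIntegrable
        rw [uIcc_of_le hξ.1.le]
        exact hd2cont.mono hsubI
    have hIbd : |∫ x in y..ξ, deriv (deriv φ) x| ≤ M * k ^ 2 * (C1 * s) * (1 / k) := by
      have h := intervalIntegral.norm_integral_le_of_norm_le_const
        (C := M * k ^ 2 * (C1 * s)) (f := deriv (deriv φ)) (a := y) (b := ξ) ?_
      · have hxy : |ξ - y| ≤ 1 / k := by
          rw [abs_of_pos (sub_pos.mpr hξ.1)]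
          have hx2 := hξ.2
          linarith
        have hMk : (0:ℝ) ≤ M * k ^ 2 * (C1 * s) := by positivity
        calc |∫ x in y..ξ, deriv (deriv φ) x| ≤ M * k ^ 2 * (C1 * s) * |ξ - y| := h
          _ ≤ M * k ^ 2 * (C1 * s) * (1 / k) := by gcongr
      · intro x hx
        rw [uIoc_of_le hξ.1.le] at hx
        exact hD2 x (lt_trans hy hx.1)
    have hdy : deriv φ y = deriv φ ξ - ∫ x in y..ξ, deriv (deriv φ) x := by
      rw [hFTC]; ring
    have hfinal : |deriv φ y| ≤ 2 * (C1 * s) * k + M * k ^ 2 * (C1 * s) * (1 / k) := by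
      rw [hdy]
      calc |deriv φ ξ - ∫ x in y..ξ, deriv (deriv φ) x|
          ≤ |deriv φ ξ| + |∫ x in y..ξ, deriv (deriv φ) x| := abs_sub _ _
        _ ≤ 2 * (C1 * s) * k + M * k ^ 2 * (C1 * s) * (1 / k) := by linarith
    have hk2 : M * k ^ 2 * (C1 * s) * (1 / k) = M * C1 * (k * s) := by
      field_simp
    rw [hk2] at hfinal
    calc |deriv φ y| ≤ 2 * (C1 * s) * k + M * C1 * (k * s) := hfinal
      _ = B := by rw [hBdef]; ring
  -- pointwise bound at 0
  have key0 : |deriv φ 0| ≤ B := by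
    by_cases hdiff : DifferentiableAt ℝ φ 0
    · have hu : UniqueDiffOn ℝ (Ici (0 : ℝ)) := uniqueDiffOn_Ici 0
      have heq : derivWithin φ (Ici 0) 0 = deriv φ 0 :=
        hdiff.derivWithin (hu 0 self_mem_Ici)
      have hcont : ContinuousOn (derivWithin φ (Ici 0)) (Ici 0) :=
        hφ1.continuousOn_derivWithin hu le_rfl
      have htend : Tendsto (derivWithin φ (Ici 0)) (nhdsWithin 0 (Ioi 0))
          (nhds (derivWithin φ (Ici 0) 0)) :=
        (hcont 0 self_mem_Ici).mono Ioi_subset_Ici_self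
      rw [← heq]
      refine le_of_tendsto htend.abs ?_
      filter_upwards [self_mem_nhdsWithin] with x hx
      have hx0 : (0 : ℝ) < x := hx
      have hdw : derivWithin φ (Ici 0) x = deriv φ x :=
        derivWithin_of_mem_nhds (mem_of_superset (Ioi_mem_nhds hx0) Ioi_subset_Ici_self)
      rw [hdw]
      exact key x hx0
    · rw [deriv_zero_of_not_differentiableAt hdiff]
      simpa using hB0.le
  have keyall : ∀ y : ℝ, 0 ≤ y → |deriv φ y| ≤ B := by
    intro y hy
    rcases eq_or_lt_of_le hy with h | h
    · rw [← h]; exact key0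
    · exact key y h
  -- L² estimate
  set E : ℝ := 2 * (C1 * s * B) + M * k ^ 2 * C0 ^ 2 with hEdef
  have hconstIoc : ∀ R : ℝ, IntegrableOn (fun y => (deriv φ y) ^ 2) (Ioc 0 R) := by
    intro R
    apply Integrable.mono' (g := fun _ => B ^ 2)
      (integrableOn_const measure_Ioc_lt_top.ne)
      (((measurable_deriv φ).pow_const 2).aestronglyMeasurable)
    filter_upwards [ae_restrict_mem measurableSet_Ioc] with x hx
    rw [Real.norm_eq_abs, abs_of_nonneg (sq_nonneg _)]
    have h := keyall x hx.1.le
    nlinarith [abs_nonneg (deriv φ x), sq_abs (deriv φ x)]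
  have hER : ∀ ε R : ℝ, 0 < ε → ε < R → ∫ x in ε..R, (deriv φ x) ^ 2 ≤ E := by
    intro ε R hε hεR
    have hsub : uIcc ε R ⊆ Ioi 0 := by
      rw [uIcc_of_le hεR.le]
      exact fun x hx => lt_of_lt_of_le hε hx.1
    have hcφ : ContinuousOn φ (uIcc ε R) :=
      hφcont.mono (fun x hx => mem_Ici.mpr (mem_Ioi.mp (hsub hx)).le)
    have hcd : ContinuousOn (deriv φ) (uIcc ε R) := hdφcont.mono hsub
    have hcd2 : ContinuousOn (deriv (deriv φ)) (uIcc ε R) := hd2cont.mono hsub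
    have hint2 : IntervalIntegrable (fun x => φ x * deriv (deriv φ) x) volume ε R :=
      (hcφ.mul hcd2).intervalIntegrable
    have hintsum : IntervalIntegrable
        (fun x => deriv φ x * deriv φ x + φ x * deriv (deriv φ) x) volume ε R :=
      ((hcd.mul hcd).add (hcφ.mul hcd2)).intervalIntegrable
    have hFTC2 : ∫ x in ε..R, (deriv φ x * deriv φ x + φ x * deriv (deriv φ) x)
        = φ R * deriv φ R - φ ε * deriv φ ε := by
      apply intervalIntegral.integral_eq_sub_of_hasDerivAt
      · intro x hx
        exact (hφdiff x (hsub hx)).mul (hdφdiff x (hsub hx))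
      · exact hintsum
    have hsplit : ∫ x in ε..R, (deriv φ x) ^ 2
        = (φ R * deriv φ R - φ ε * deriv φ ε) - ∫ x in ε..R, φ x * deriv (deriv φ) x := by
      have heqf : (fun x => (deriv φ x) ^ 2)
          = fun x => (deriv φ x * deriv φ x + φ x * deriv (deriv φ) x)
            - φ x * deriv (deriv φ) x := by
        funext x; ring
      rw [heqf, intervalIntegral.integral_sub hintsum hint2, hFTC2]
    have hqq : |∫ x in ε..R, φ x * deriv (deriv φ) x| ≤ M * k ^ 2 * C0 ^ 2 := by
      rw [intervalIntegral.integral_of_le hεR.le]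
      have hintIoc : IntegrableOn (fun x => φ x * deriv (deriv φ) x) (Ioc ε R) := hint2.1
      have hIocsub : Ioc ε R ⊆ Ioi 0 := fun x hx => lt_trans hε hx.1
      have hintg : IntegrableOn (fun x => M * k ^ 2 * (φ x) ^ 2) (Ioc ε R) :=
        ((hintφ.mono_set hIocsub)).const_mul (M * k ^ 2)
      calc |∫ x in Ioc ε R, φ x * deriv (deriv φ) x|
          ≤ ∫ x in Ioc ε R, |φ x * deriv (deriv φ) x| := by
            simpa only [Real.norm_eq_abs] using
              norm_integral_le_integral_norm (μ := volume.restrict (Ioc ε R))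
                (f := fun x => φ x * deriv (deriv φ) x)
        _ ≤ ∫ x in Ioc ε R, M * k ^ 2 * (φ x) ^ 2 := by
            apply setIntegral_mono_on hintIoc.abs hintg measurableSet_Ioc
            intro x hx
            have hx0 : 0 < x := lt_trans hε hx.1
            rw [hode' x hx0, show φ x * (k ^ 2 * q x * φ x) = k ^ 2 * q x * (φ x) ^ 2 by ring,
              abs_mul, abs_mul, abs_of_nonneg (sq_nonneg k), abs_of_nonneg (sq_nonneg (φ x))]
            have hqx := hqM x hx0
            calc k ^ 2 * |q x| * (φ x) ^ 2 = |q x| * (k ^ 2 * (φ x) ^ 2) := by ring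
              _ ≤ M * (k ^ 2 * (φ x) ^ 2) :=
                  mul_le_mul_of_nonneg_right hqx (by positivity)
              _ = M * k ^ 2 * (φ x) ^ 2 := by ring
        _ = M * k ^ 2 * ∫ x in Ioc ε R, (φ x) ^ 2 := integral_const_mul _ _
        _ ≤ M * k ^ 2 * ∫ x in Ioi 0, (φ x) ^ 2 := by
            apply mul_le_mul_of_nonneg_left _ (by positivity)
            apply setIntegral_mono_set hintφ
            · filter_upwards with x using sq_nonneg (φ x)
            · exact HasSubset.Subset.eventuallyLE hIocsub
        _ ≤ M * k ^ 2 * C0 ^ 2 := by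
            apply mul_le_mul_of_nonneg_left hL2 (by positivity)
    have h1 : |φ R * deriv φ R| ≤ C1 * s * B := by
      rw [abs_mul]
      have ha := hsup R (by linarith)
      have hb := keyall R (by linarith)
      exact mul_le_mul ha hb (abs_nonneg _) (by positivity)
    have h2 : |φ ε * deriv φ ε| ≤ C1 * s * B := by
      rw [abs_mul]
      have ha := hsup ε hε.le
      have hb := keyall ε hε.le
      exact mul_le_mul ha hb (abs_nonneg _) (by positivity)
    rw [hsplit]
    have := le_abs_self (φ R * deriv φ R)
    have := neg_abs_le (φ ε * deriv φ ε)
    have := neg_abs_le (∫ x in ε..R, φ x * deriv (deriv φ) x)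
    have := le_abs_self (∫ x in ε..R, φ x * deriv (deriv φ) x)
    rw [hEdef]
    linarith
  have hIocR : ∀ R : ℝ, 0 < R → ∫ x in Ioc 0 R, (deriv φ x) ^ 2 ≤ E := by
    intro R hR
    refine le_of_forall_pos_le_add ?_
    intro δ hδ
    set ε := min (R / 2) (δ / (B ^ 2 + 1)) with hεdef
    have hε0 : 0 < ε := lt_min (by linarith) (by positivity)
    have hεR : ε < R := lt_of_le_of_lt (min_le_left _ _) (by linarith)
    have hsplitset : Ioc (0 : ℝ) R = Ioc 0 ε ∪ Ioc ε R :=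
      (Ioc_union_Ioc_eq_Ioc hε0.le hεR.le).symm
    have hdisj : Disjoint (Ioc (0 : ℝ) ε) (Ioc ε R) := by
      apply Set.disjoint_left.mpr
      intro x hx1 hx2
      exact absurd hx1.2 (not_le.mpr hx2.1)
    rw [hsplitset, setIntegral_union hdisj measurableSet_Ioc (hconstIoc ε)
      ((hconstIoc R).mono_set (Ioc_subset_Ioc_left hε0.le))]
    have hA : ∫ x in Ioc 0 ε, (deriv φ x) ^ 2 ≤ B ^ 2 * ε := by
      have h1 : ∫ x in Ioc 0 ε, (deriv φ x) ^ 2 ≤ ∫ x in Ioc 0 ε, B ^ 2 := by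
        apply setIntegral_mono_on (hconstIoc ε)
          (integrableOn_const measure_Ioc_lt_top.ne) measurableSet_Ioc
        intro x hx
        nlinarith [keyall x hx.1.le, abs_nonneg (deriv φ x), sq_abs (deriv φ x)]
      have h2 : ∫ _x in Ioc (0:ℝ) ε, B ^ 2 = B ^ 2 * ε := by
        rw [setIntegral_const, Real.volume_real_Ioc_of_le (by linarith), smul_eq_mul]
        ring
      linarith
    have hB2 : ∫ x in Ioc ε R, (deriv φ x) ^ 2 ≤ E := by
      rw [← intervalIntegral.integral_of_le hεR.le]
      exact hER ε R hε0 hεR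
    have hεδ : B ^ 2 * ε ≤ δ := by
      have hεle : ε ≤ δ / (B ^ 2 + 1) := min_le_right _ _
      have h1 : B ^ 2 * ε ≤ B ^ 2 * (δ / (B ^ 2 + 1)) := by
        apply mul_le_mul_of_nonneg_left hεle (by positivity)
      have h2 : B ^ 2 * (δ / (B ^ 2 + 1)) ≤ δ := by
        rw [div_eq_inv_mul, ← mul_assoc]
        rw [mul_comm (B ^ 2) (B ^ 2 + 1)⁻¹]
        have : (B ^ 2 + 1)⁻¹ * B ^ 2 ≤ 1 := by
          rw [inv_mul_le_iff₀ (by positivity)]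
          nlinarith
        nlinarith
      linarith
    linarith
  have haint : IntegrableOn (fun x => (deriv φ x) ^ 2) (Ioi 0) := by
    apply integrableOn_Ioi_of_intervalIntegral_norm_bounded E 0
      (fun i : ℝ => hconstIoc i) tendsto_id
    filter_upwards [eventually_gt_atTop (0 : ℝ)] with i hi
    have heqf : (fun x => ‖(deriv φ x) ^ 2‖) = fun x => (deriv φ x) ^ 2 := by
      funext x
      rw [Real.norm_eq_abs, abs_of_nonneg (sq_nonneg _)]
    rw [heqf, intervalIntegral.integral_of_le hi.le]
    exact hIocR i hi
  have hlim := intervalIntegral_tendsto_integral_Ioi 0 haint tendsto_id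
  have hfinal : ∫ x in Ioi (0:ℝ), (deriv φ x) ^ 2 ≤ E := by
    refine le_of_tendsto hlim ?_
    filter_upwards [eventually_gt_atTop (0 : ℝ)] with i hi
    simp only [id_eq]
    rw [intervalIntegral.integral_of_le hi.le]
    exact hIocR i hi
  have hE : E = D * k ^ 2 := by
    rw [hEdef, hBdef, hDdef]
    have h2 : C1 * s * ((2 + M) * C1 * (k * s)) = (2 + M) * C1 ^ 2 * k ^ 2 := by
      calc C1 * s * ((2 + M) * C1 * (k * s)) = (2 + M) * C1 ^ 2 * k * (s * s) := by ring
        _ = (2 + M) * C1 ^ 2 * k ^ 2 := by rw [hss]; ring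
    nlinarith [h2]
  constructor
  · have h1 : Real.sqrt (∫ y in Ioi (0:ℝ), (deriv φ y) ^ 2) ≤ Real.sqrt (D * k ^ 2) :=
      Real.sqrt_le_sqrt (by rw [← hE]; exact hfinal)
    have h2 : Real.sqrt (D * k ^ 2) = Real.sqrt D * k := by
      rw [Real.sqrt_mul hD0.le, Real.sqrt_sq hk0.le]
    rw [h2] at h1
    refine le_trans h1 ?_
    have : 0 < (2 + M) * C1 := by nlinarith
    nlinarith [Real.sqrt_nonneg D]
  · intro y hy
    refine le_trans (keyall y hy) ?_
    rw [hks, hBdef]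
    nlinarith [mul_nonneg (Real.sqrt_nonneg D) (mul_pos hk0 hs0).le]
end

section
/- Let k ≥ 1 be an integer, b > 0, α ∈ ℝ, and λ < 1 a real number. Consider functions φ : ℝ → ℝ that are square-integrable on ℝ, continuous on ℝ, continuously differentiable on ℝ∖{0} with one-sided derivative limits φ'(0+) and φ'(0−) at 0, twice differentiable on ℝ∖{0, b, −b}, and that satisfy φ''(y) = 0 for 0 < |y| < b, −φ''(y) + k²(1−λ)φ(y) = 0 for |y| > b, and the jump condition φ'(0+) − φ'(0−) + k²αφ(0) = 0. Then a nonzero such φ exists if and only if kα/2 = √(1−λ)/(1 + √(1−λ) k b). -/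
open Real MeasureTheory Set Filter

/-- A (weak) zero-eigenfunction of
`L = -d²/dy² + k²(1 - λ·1_{|y|≥b} - 1_{|y|<b} - α δ₀)` (case (P2) with step height `β = 1`):
`φ` is square-integrable and continuous on `ℝ`, continuously differentiable on `ℝ∖{0}`
with one-sided derivative limits `dp = φ'(0⁺)` and `dm = φ'(0⁻)`, twice differentiable on
`ℝ∖{0,b,-b}`, solves `φ'' = 0` for `0 < |y| < b` and `-φ'' + k²(1-λ)φ = 0` for `|y| > b`,
and satisfies the jump condition `φ'(0⁺) - φ'(0⁻) + k²αφ(0) = 0`. -/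
structure IsDeltaStepOneEigenfun (k : ℕ) (b α lam : ℝ) (φ : ℝ → ℝ) (dp dm : ℝ) : Prop where
  sq_int : Integrable (fun y => (φ y) ^ 2)
  cont : Continuous φ
  diff : ∀ y : ℝ, y ≠ 0 → DifferentiableAt ℝ φ y
  cont_deriv : ContinuousOn (deriv φ) {(0 : ℝ)}ᶜ
  deriv_plus : Tendsto (deriv φ) (nhdsWithin 0 (Ioi 0)) (nhds dp)
  deriv_minus : Tendsto (deriv φ) (nhdsWithin 0 (Iio 0)) (nhds dm)
  diff2 : ∀ y : ℝ, y ≠ 0 → y ≠ b → y ≠ -b → DifferentiableAt ℝ (deriv φ) y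
  ode_inner : ∀ y : ℝ, 0 < |y| → |y| < b → deriv (deriv φ) y = 0
  ode_outer : ∀ y : ℝ, b < |y| →
    -(deriv (deriv φ) y) + (k : ℝ) ^ 2 * (1 - lam) * φ y = 0
  jump : dp - dm + (k : ℝ) ^ 2 * α * φ 0 = 0

private lemma constOn_of_deriv_zero {f : ℝ → ℝ} {s : Set ℝ} (hs : Convex ℝ s)
    (hd : ∀ x ∈ s, DifferentiableAt ℝ f x) (h0 : ∀ x ∈ s, deriv f x = 0)
    {x y : ℝ} (hx : x ∈ s) (hy : y ∈ s) : f x = f y := by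
  have h := hs.norm_image_sub_le_of_norm_deriv_le (C := 0) hd
    (fun z hz => by simp [h0 z hz]) hy hx
  rw [zero_mul] at h
  exact sub_eq_zero.mp (norm_le_zero_iff.mp h)

private lemma eq_at_of_eqOn {f g : ℝ → ℝ} {s : Set ℝ} {a : ℝ}
    (hne : (nhdsWithin a s).NeBot) (hf : ContinuousAt f a) (hg : ContinuousAt g a)
    (h : ∀ y ∈ s, f y = g y) : f a = g a := by
  haveI := hne
  have h1 : Tendsto f (nhdsWithin a s) (nhds (f a)) :=
    hf.tendsto.mono_left nhdsWithin_le_nhds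
  have h2 : Tendsto f (nhdsWithin a s) (nhds (g a)) := by
    refine Tendsto.congr' ?_ (hg.tendsto.mono_left nhdsWithin_le_nhds)
    exact eventually_mem_nhdsWithin.mono fun y hy => (h y hy).symm
  exact tendsto_nhds_unique h1 h2

private lemma not_integrable_sq {f : ℝ → ℝ}
    (hf : Tendsto (fun y => |f y|) atTop atTop) :
    ¬ Integrable (fun y => f y ^ 2) (volume : Measure ℝ) := by
  intro hint
  obtain ⟨Y, hY⟩ := eventually_atTop.mp (hf.eventually_ge_atTop 1)
  have h1 : IntegrableOn (fun y => f y ^ 2) (Ici Y) := hint.integrableOn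
  have h2 : IntegrableOn (fun _ : ℝ => (1 : ℝ)) (Ici Y) := by
    refine Integrable.mono' h1 aestronglyMeasurable_const ?_
    rw [ae_restrict_iff' measurableSet_Ici]
    refine ae_of_all _ fun y hy => ?_
    have h4 := hY y hy
    have h3 : (1:ℝ) ≤ f y ^ 2 := by nlinarith [sq_abs (f y)]
    simpa using h3
  have h5 := integrable_const_iff.mp h2
  have h6 := (h5.resolve_left one_ne_zero).measure_univ_lt_top; simp [Real.volume_Ici, Measure.restrict_apply_univ] at h6
private noncomputable def auxF (b μ s t : ℝ) : ℝ :=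
  if t ≤ b then 1 - s * t else s / μ * Real.exp (-(μ * (t - b)))

private noncomputable def auxFd (b μ s t : ℝ) : ℝ :=
  -(s * Real.exp (-(μ * max (t - b) 0)))

private noncomputable def auxPhi (b μ s y : ℝ) : ℝ := auxF b μ s |y|

private lemma hasDerivAt_auxF {b μ s : ℝ} (hμ : 0 < μ) (hsb : 1 - s * b = s / μ)
    (t : ℝ) : HasDerivAt (auxF b μ s) (auxFd b μ s t) t := by
  have hlin : ∀ u : ℝ, HasDerivAt (fun v : ℝ => 1 - s * v) (-s) u := by
    intro u
    simpa using ((hasDerivAt_id u).const_mul s).const_sub 1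
  have hexp : ∀ u : ℝ, HasDerivAt (fun v : ℝ => s / μ * Real.exp (-(μ * (v - b))))
      (-(s * Real.exp (-(μ * (u - b))))) u := by
    intro u
    have h1 : HasDerivAt (fun v : ℝ => -(μ * (v - b))) (-μ) u := by
      simpa using (((hasDerivAt_id u).sub_const b).const_mul μ).fun_neg
    have h2 := h1.exp.const_mul (s / μ)
    refine h2.congr_deriv (Eq.symm ?_)
    field_simp
  rcases lt_trichotomy t b with ht | ht | ht
  · have he : auxFd b μ s t = -s := by
      simp [auxFd, max_eq_right (by linarith : t - b ≤ 0)]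
    rw [he]
    refine (hlin t).congr_of_eventuallyEq ?_
    filter_upwards [Iio_mem_nhds ht] with u hu
    simp [auxF, le_of_lt (mem_Iio.mp hu)]
  · subst ht
    have he : auxFd t μ s t = -s := by simp [auxFd]
    rw [he, ← hasDerivWithinAt_univ, ← Iic_union_Ici (a := t)]
    refine HasDerivWithinAt.union ?_ ?_
    · exact (hlin t).hasDerivWithinAt.congr
        (fun u hu => by simp [auxF, mem_Iic.mp hu]) (by simp [auxF])
    · have hd : HasDerivWithinAt (fun v : ℝ => s / μ * Real.exp (-(μ * (v - t))))
          (-(s * Real.exp (-(μ * (t - t))))) (Ici t) t := (hexp t).hasDerivWithinAt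
      have hval : -(s * Real.exp (-(μ * (t - t)))) = -s := by simp
      rw [hval] at hd
      refine hd.congr (fun u hu => ?_) ?_
      · rcases eq_or_lt_of_le (mem_Ici.mp hu) with h | h
        · rw [← h]
          simp only [auxF, le_refl, if_true, sub_self, mul_zero, neg_zero, Real.exp_zero,
            mul_one]
          linarith [hsb]
        · simp [auxF, not_le.mpr h]
      · simp only [auxF, le_refl, if_true, sub_self, mul_zero, neg_zero, Real.exp_zero,
          mul_one]
        linarith [hsb]
  · have he : auxFd b μ s t = -(s * Real.exp (-(μ * (t - b)))) := by
      rw [auxFd, max_eq_left (by linarith : (0:ℝ) ≤ t - b)]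
    rw [he]
    refine (hexp t).congr_of_eventuallyEq ?_
    filter_upwards [Ioi_mem_nhds ht] with u hu
    simp [auxF, not_le.mpr (mem_Ioi.mp hu)]

private lemma continuous_auxF {b μ s : ℝ} (hμ : 0 < μ) (hsb : 1 - s * b = s / μ) :
    Continuous (auxF b μ s) :=
  Differentiable.continuous (fun t => (hasDerivAt_auxF hμ hsb t).differentiableAt)

private lemma continuous_auxFd (b μ s : ℝ) : Continuous (auxFd b μ s) := by
  unfold auxFd
  fun_prop

private lemma hasDerivAt_auxPhi_pos {b μ s : ℝ} (hμ : 0 < μ) (hsb : 1 - s * b = s / μ)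
    {y : ℝ} (hy : 0 < y) : HasDerivAt (auxPhi b μ s) (auxFd b μ s y) y := by
  refine (hasDerivAt_auxF hμ hsb y).congr_of_eventuallyEq ?_
  filter_upwards [Ioi_mem_nhds hy] with u hu
  simp [auxPhi, abs_of_pos (mem_Ioi.mp hu)]

private lemma hasDerivAt_auxPhi_neg {b μ s : ℝ} (hμ : 0 < μ) (hsb : 1 - s * b = s / μ)
    {y : ℝ} (hy : y < 0) : HasDerivAt (auxPhi b μ s) (-(auxFd b μ s (-y))) y := by
  have h1 : HasDerivAt (fun u : ℝ => auxF b μ s (-u)) (auxFd b μ s (-y) * (-1)) y :=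
    (hasDerivAt_auxF hμ hsb (-y)).comp y (hasDerivAt_neg y)
  have h2 : HasDerivAt (fun u : ℝ => auxF b μ s (-u)) (-(auxFd b μ s (-y))) y := by
    simpa using h1
  refine h2.congr_of_eventuallyEq ?_
  filter_upwards [Iio_mem_nhds hy] with u hu
  simp [auxPhi, abs_of_neg (mem_Iio.mp hu)]
private lemma phi_construction {k : ℕ} {b α lam μ s : ℝ} (hb : 0 < b) (hμ : 0 < μ)
    (hμ2 : μ ^ 2 = (k : ℝ) ^ 2 * (1 - lam)) (hs : s * (1 + μ * b) = μ)
    (hα : (k : ℝ) ^ 2 * α = 2 * s) :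
    ∃ φ dp dm, IsDeltaStepOneEigenfun k b α lam φ dp dm ∧ φ ≠ 0 := by
  have h1μb : (0:ℝ) < 1 + μ * b := by nlinarith
  have hseq : s = μ / (1 + μ * b) := by rw [eq_div_iff h1μb.ne']; exact hs
  have hspos : 0 < s := by rw [hseq]; positivity
  have hsb : 1 - s * b = s / μ := by
    field_simp
    linear_combination -hs
  set φ := auxPhi b μ s with hφdef
  have hDp : ∀ y : ℝ, 0 < y → HasDerivAt φ (auxFd b μ s y) y :=
    fun y hy => hasDerivAt_auxPhi_pos hμ hsb hy
  have hDm : ∀ y : ℝ, y < 0 → HasDerivAt φ (-(auxFd b μ s (-y))) y :=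
    fun y hy => hasDerivAt_auxPhi_neg hμ hsb hy
  have hdp_eq : ∀ y : ℝ, 0 < y → deriv φ y = auxFd b μ s y := fun y hy => (hDp y hy).deriv
  have hdm_eq : ∀ y : ℝ, y < 0 → deriv φ y = -(auxFd b μ s (-y)) := fun y hy => (hDm y hy).deriv
  have hcont : Continuous φ := (continuous_auxF hμ hsb).comp continuous_abs
  have hval_in : ∀ y : ℝ, |y| ≤ b → φ y = 1 - s * |y| := fun y hy => by
    simp [hφdef, auxPhi, auxF, hy]
  have hval_out : ∀ y : ℝ, b < |y| → φ y = s / μ * Real.exp (-(μ * (|y| - b))) := fun y hy => by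
    simp [hφdef, auxPhi, auxF, not_le.mpr hy]
  have hEin_p : ∀ y : ℝ, 0 < y → y < b → deriv φ =ᶠ[nhds y] fun _ => -s := by
    intro y hy1 hy2
    filter_upwards [Ioo_mem_nhds hy1 hy2] with u hu
    rw [hdp_eq u hu.1]
    simp [auxFd, max_eq_right (by linarith [hu.2] : u - b ≤ 0)]
  have hEin_m : ∀ y : ℝ, -b < y → y < 0 → deriv φ =ᶠ[nhds y] fun _ => s := by
    intro y hy1 hy2
    filter_upwards [Ioo_mem_nhds hy1 hy2] with u hu
    rw [hdm_eq u hu.2]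
    simp [auxFd, max_eq_right (by linarith [hu.1] : -u - b ≤ 0)]
  have hEout_p : ∀ y : ℝ, b < y →
      deriv φ =ᶠ[nhds y] fun u => -(s * Real.exp (-(μ * (u - b)))) := by
    intro y hy
    filter_upwards [Ioi_mem_nhds hy] with u hu
    rw [hdp_eq u (lt_trans hb (mem_Ioi.mp hu))]
    rw [auxFd, max_eq_left (by linarith [mem_Ioi.mp hu] : (0:ℝ) ≤ u - b)]
  have hEout_m : ∀ y : ℝ, y < -b →
      deriv φ =ᶠ[nhds y] fun u => s * Real.exp (-(μ * (-u - b))) := by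
    intro y hy
    filter_upwards [Iio_mem_nhds hy] with u hu
    have hu0 : u < 0 := by have := mem_Iio.mp hu; linarith
    rw [hdm_eq u hu0, auxFd, max_eq_left (by have := mem_Iio.mp hu; linarith : (0:ℝ) ≤ -u - b)]
    ring
  have hgp : ∀ y : ℝ, HasDerivAt (fun u : ℝ => -(s * Real.exp (-(μ * (u - b)))))
      (s * μ * Real.exp (-(μ * (y - b)))) y := by
    intro y
    have h1 : HasDerivAt (fun u : ℝ => -(μ * (u - b))) (-μ) y := by
      simpa using (((hasDerivAt_id y).sub_const b).const_mul μ).fun_neg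
    have h2 := (h1.exp.const_mul s).fun_neg
    refine h2.congr_deriv (Eq.symm ?_)
    ring
  have hgm : ∀ y : ℝ, HasDerivAt (fun u : ℝ => s * Real.exp (-(μ * (-u - b))))
      (s * μ * Real.exp (-(μ * (-y - b)))) y := by
    intro y
    have h1 : HasDerivAt (fun u : ℝ => -(μ * (-u - b))) μ y := by
      simpa using (((hasDerivAt_neg y).sub_const b).const_mul μ).fun_neg
    have h2 := h1.exp.const_mul s
    refine h2.congr_deriv (Eq.symm ?_)
    ring
  have h0 : φ 0 = 1 := by
    rw [hval_in 0 (by simpa using hb.le)]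
    simp
  refine ⟨φ, -s, s, ⟨?_, hcont, ?_, ?_, ?_, ?_, ?_, ?_, ?_, ?_⟩, ?_⟩
  · -- sq_int
    have hIcc : IntegrableOn (fun y => φ y ^ 2) (Icc (-b) b) := (hcont.pow 2).integrableOn_Icc
    have hexp2 : IntegrableOn
        (fun y : ℝ => (s / μ) ^ 2 * Real.exp (2 * μ * b) * Real.exp (-(2 * μ) * y)) (Ioi b) :=
      (exp_neg_integrableOn_Ioi b (by positivity)).const_mul _
    have hIoi : IntegrableOn (fun y => φ y ^ 2) (Ioi b) := by
      refine hexp2.congr_fun (fun y hy => ?_) measurableSet_Ioi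
      have hyb : b < y := mem_Ioi.mp hy
      have habs : |y| = y := abs_of_pos (lt_trans hb hyb)
      have he2 : Real.exp (-(μ * (y - b))) ^ 2
          = Real.exp (2 * μ * b) * Real.exp (-(2 * μ) * y) := by
        rw [sq, ← Real.exp_add, ← Real.exp_add]
        congr 1
        ring
      rw [hval_out y (by rw [habs]; exact hyb), habs, mul_pow, he2]
      ring
    have hIio : IntegrableOn (fun y => φ y ^ 2) (Iio (-b)) := by
      have hpre : (Neg.neg : ℝ → ℝ) ⁻¹' (Iio (-b)) = Ioi b := by ext x; simp
      have heq := (Measure.measurePreserving_neg (volume : Measure ℝ)).integrableOn_comp_preimage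
        measurableEmbedding_neg (f := fun y => φ y ^ 2) (s := Iio (-b))
      rw [← heq, hpre]
      refine hIoi.congr_fun (fun y hy => ?_) measurableSet_Ioi
      simp [Function.comp, hφdef, auxPhi, abs_neg]
    have huniv : Iio (-b) ∪ (Icc (-b) b ∪ Ioi b) = (univ : Set ℝ) := by
      ext x
      simp only [mem_union, mem_Iio, mem_Icc, mem_Ioi, mem_univ, iff_true]
      rcases lt_or_ge x (-b) with h | h
      · exact Or.inl h
      · rcases le_or_gt x b with h2 | h2
        · exact Or.inr (Or.inl ⟨h, h2⟩)
        · exact Or.inr (Or.inr h2)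
    rw [← integrableOn_univ, ← huniv]
    exact hIio.union (hIcc.union hIoi)
  · -- diff
    intro y hy
    rcases hy.lt_or_gt with h | h
    · exact (hDm y h).differentiableAt
    · exact (hDp y h).differentiableAt
  · -- cont_deriv
    intro y hy
    have hy0 : y ≠ 0 := hy
    refine ContinuousAt.continuousWithinAt ?_
    rcases hy0.lt_or_gt with h | h
    · refine ContinuousAt.congr (f := fun u => -(auxFd b μ s (-u))) ?_ ?_
      · exact (((continuous_auxFd b μ s).comp continuous_neg).neg).continuousAt
      · filter_upwards [Iio_mem_nhds h] with u hu
        exact (hdm_eq u (mem_Iio.mp hu)).symm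
    · refine ContinuousAt.congr (f := auxFd b μ s) ?_ ?_
      · exact (continuous_auxFd b μ s).continuousAt
      · filter_upwards [Ioi_mem_nhds h] with u hu
        exact (hdp_eq u (mem_Ioi.mp hu)).symm
  · -- deriv_plus
    refine Tendsto.congr' ?_ tendsto_const_nhds
    filter_upwards [Ioo_mem_nhdsGT_of_mem (left_mem_Ico.mpr hb)] with u hu
    rw [hdp_eq u hu.1]
    simp [auxFd, max_eq_right (by linarith [hu.2] : u - b ≤ 0)]
  · -- deriv_minus
    refine Tendsto.congr' ?_ tendsto_const_nhds
    filter_upwards [Ioo_mem_nhdsLT_of_mem (right_mem_Ioc.mpr (by linarith : -b < (0:ℝ)))]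
      with u hu
    rw [hdm_eq u hu.2]
    simp [auxFd, max_eq_right (by linarith [hu.1] : -u - b ≤ 0)]
  · -- diff2
    intro y hy0 hyb hynb
    rcases hy0.lt_or_gt with h | h
    · rcases lt_trichotomy y (-b) with h2 | h2 | h2
      · exact ((hgm y).differentiableAt).congr_of_eventuallyEq (hEout_m y h2)
      · exact absurd h2 hynb
      · exact (differentiableAt_const s).congr_of_eventuallyEq (hEin_m y h2 h)
    · rcases lt_trichotomy y b with h2 | h2 | h2
      · exact (differentiableAt_const (-s)).congr_of_eventuallyEq (hEin_p y h h2)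
      · exact absurd h2 hyb
      · exact ((hgp y).differentiableAt).congr_of_eventuallyEq (hEout_p y h2)
  · -- ode_inner
    intro y hy1 hy2
    rcases (abs_pos.mp hy1).lt_or_gt with h | h
    · have h2 : -b < y := (abs_lt.mp hy2).1
      rw [(hEin_m y h2 h).deriv_eq]
      simp
    · have h2 : y < b := (abs_lt.mp hy2).2
      rw [(hEin_p y h h2).deriv_eq]
      simp
  · -- ode_outer
    intro y hy
    rcases lt_or_ge 0 y with h | h
    · have hyb : b < y := by rwa [abs_of_pos h] at hy
      rw [(hEout_p y hyb).deriv_eq, (hgp y).deriv, hval_out y hy, abs_of_pos h, ← hμ2]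
      field_simp
      ring
    · have hy0 : y < 0 := by
        rcases lt_or_eq_of_le h with h3 | h3
        · exact h3
        · exfalso; rw [h3, abs_zero] at hy; linarith
      have hyb : y < -b := by
        have habs := abs_of_neg hy0
        have hy' := hy
        rw [habs] at hy'
        linarith
      rw [(hEout_m y hyb).deriv_eq, (hgm y).deriv, hval_out y hy, abs_of_neg hy0, ← hμ2]
      field_simp
      ring
  · -- jump
    rw [h0, mul_one, hα]
    ring
  · -- φ ≠ 0
    intro hzero
    rw [hzero] at h0
    simpa using h0
private lemma phi_forward {k : ℕ} {b α lam μ : ℝ} (hb : 0 < b) (hμ : 0 < μ)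
    (hμ2 : μ ^ 2 = (k : ℝ) ^ 2 * (1 - lam)) {φ : ℝ → ℝ} {dp dm : ℝ}
    (H : IsDeltaStepOneEigenfun k b α lam φ dp dm) (hφ : φ ≠ 0) :
    (k : ℝ) ^ 2 * α * (1 + μ * b) = 2 * μ := by
  have hbne : b ≠ 0 := ne_of_gt hb
  have h1μb : (0:ℝ) < 1 + μ * b := by nlinarith
  -- deriv φ is constant dp on (0,b), dm on (-b,0)
  have hconst_r : ∀ y ∈ Ioo (0:ℝ) b, deriv φ y = dp := by
    intro y hy
    have hc : ∀ z ∈ Ioo (0:ℝ) b, deriv φ z = deriv φ y := fun z hz =>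
      constOn_of_deriv_zero (convex_Ioo 0 b)
        (fun x hx => H.diff2 x (ne_of_gt hx.1) (ne_of_lt hx.2)
          (ne_of_gt (by linarith [hx.1] : -b < x)))
        (fun x hx => H.ode_inner x (by rw [abs_of_pos hx.1]; exact hx.1)
          (by rw [abs_of_pos hx.1]; exact hx.2)) hz hy
    have ht : Tendsto (deriv φ) (nhdsWithin 0 (Ioi 0)) (nhds (deriv φ y)) := by
      refine Tendsto.congr' ?_ tendsto_const_nhds
      filter_upwards [Ioo_mem_nhdsGT_of_mem (left_mem_Ico.mpr hb)] with u hu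
      exact (hc u hu).symm
    exact tendsto_nhds_unique ht H.deriv_plus
  have hconst_l : ∀ y ∈ Ioo (-b) (0:ℝ), deriv φ y = dm := by
    intro y hy
    have hc : ∀ z ∈ Ioo (-b) (0:ℝ), deriv φ z = deriv φ y := fun z hz =>
      constOn_of_deriv_zero (convex_Ioo (-b) 0)
        (fun x hx => H.diff2 x (ne_of_lt hx.2) (ne_of_lt (lt_trans hx.2 hb)) (ne_of_gt hx.1))
        (fun x hx => H.ode_inner x (by rw [abs_of_neg hx.2]; linarith [hx.2])
          (by rw [abs_of_neg hx.2]; linarith [hx.1])) hz hy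
    have ht : Tendsto (deriv φ) (nhdsWithin 0 (Iio 0)) (nhds (deriv φ y)) := by
      refine Tendsto.congr' ?_ tendsto_const_nhds
      filter_upwards [Ioo_mem_nhdsLT_of_mem (right_mem_Ioc.mpr (by linarith : -b < (0:ℝ)))]
        with u hu
      exact (hc u hu).symm
    exact tendsto_nhds_unique ht H.deriv_minus
  -- affine form on [0,b] and [-b,0]
  have haff_r : ∀ y ∈ Icc (0:ℝ) b, φ y = φ 0 + dp * y := by
    have hgconst : ∀ x ∈ Ioo (0:ℝ) b, ∀ z ∈ Ioo (0:ℝ) b,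
        φ x - dp * x = φ z - dp * z := by
      intro x hx z hz
      refine constOn_of_deriv_zero (convex_Ioo 0 b)
        (fun u hu => (H.diff u (ne_of_gt hu.1)).sub (by fun_prop)) (fun u hu => ?_) hx hz
      have hder : HasDerivAt (fun v => φ v - dp * v) (dp - dp * 1) u := by
        have h1 := (H.diff u (ne_of_gt hu.1)).hasDerivAt
        rw [hconst_r u hu] at h1
        exact h1.sub ((hasDerivAt_id u).const_mul dp)
      have h2 := hder.deriv
      exact (by simpa using h2 : deriv (fun v => φ v - dp * v) u = 0)
    have hcA : ∀ a ∈ Icc (0:ℝ) b, φ a - dp * a = φ (b/2) - dp * (b/2) := by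
      intro a ha
      have hy₀ : b/2 ∈ Ioo (0:ℝ) b := ⟨by linarith, by linarith⟩
      have hne : (nhdsWithin a (Ioo (0:ℝ) b)).NeBot := by
        rw [← mem_closure_iff_nhdsWithin_neBot, closure_Ioo hbne.symm]
        exact ha
      exact eq_at_of_eqOn hne ((H.cont.sub (by fun_prop)).continuousAt) continuousAt_const
        (fun z hz => hgconst z hz (b/2) hy₀)
    intro y hy
    have h1 := hcA y hy
    have h2 := hcA 0 (left_mem_Icc.mpr hb.le)
    simp only [mul_zero, sub_zero] at h2
    linarith
  have haff_l : ∀ y ∈ Icc (-b) (0:ℝ), φ y = φ 0 + dm * y := by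
    have hgconst : ∀ x ∈ Ioo (-b) (0:ℝ), ∀ z ∈ Ioo (-b) (0:ℝ),
        φ x - dm * x = φ z - dm * z := by
      intro x hx z hz
      refine constOn_of_deriv_zero (convex_Ioo (-b) 0)
        (fun u hu => (H.diff u (ne_of_lt hu.2)).sub (by fun_prop)) (fun u hu => ?_) hx hz
      have hder : HasDerivAt (fun v => φ v - dm * v) (dm - dm * 1) u := by
        have h1 := (H.diff u (ne_of_lt hu.2)).hasDerivAt
        rw [hconst_l u hu] at h1
        exact h1.sub ((hasDerivAt_id u).const_mul dm)
      have h2 := hder.deriv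
      exact (by simpa using h2 : deriv (fun v => φ v - dm * v) u = 0)
    have hcA : ∀ a ∈ Icc (-b) (0:ℝ), φ a - dm * a = φ (-(b/2)) - dm * (-(b/2)) := by
      intro a ha
      have hy₀ : -(b/2) ∈ Ioo (-b) (0:ℝ) := ⟨by linarith, by linarith⟩
      have hne : (nhdsWithin a (Ioo (-b) (0:ℝ))).NeBot := by
        rw [← mem_closure_iff_nhdsWithin_neBot, closure_Ioo (by linarith : -b ≠ (0:ℝ))]
        exact ha
      exact eq_at_of_eqOn hne ((H.cont.sub (by fun_prop)).continuousAt) continuousAt_const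
        (fun z hz => hgconst z hz (-(b/2)) hy₀)
    intro y hy
    have h1 := hcA y hy
    have h2 := hcA 0 (right_mem_Icc.mpr (by linarith))
    simp only [mul_zero, sub_zero] at h2
    linarith
  -- deriv φ at ±b
  have hcdb : ContinuousAt (deriv φ) b :=
    H.cont_deriv.continuousAt (isOpen_compl_singleton.mem_nhds
      (mem_compl_singleton_iff.mpr hbne))
  have hcdnb : ContinuousAt (deriv φ) (-b) :=
    H.cont_deriv.continuousAt (isOpen_compl_singleton.mem_nhds
      (mem_compl_singleton_iff.mpr (by simpa using hbne)))
  have hderb : deriv φ b = dp := by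
    have hne : (nhdsWithin b (Ioo (0:ℝ) b)).NeBot := by
      rw [← mem_closure_iff_nhdsWithin_neBot, closure_Ioo hbne.symm]
      exact right_mem_Icc.mpr hb.le
    exact eq_at_of_eqOn hne hcdb continuousAt_const hconst_r
  have hdernb : deriv φ (-b) = dm := by
    have hne : (nhdsWithin (-b) (Ioo (-b) (0:ℝ))).NeBot := by
      rw [← mem_closure_iff_nhdsWithin_neBot, closure_Ioo (by linarith : -b ≠ (0:ℝ))]
      exact left_mem_Icc.mpr (by linarith)
    exact eq_at_of_eqOn hne hcdnb continuousAt_const hconst_l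
  -- right outer region
  have hdiffR : ∀ x ∈ Ioi b, DifferentiableAt ℝ φ x := fun x hx =>
    H.diff x (ne_of_gt (lt_trans hb hx))
  have hdiff2R : ∀ x ∈ Ioi b, DifferentiableAt ℝ (deriv φ) x := fun x hx =>
    H.diff2 x (ne_of_gt (lt_trans hb hx)) (ne_of_gt hx)
      (ne_of_gt (by have := mem_Ioi.mp hx; linarith : -b < x))
  have hodeR : ∀ x ∈ Ioi b, deriv (deriv φ) x = μ ^ 2 * φ x := by
    intro x hx
    have h := H.ode_outer x (by rw [abs_of_pos (lt_trans hb hx)]; exact hx)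
    rw [hμ2]
    linarith
  have hE : ∀ x ∈ Ioi b,
      HasDerivAt (fun u => Real.exp (-(μ * u)) * (deriv φ u + μ * φ u)) 0 x := by
    intro x hx
    have h1 : HasDerivAt (fun u : ℝ => -(μ * u)) (-μ) x := by
      simpa using ((hasDerivAt_id x).const_mul μ).fun_neg
    have h2 : HasDerivAt (fun u => deriv φ u + μ * φ u)
        (deriv (deriv φ) x + μ * deriv φ x) x :=
      ((hdiff2R x hx).hasDerivAt).add (((hdiffR x hx).hasDerivAt).const_mul μ)
    have h3 := h1.exp.mul h2
    refine h3.congr_deriv (Eq.symm ?_)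
    rw [hodeR x hx]
    ring
  have hb1 : b + 1 ∈ Ioi b := mem_Ioi.mpr (by linarith)
  obtain ⟨cR, hEconst⟩ : ∃ c : ℝ, ∀ x ∈ Ioi b,
      Real.exp (-(μ * x)) * (deriv φ x + μ * φ x) = c :=
    ⟨_, fun x hx =>
      constOn_of_deriv_zero (convex_Ioi b) (fun u hu => (hE u hu).differentiableAt)
        (fun u hu => (hE u hu).deriv) hx hb1⟩
  have hcR0 : cR = 0 := by
    by_contra hcR
    have hh : ∀ x ∈ Ioi b, HasDerivAt
        (fun u => Real.exp (μ * u) * φ u - cR/(2*μ) * Real.exp (2*μ*u)) 0 x := by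
      intro x hx
      have h1 : HasDerivAt (fun u : ℝ => μ * u) μ x := by
        simpa using (hasDerivAt_id x).const_mul μ
      have h2 : HasDerivAt (fun u : ℝ => 2*μ*u) (2*μ) x := by
        simpa using (hasDerivAt_id x).const_mul (2*μ)
      have h3 := (h1.exp.mul (hdiffR x hx).hasDerivAt).sub (h2.exp.const_mul (cR/(2*μ)))
      refine h3.congr_deriv (Eq.symm ?_)
      have h4 := hEconst x hx
      have h5 : deriv φ x + μ * φ x = cR * Real.exp (μ * x) := by
        rw [← h4, Real.exp_neg]
        field_simp
      have h6 : Real.exp (2*μ*x) = Real.exp (μ*x) * Real.exp (μ*x) := by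
        rw [← Real.exp_add]; congr 1; ring
      have hc : cR/(2*μ)*(2*μ) = cR := by field_simp
      rw [h6]
      linear_combination (-(Real.exp (μ*x))) * h5 + (Real.exp (μ*x) * Real.exp (μ*x)) * hc
    obtain ⟨c2, hhconst⟩ : ∃ c : ℝ, ∀ x ∈ Ioi b,
        Real.exp (μ * x) * φ x - cR/(2*μ) * Real.exp (2*μ*x) = c :=
      ⟨_, fun x hx =>
        constOn_of_deriv_zero (convex_Ioi b) (fun u hu => (hh u hu).differentiableAt)
          (fun u hu => (hh u hu).deriv) hx hb1⟩
    have hφout : ∀ x ∈ Ioi b,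
        φ x = c2 * Real.exp (-(μ*x)) + cR/(2*μ) * Real.exp (μ*x) := by
      intro x hx
      have h := hhconst x hx
      have h6 : Real.exp (2*μ*x) = Real.exp (μ*x) * Real.exp (μ*x) := by
        rw [← Real.exp_add]; congr 1; ring
      rw [h6] at h
      have hpos : Real.exp (μ*x) ≠ 0 := (Real.exp_pos _).ne'
      have hee : Real.exp (μ*x) * Real.exp (-(μ*x)) = 1 := by
        rw [← Real.exp_add]; simp
      have hgoal : Real.exp (μ*x) * φ x
          = Real.exp (μ*x) * (c2 * Real.exp (-(μ*x)) + cR/(2*μ) * Real.exp (μ*x)) := by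
        linear_combination h - c2 * hee
      exact mul_left_cancel₀ hpos hgoal
    have htend : Tendsto (fun x => |φ x|) atTop atTop := by
      have hC : 0 < |cR| / (2*μ) := by positivity
      have h1 : Tendsto (fun x : ℝ => |cR|/(2*μ) * Real.exp (μ*x)) atTop atTop :=
        Tendsto.const_mul_atTop hC
          (Real.tendsto_exp_atTop.comp (Tendsto.const_mul_atTop hμ tendsto_id))
      have h2 : Tendsto
          (fun x : ℝ => |cR|/(2*μ) * Real.exp (μ*x) + (-(|c2| * Real.exp (-(μ*x)))))
          atTop atTop := by
        refine tendsto_atTop_add_right_of_le' atTop (-(|c2|)) h1 ?_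
        filter_upwards [eventually_ge_atTop (0:ℝ)] with x hx
        have hle : Real.exp (-(μ*x)) ≤ 1 := Real.exp_le_one_iff.mpr (by nlinarith)
        nlinarith [abs_nonneg c2]
      refine tendsto_atTop_mono' atTop ?_ h2
      filter_upwards [eventually_gt_atTop b] with x hx
      have hfx := hφout x (mem_Ioi.mpr hx)
      have key : |cR/(2*μ) * Real.exp (μ*x)| - |c2 * Real.exp (-(μ*x))| ≤ |φ x| := by
        rw [hfx]
        have h7 := abs_sub_abs_le_abs_sub (cR/(2*μ) * Real.exp (μ*x))
          (-(c2 * Real.exp (-(μ*x))))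
        rw [abs_neg, sub_neg_eq_add] at h7
        calc |cR/(2*μ) * Real.exp (μ*x)| - |c2 * Real.exp (-(μ*x))|
            ≤ |cR/(2*μ) * Real.exp (μ*x) + c2 * Real.exp (-(μ*x))| := h7
          _ = |c2 * Real.exp (-(μ*x)) + cR/(2*μ) * Real.exp (μ*x)| := by rw [add_comm]
      have e1 : |cR/(2*μ) * Real.exp (μ*x)| = |cR|/(2*μ) * Real.exp (μ*x) := by
        rw [abs_mul, abs_div, abs_of_pos (Real.exp_pos _),
          abs_of_pos (by linarith : (0:ℝ) < 2*μ)]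
      have e2 : |c2 * Real.exp (-(μ*x))| = |c2| * Real.exp (-(μ*x)) := by
        rw [abs_mul, abs_of_pos (Real.exp_pos _)]
      rw [e1, e2] at key
      linarith
    exact absurd H.sq_int (not_integrable_sq htend)
  have hψ0 : ∀ x ∈ Ioi b, deriv φ x + μ * φ x = 0 := by
    intro x hx
    have h := hEconst x hx
    rw [hcR0] at h
    rcases mul_eq_zero.mp h with h | h
    · exact absurd h (Real.exp_ne_zero _)
    · exact h
  have hdpb : dp + μ * (φ 0 + dp * b) = 0 := by
    have h1 : deriv φ b = -(μ * φ b) := by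
      refine eq_at_of_eqOn (s := Ioi b) (g := fun u => -(μ * φ u)) inferInstance hcdb
        ((continuous_const.mul H.cont).neg.continuousAt) (fun z hz => ?_)
      have := hψ0 z hz
      linarith
    rw [hderb, haff_r b (right_mem_Icc.mpr hb.le)] at h1
    linarith
  -- left outer region
  have hdiffL : ∀ x ∈ Iio (-b), DifferentiableAt ℝ φ x := fun x hx =>
    H.diff x (ne_of_lt (by have := mem_Iio.mp hx; linarith))
  have hdiff2L : ∀ x ∈ Iio (-b), DifferentiableAt ℝ (deriv φ) x := fun x hx =>
    H.diff2 x (ne_of_lt (by have := mem_Iio.mp hx; linarith))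
      (ne_of_lt (by have := mem_Iio.mp hx; linarith)) (ne_of_lt (mem_Iio.mp hx))
  have hodeL : ∀ x ∈ Iio (-b), deriv (deriv φ) x = μ ^ 2 * φ x := by
    intro x hx
    have hx0 : x < 0 := by have := mem_Iio.mp hx; linarith
    have h := H.ode_outer x (by rw [abs_of_neg hx0]; have := mem_Iio.mp hx; linarith)
    rw [hμ2]
    linarith
  have hE2 : ∀ x ∈ Iio (-b),
      HasDerivAt (fun u => Real.exp (μ * u) * (deriv φ u - μ * φ u)) 0 x := by
    intro x hx
    have h1 : HasDerivAt (fun u : ℝ => μ * u) μ x := by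
      simpa using (hasDerivAt_id x).const_mul μ
    have h2 : HasDerivAt (fun u => deriv φ u - μ * φ u)
        (deriv (deriv φ) x - μ * deriv φ x) x :=
      ((hdiff2L x hx).hasDerivAt).sub (((hdiffL x hx).hasDerivAt).const_mul μ)
    have h3 := h1.exp.mul h2
    refine h3.congr_deriv (Eq.symm ?_)
    rw [hodeL x hx]
    ring
  have hbm1 : -(b+1) ∈ Iio (-b) := mem_Iio.mpr (by linarith)
  obtain ⟨cL, hE2const⟩ : ∃ c : ℝ, ∀ x ∈ Iio (-b),
      Real.exp (μ * x) * (deriv φ x - μ * φ x) = c :=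
    ⟨_, fun x hx =>
      constOn_of_deriv_zero (convex_Iio (-b)) (fun u hu => (hE2 u hu).differentiableAt)
        (fun u hu => (hE2 u hu).deriv) hx hbm1⟩
  have hcL0 : cL = 0 := by
    by_contra hcL
    have hh : ∀ x ∈ Iio (-b), HasDerivAt
        (fun u => Real.exp (-(μ * u)) * φ u + cL/(2*μ) * Real.exp (-(2*μ*u))) 0 x := by
      intro x hx
      have h1 : HasDerivAt (fun u : ℝ => -(μ * u)) (-μ) x := by
        simpa using ((hasDerivAt_id x).const_mul μ).fun_neg
      have h2 : HasDerivAt (fun u : ℝ => -(2*μ*u)) (-(2*μ)) x := by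
        simpa using ((hasDerivAt_id x).const_mul (2*μ)).fun_neg
      have h3 := (h1.exp.mul (hdiffL x hx).hasDerivAt).add (h2.exp.const_mul (cL/(2*μ)))
      refine h3.congr_deriv (Eq.symm ?_)
      have h4 := hE2const x hx
      have h5 : deriv φ x - μ * φ x = cL * Real.exp (-(μ * x)) := by
        rw [← h4, Real.exp_neg]
        field_simp
      have h6 : Real.exp (-(2*μ*x)) = Real.exp (-(μ*x)) * Real.exp (-(μ*x)) := by
        rw [← Real.exp_add]; congr 1; ring
      have hc : cL/(2*μ)*(2*μ) = cL := by field_simp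
      rw [h6]
      linear_combination (-(Real.exp (-(μ*x)))) * h5 + (Real.exp (-(μ*x)) * Real.exp (-(μ*x))) * hc
    obtain ⟨c3, hhconst⟩ : ∃ c : ℝ, ∀ x ∈ Iio (-b),
        Real.exp (-(μ * x)) * φ x + cL/(2*μ) * Real.exp (-(2*μ*x)) = c :=
      ⟨_, fun x hx =>
        constOn_of_deriv_zero (convex_Iio (-b)) (fun u hu => (hh u hu).differentiableAt)
          (fun u hu => (hh u hu).deriv) hx hbm1⟩
    have hφout : ∀ x ∈ Iio (-b),
        φ x = c3 * Real.exp (μ*x) - cL/(2*μ) * Real.exp (-(μ*x)) := by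
      intro x hx
      have h := hhconst x hx
      have h6 : Real.exp (-(2*μ*x)) = Real.exp (-(μ*x)) * Real.exp (-(μ*x)) := by
        rw [← Real.exp_add]; congr 1; ring
      rw [h6] at h
      have hpos : Real.exp (-(μ*x)) ≠ 0 := (Real.exp_pos _).ne'
      have hee : Real.exp (-(μ*x)) * Real.exp (μ*x) = 1 := by
        rw [← Real.exp_add]; simp
      have hgoal : Real.exp (-(μ*x)) * φ x
          = Real.exp (-(μ*x)) * (c3 * Real.exp (μ*x) - cL/(2*μ) * Real.exp (-(μ*x))) := by
        linear_combination h - c3 * hee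
      exact mul_left_cancel₀ hpos hgoal
    have htend : Tendsto (fun x => |φ (-x)|) atTop atTop := by
      have hC : 0 < |cL| / (2*μ) := by positivity
      have h1 : Tendsto (fun x : ℝ => |cL|/(2*μ) * Real.exp (μ*x)) atTop atTop :=
        Tendsto.const_mul_atTop hC
          (Real.tendsto_exp_atTop.comp (Tendsto.const_mul_atTop hμ tendsto_id))
      have h2 : Tendsto
          (fun x : ℝ => |cL|/(2*μ) * Real.exp (μ*x) + (-(|c3| * Real.exp (-(μ*x)))))
          atTop atTop := by
        refine tendsto_atTop_add_right_of_le' atTop (-(|c3|)) h1 ?_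
        filter_upwards [eventually_ge_atTop (0:ℝ)] with x hx
        have hle : Real.exp (-(μ*x)) ≤ 1 := Real.exp_le_one_iff.mpr (by nlinarith)
        nlinarith [abs_nonneg c3]
      refine tendsto_atTop_mono' atTop ?_ h2
      filter_upwards [eventually_gt_atTop b] with x hx
      have hmem : -x ∈ Iio (-b) := mem_Iio.mpr (by linarith)
      have hfx := hφout (-x) hmem
      rw [show μ * -x = -(μ*x) from by ring, neg_neg] at hfx
      have key : |cL/(2*μ) * Real.exp (μ*x)| - |c3 * Real.exp (-(μ*x))| ≤ |φ (-x)| := by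
        rw [hfx]
        have h7 := abs_sub_abs_le_abs_sub (cL/(2*μ) * Real.exp (μ*x))
          (c3 * Real.exp (-(μ*x)))
        calc |cL/(2*μ) * Real.exp (μ*x)| - |c3 * Real.exp (-(μ*x))|
            ≤ |cL/(2*μ) * Real.exp (μ*x) - c3 * Real.exp (-(μ*x))| := h7
          _ = |c3 * Real.exp (-(μ*x)) - cL/(2*μ) * Real.exp (μ*x)| := abs_sub_comm _ _
      have e1 : |cL/(2*μ) * Real.exp (μ*x)| = |cL|/(2*μ) * Real.exp (μ*x) := by
        rw [abs_mul, abs_div, abs_of_pos (Real.exp_pos _),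
          abs_of_pos (by linarith : (0:ℝ) < 2*μ)]
      have e2 : |c3 * Real.exp (-(μ*x))| = |c3| * Real.exp (-(μ*x)) := by
        rw [abs_mul, abs_of_pos (Real.exp_pos _)]
      rw [e1, e2] at key
      linarith
    have hint2 : Integrable (fun y : ℝ => φ (-y) ^ 2) := by
      have h := (Measure.measurePreserving_neg (volume : Measure ℝ)).integrableOn_comp_preimage
        measurableEmbedding_neg (f := fun y => φ y ^ 2) (s := univ)
      simp only [preimage_univ, integrableOn_univ] at h
      exact h.mpr H.sq_int
    exact absurd hint2 (not_integrable_sq htend)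
  have hψ0L : ∀ x ∈ Iio (-b), deriv φ x - μ * φ x = 0 := by
    intro x hx
    have h := hE2const x hx
    rw [hcL0] at h
    rcases mul_eq_zero.mp h with h | h
    · exact absurd h (Real.exp_ne_zero _)
    · exact h
  have hdmb : dm - μ * (φ 0 + dm * (-b)) = 0 := by
    have h1 : deriv φ (-b) = μ * φ (-b) := by
      refine eq_at_of_eqOn (s := Iio (-b)) (g := fun u => μ * φ u) inferInstance hcdnb
        ((continuous_const.mul H.cont).continuousAt) (fun z hz => ?_)
      have := hψ0L z hz
      linarith
    rw [hdernb, haff_l (-b) (left_mem_Icc.mpr (by linarith))] at h1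
    linarith
  have e1 : dp * (1 + μ * b) = -(μ * φ 0) := by linear_combination hdpb
  have e2 : dm * (1 + μ * b) = μ * φ 0 := by linear_combination hdmb
  have hφ0 : φ 0 ≠ 0 := by
    intro h0
    apply hφ
    have hdp0 : dp = 0 := by
      rw [h0] at e1
      simp only [mul_zero, neg_zero] at e1
      exact (mul_eq_zero.mp e1).resolve_right h1μb.ne'
    have hdm0 : dm = 0 := by
      rw [h0] at e2
      simp only [mul_zero] at e2
      exact (mul_eq_zero.mp e2).resolve_right h1μb.ne'
    funext y
    show φ y = 0
    by_cases h1c : y < -b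
    · -- left outer
      have hG : ∀ x ∈ Iio (-b),
          HasDerivAt (fun u => Real.exp (-(μ*u)) * φ u) 0 x := by
        intro x hx
        have ha : HasDerivAt (fun u : ℝ => -(μ * u)) (-μ) x := by
          simpa using ((hasDerivAt_id x).const_mul μ).fun_neg
        have h3 := ha.exp.mul (hdiffL x hx).hasDerivAt
        refine h3.congr_deriv (Eq.symm ?_)
        have h5 : deriv φ x = μ * φ x := by have := hψ0L x hx; linarith
        rw [h5]
        ring
      have hGy : Real.exp (-(μ*(-b))) * φ (-b) = Real.exp (-(μ*y)) * φ y := by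
        refine eq_at_of_eqOn (a := -b) (s := Iio (-b))
          (f := fun u => Real.exp (-(μ*u)) * φ u)
          (g := fun _ => Real.exp (-(μ*y)) * φ y) inferInstance
          (((Real.continuous_exp.comp ((continuous_const.mul continuous_id).neg)).mul
            H.cont).continuousAt) continuousAt_const (fun z hz => ?_)
        exact constOn_of_deriv_zero (convex_Iio (-b))
          (fun u hu => (hG u hu).differentiableAt) (fun u hu => (hG u hu).deriv)
          hz (mem_Iio.mpr h1c)
      have hφnb : φ (-b) = 0 := by
        rw [haff_l (-b) (left_mem_Icc.mpr (by linarith)), h0, hdm0]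
        ring
      rw [hφnb, mul_zero] at hGy
      rcases mul_eq_zero.mp hGy.symm with h | h
      · exact absurd h (Real.exp_ne_zero _)
      · exact h
    · by_cases h2c : b < y
      · -- right outer
        have hG : ∀ x ∈ Ioi b,
            HasDerivAt (fun u => Real.exp (μ*u) * φ u) 0 x := by
          intro x hx
          have ha : HasDerivAt (fun u : ℝ => μ * u) μ x := by
            simpa using (hasDerivAt_id x).const_mul μ
          have h3 := ha.exp.mul (hdiffR x hx).hasDerivAt
          refine h3.congr_deriv (Eq.symm ?_)
          have h5 : deriv φ x = -(μ * φ x) := by have := hψ0 x hx; linarith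
          rw [h5]
          ring
        have hGy : Real.exp (μ*b) * φ b = Real.exp (μ*y) * φ y := by
          refine eq_at_of_eqOn (a := b) (s := Ioi b)
            (f := fun u => Real.exp (μ*u) * φ u)
            (g := fun _ => Real.exp (μ*y) * φ y) inferInstance
            (((Real.continuous_exp.comp (continuous_const.mul continuous_id)).mul
              H.cont).continuousAt) continuousAt_const (fun z hz => ?_)
          exact constOn_of_deriv_zero (convex_Ioi b)
            (fun u hu => (hG u hu).differentiableAt) (fun u hu => (hG u hu).deriv)
            hz (mem_Ioi.mpr h2c)
        have hφb : φ b = 0 := by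
          rw [haff_r b (right_mem_Icc.mpr hb.le), h0, hdp0]
          ring
        rw [hφb, mul_zero] at hGy
        rcases mul_eq_zero.mp hGy.symm with h | h
        · exact absurd h (Real.exp_ne_zero _)
        · exact h
      · push_neg at h1c h2c
        rcases le_or_gt 0 y with h3c | h3c
        · rw [haff_r y ⟨h3c, h2c⟩, h0, hdp0]
          ring
        · rw [haff_l y ⟨h1c, h3c.le⟩, h0, hdm0]
          ring
  have hkey : φ 0 * ((k:ℝ)^2 * α * (1 + μ*b)) = φ 0 * (2*μ) := by
    linear_combination (1 + μ*b) * H.jump - e1 + e2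
  exact mul_left_cancel₀ hφ0 hkey

/-- A nonzero eigenfunction exists iff `kα/2 = √(1-λ)/(1 + √(1-λ)kb)`. -/
theorem delta_step_one_eigenvalue_condition (k : ℕ) (hk : 1 ≤ k) (b : ℝ) (hb : 0 < b)
    (α lam : ℝ) (hlam : lam < 1) :
    (∃ (φ : ℝ → ℝ) (dp dm : ℝ), IsDeltaStepOneEigenfun k b α lam φ dp dm ∧ φ ≠ 0) ↔
      (k : ℝ) * α / 2 =
        Real.sqrt (1 - lam) / (1 + Real.sqrt (1 - lam) * (k : ℝ) * b) := by
  have h1l : (0:ℝ) < 1 - lam := by linarith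
  have hsqpos : 0 < Real.sqrt (1 - lam) := Real.sqrt_pos.mpr h1l
  have hsq2 : Real.sqrt (1 - lam) ^ 2 = 1 - lam := Real.sq_sqrt h1l.le
  have hkpos : (0:ℝ) < (k:ℝ) := by exact_mod_cast Nat.lt_of_lt_of_le Nat.zero_lt_one hk
  have hμ : 0 < Real.sqrt (1 - lam) * (k:ℝ) := mul_pos hsqpos hkpos
  have hμ2 : (Real.sqrt (1 - lam) * (k:ℝ)) ^ 2 = (k:ℝ) ^ 2 * (1 - lam) := by
    rw [mul_pow, hsq2]; ring
  have h1μb : (0:ℝ) < 1 + Real.sqrt (1 - lam) * (k:ℝ) * b := by nlinarith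
  constructor
  · rintro ⟨φ, dp, dm, H, hφ⟩
    have hmain := phi_forward hb hμ hμ2 H hφ
    rw [div_eq_div_iff two_ne_zero h1μb.ne']
    refine mul_left_cancel₀ hkpos.ne' ?_
    linear_combination hmain
  · intro hcond
    rw [div_eq_div_iff two_ne_zero h1μb.ne'] at hcond
    exact phi_construction (s := (k:ℝ)^2 * α / 2) hb hμ hμ2
      (by linear_combination ((k:ℝ)/2) * hcond) (by ring)
end
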